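/- arXiv:1807.10062 — 13 statements merged into one kernel-verified Lean document; each statement's English description precedes it below -/
import Mathlib

section
/- For every finite simple graph G, every vertex v of G, every integer r ≥ 3 and every integer k ≥ 2, the Ramsey number R_r(B(G), k) satisfies R_r(B(G), k) ≤ R(𝒢*(v), k) + r − 2. -/
open SimpleGraph

/-- A set family `A` of hyperedges contains a Berge-`G` hypergraph: there are an injection `φ`
from the vertices of `G` and an injection `ψ` from the edges of `G` into `A` such that the two
endpoints of each edge `e` of `G` are mapped into the hyperedge `ψ e`. -/
def BergeIn {V α : Type} (G : SimpleGraph V) (A : Set (Finset α)) : Prop :=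
  ∃ φ : V → α, Function.Injective φ ∧
    ∃ ψ : G.edgeSet → Finset α, Function.Injective ψ ∧
      (∀ e, ψ e ∈ A) ∧
      ∀ (e : G.edgeSet), ∀ x ∈ (e : Sym2 V), φ x ∈ ψ e

/-- Every `k`-coloring of the `r`-element subsets of an `n`-element set contains a
monochromatic Berge-`G`. -/
def BergeRamseyProp {V : Type} (G : SimpleGraph V) (r k n : ℕ) : Prop :=
  ∀ c : Finset (Fin n) → Fin k, ∃ i : Fin k,
    BergeIn G {s : Finset (Fin n) | s.card = r ∧ c s = i}

/-- `R_r(𝓑(G), k)`: the smallest `n` such that every `k`-coloring of the `r`-subsets of an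
`n`-set has a monochromatic Berge-`G`. -/
noncomputable def bergeRamsey {V : Type} (G : SimpleGraph V) (r k : ℕ) : ℕ :=
  sInf {n | BergeRamseyProp G r k n}

/-- A neighbor of `v` regarded as a vertex of `G - v`. -/
def nbrSub {V : Type} {G : SimpleGraph V} {v : V} (q : ↥(G.neighborSet v)) : {u : V // u ≠ v} :=
  ⟨q.1, (show G.Adj v q.1 from q.2).ne'⟩

/-- The coloring `c` of the edges of `K_n` contains a monochromatic copy (in color `i`) of a
member of the family `𝒢*(v)`: a copy of `G - v` (embedded via `ι`) together with, for every
neighbor `q` of `v`, a new edge from `q` to a vertex `ρ q` (either a vertex of the copy of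
`G - v` or a vertex outside it), where the new edges are distinct from each other and from the
edges of `G - v`. -/
def GStarMonoCopy {V : Type} (G : SimpleGraph V) (v : V) {n k : ℕ}
    (c : Sym2 (Fin n) → Fin k) (i : Fin k) : Prop :=
  ∃ (ι : {u : V // u ≠ v} → Fin n) (ρ : ↥(G.neighborSet v) → Fin n),
    Function.Injective ι ∧
    (∀ q, ρ q ≠ ι (nbrSub q)) ∧
    (∀ q q', q ≠ q' → s(ι (nbrSub q), ρ q) ≠ s(ι (nbrSub q'), ρ q')) ∧
    (∀ q, ∀ x y : {u : V // u ≠ v}, G.Adj x.1 y.1 →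
      s(ι (nbrSub q), ρ q) ≠ s(ι x, ι y)) ∧
    (∀ x y : {u : V // u ≠ v}, G.Adj x.1 y.1 → c s(ι x, ι y) = i) ∧
    (∀ q, c s(ι (nbrSub q), ρ q) = i)

/-- Every `k`-coloring of the edges of `K_n` has a monochromatic member of `𝒢*(v)`. -/
def GStarRamseyProp {V : Type} (G : SimpleGraph V) (v : V) (k n : ℕ) : Prop :=
  ∀ c : Sym2 (Fin n) → Fin k, ∃ i : Fin k, GStarMonoCopy G v c i

/-- `R(𝒢*(v), k)`. -/
noncomputable def GStarRamsey {V : Type} (G : SimpleGraph V) (v : V) (k : ℕ) : ℕ :=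
  sInf {n | GStarRamseyProp G v k n}

/-! Fix a core `S` of `r - 2` of the `N + r - 2` points, `N = R(𝒢*(v), k)`, and colour each pair
`xy` of the other `N` points by the colour of the `r`-set `S ∪ {x, y}`. A monochromatic member of
`𝒢*(v)` for this colouring gives a monochromatic Berge-`G`: `v` goes into `S`, the other vertices
to their copies, an edge `xy` of `G - v` to `S ∪ {x, y}`, and the edge `vq` to `S ∪ {q, r_q}`.
The new edges are distinct from each other and from the edges of `G - v`, so these hyperedges are
distinct. That `R(𝒢*(v), k)` is finite (otherwise it is `sInf ∅ = 0`) follows from Ramsey's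
theorem: a monochromatic clique on the vertices of `G - v` plus one extra vertex per neighbour of
`v` contains a member of `𝒢*(v)`. -/

open Finset

theorem exists_injective_seq_pairColor_eq_of_lt {α κ : Type} [DecidableEq α] [Fintype κ]
    (c : Sym2 α → κ) (T : ℕ) (S : Finset α) (hS : (Fintype.card κ + 1) ^ T ≤ #S) :
    ∃ (f : Fin T → α) (col : Fin T → κ), Function.Injective f ∧ (∀ j, f j ∈ S) ∧
      ∀ i j, i < j → c s(f i, f j) = col i := by
  classical
  induction T generalizing S with
  | zero => exact ⟨Fin.elim0, Fin.elim0, fun i => i.elim0, fun i => i.elim0, fun i => i.elim0⟩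
  | succ T ih =>
    obtain ⟨a, ha⟩ : S.Nonempty := card_pos.mp (lt_of_lt_of_le (by positivity) hS)
    have : Nonempty κ := ⟨c s(a, a)⟩
    have hcard : #(univ : Finset κ) * (Fintype.card κ + 1) ^ T ≤ #(S.erase a) := by
      have hpos : 0 < (Fintype.card κ + 1) ^ T := by positivity
      rw [card_univ, card_erase_of_mem ha]
      rw [pow_succ, mul_add_one, mul_comm] at hS
      omega
    obtain ⟨i, -, hi⟩ := exists_le_card_fiber_of_mul_le_card_of_maps_to
      (f := fun b => c s(a, b)) (fun _ _ => mem_univ _) univ_nonempty hcard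
    obtain ⟨f, col, hf, hfS, hcol⟩ := ih _ hi
    have hfS' : ∀ j, f j ≠ a ∧ f j ∈ S ∧ c s(a, f j) = i := fun j => by
      simpa [and_assoc] using hfS j
    refine ⟨Fin.cons a f, Fin.cons i col,
      Fin.cons_injective_iff.mpr ⟨fun ⟨j, hj⟩ => (hfS' j).1 hj, hf⟩,
      Fin.cases ha fun j => (hfS' j).2.1, Fin.cases ?_ fun j => Fin.cases ?_ fun l hjl => ?_⟩
    · exact Fin.cases (fun h => absurd h (lt_irrefl _)) fun j _ => (hfS' j).2.2
    · exact fun h => absurd h (Fin.not_lt_zero _)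
    · simpa using hcol j l (Fin.succ_lt_succ_iff.mp hjl)

theorem exists_monochromatic_embedding (β κ : Type) [Finite β] [Fintype κ] :
    ∃ n, ∀ c : Sym2 (Fin n) → κ, ∃ (i : κ) (f : β ↪ Fin n),
      ∀ a b, a ≠ b → c s(f a, f b) = i := by
  classical
  obtain ⟨m, ⟨eβ⟩⟩ := Finite.exists_equiv_fin β
  set T := Fintype.card κ * m + 1
  refine ⟨(Fintype.card κ + 1) ^ T, fun c => ?_⟩
  obtain ⟨f, col, hf, -, hcol⟩ :=
    exists_injective_seq_pairColor_eq_of_lt c T univ (by rw [card_univ, Fintype.card_fin])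
  -- the color of a pair in the greedy sequence is decided by its earlier vertex, so it suffices
  -- to find `m` indices of a common color
  obtain ⟨i, -, hi⟩ := exists_lt_card_fiber_of_mul_lt_card_of_maps_to (s := univ) (n := m)
    (fun a _ => mem_univ (col a)) (by simp [T])
  let g := (univ.filter fun a => col a = i).orderEmbOfCardLe hi.le
  have hg : ∀ a, col (g a) = i := fun a => (mem_filter.mp (orderEmbOfCardLe_mem _ hi.le a)).2
  refine ⟨i, eβ.toEmbedding.trans (g.toEmbedding.trans ⟨f, hf⟩), fun a b hab => ?_⟩
  have hab' : g (eβ a) ≠ g (eβ b) := by simpa using hab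
  rcases hab'.lt_or_gt with h | h
  · simpa [hg] using hcol _ _ h
  · simpa [Sym2.eq_swap, hg] using hcol _ _ h

theorem exists_gStarRamseyProp {V : Type} [Finite V] (G : SimpleGraph V) (v : V) (k : ℕ) :
    ∃ n, GStarRamseyProp G v k n := by
  obtain ⟨n, hn⟩ := exists_monochromatic_embedding ({u : V // u ≠ v} ⊕ G.neighborSet v) (Fin k)
  refine ⟨n, fun c => ?_⟩
  obtain ⟨i, f, hf⟩ := hn c
  refine ⟨i, f ∘ Sum.inl, f ∘ Sum.inr, f.injective.comp Sum.inl_injective, fun q => by simp,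
    fun q q' hqq' => by simp [hqq'], fun q x y _ => by simp,
    fun x y hxy => hf _ _ (by simpa using Subtype.coe_ne_coe.mp hxy.ne), fun q => hf _ _ (by simp)⟩

theorem Sym2.toFinset_injective {α : Type} [DecidableEq α] :
    Function.Injective (Sym2.toFinset : Sym2 α → Finset α) := fun z z' h =>
  Sym2.ext fun a => by rw [← Sym2.mem_toFinset, h, Sym2.mem_toFinset]

theorem disjoint_toFinset_map {α β : Type} [DecidableEq α] {S : Finset α} {e : β → α}
    (he : ∀ b, e b ∉ S) (z : Sym2 β) : Disjoint S (z.map e).toFinset :=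
  disjoint_left.mpr fun a haS ha => by
    obtain ⟨b, -, rfl⟩ := Sym2.mem_map.mp (Sym2.mem_toFinset.mp ha)
    exact he b haS

theorem bergeIn_of_cone {V α β : Type} [DecidableEq α] {G : SimpleGraph V} {v : V}
    {A : Set (Finset α)} {S : Finset α} {s₀ : α} (hs₀ : s₀ ∈ S) (e : β ↪ α)
    (he : ∀ b, e b ∉ S) {ι : {u : V // u ≠ v} → β} (hι : Function.Injective ι)
    {E : G.edgeSet → Sym2 β} (hE : Function.Injective E)
    (hιE : ∀ ed (x : {u : V // u ≠ v}), x.1 ∈ ed.1 → ι x ∈ E ed)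
    (hA : ∀ ed, S ∪ ((E ed).map e).toFinset ∈ A) : BergeIn G A := by
  classical
  refine ⟨fun x => if h : x = v then s₀ else e (ι ⟨x, h⟩),
    Function.Injective.dite _ (Function.injective_of_subsingleton fun _ : {x // x = v} => s₀)
      (e.injective.comp hι) fun h => he _ (h ▸ hs₀),
    fun ed => S ∪ ((E ed).map e).toFinset, fun ed ed' h => ?_, hA, fun ed x hx => ?_⟩
  · have h' := congrArg (· \ S) h
    simp only [union_sdiff_cancel_left (disjoint_toFinset_map he _)] at h'
    exact hE (Sym2.map.injective e.injective (Sym2.toFinset_injective h'))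
  · by_cases h : x = v
    · simp [h, hs₀]
    · simp only [h, dite_false]
      exact mem_union_right _
        (Sym2.mem_toFinset.mpr (Sym2.mem_map.mpr ⟨_, hιE ed ⟨x, h⟩ hx, rfl⟩))

theorem SimpleGraph.edgeSet_induction_on {V : Type} {G : SimpleGraph V} (v : V)
    {P : G.edgeSet → Prop} (ed : G.edgeSet) (incident : ∀ q : G.neighborSet v, P ⟨s(v, q), q.2⟩)
    (avoiding : ∀ (x y : {u : V // u ≠ v}) (h : G.Adj x y), P ⟨s(x, y), h⟩) : P ed := by
  obtain ⟨ed, hed⟩ := ed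
  induction ed using Sym2.ind with
  | _ x y =>
  by_cases hx : x = v
  · subst hx
    exact incident ⟨y, hed⟩
  by_cases hy : y = v
  · subst hy
    simpa [Sym2.eq_swap] using incident ⟨x, (G.mem_edgeSet.mp hed).symm⟩
  exact avoiding ⟨x, hx⟩ ⟨y, hy⟩ hed

section StarEdge

variable {V β : Type} [DecidableEq V] (G : SimpleGraph V) (v : V)
  (ι : {u : V // u ≠ v} → β) (ρ : G.neighborSet v → β)

/-- The edge of the `𝒢*(v)`-copy `(ι, ρ)` that stands for the edge `xy` of `G`. -/
def starPair (x y : V) (h : G.Adj x y) : Sym2 β :=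
  if hx : x = v then s(ι (nbrSub ⟨y, hx ▸ h⟩), ρ ⟨y, hx ▸ h⟩)
  else if hy : y = v then s(ι (nbrSub ⟨x, hy ▸ h.symm⟩), ρ ⟨x, hy ▸ h.symm⟩)
  else s(ι ⟨x, hx⟩, ι ⟨y, hy⟩)

theorem starPair_comm (x y : V) (h : G.Adj x y) :
    starPair G v ι ρ x y h = starPair G v ι ρ y x h.symm := by
  by_cases hx : x = v <;> by_cases hy : y = v
  · exact absurd (hx.trans hy.symm) h.ne
  all_goals simp [starPair, hx, hy, Sym2.eq_swap]

def starEdge (ed : G.edgeSet) : Sym2 β :=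
  ed.1.fromRelNdrec (sym := G.symm) ed.2 (starPair G v ι ρ) (starPair_comm G v ι ρ)

@[simp]
theorem starEdge_incident (q : G.neighborSet v) :
    starEdge G v ι ρ ⟨s(v, q), q.2⟩ = s(ι (nbrSub q), ρ q) :=
  dif_pos rfl

@[simp]
theorem starEdge_avoiding (x y : {u : V // u ≠ v}) (h : G.Adj x y) :
    starEdge G v ι ρ ⟨s(x, y), h⟩ = s(ι x, ι y) :=
  (dif_neg x.2).trans (dif_neg y.2)

variable {G v ι ρ}

theorem starEdge_injective (hι : Function.Injective ι)
    (hpp : ∀ q q', q ≠ q' → s(ι (nbrSub q), ρ q) ≠ s(ι (nbrSub q'), ρ q'))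
    (hpe : ∀ q, ∀ x y : {u : V // u ≠ v}, G.Adj x.1 y.1 → s(ι (nbrSub q), ρ q) ≠ s(ι x, ι y)) :
    Function.Injective (starEdge G v ι ρ) := by
  intro ed ed' h
  induction ed using SimpleGraph.edgeSet_induction_on v with
  | incident q =>
    induction ed' using SimpleGraph.edgeSet_induction_on v with
    | incident q' =>
      obtain rfl : q = q' := by_contra fun hqq' => hpp q q' hqq' (by simpa using h)
      rfl
    | avoiding x' y' h' => exact absurd (by simpa using h) (hpe q x' y' h')
  | avoiding x y hxy =>
    induction ed' using SimpleGraph.edgeSet_induction_on v with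
    | incident q' => exact absurd (by simpa using h.symm) (hpe q' x y hxy)
    | avoiding x' y' h' =>
      have h : Sym2.map ι s(x, y) = Sym2.map ι s(x', y') := by simpa using h
      exact Subtype.ext (congrArg (Sym2.map Subtype.val) (Sym2.map.injective hι h))

theorem mem_starEdge (ed : G.edgeSet) (x : {u : V // u ≠ v}) (hx : x.1 ∈ ed.1) :
    ι x ∈ starEdge G v ι ρ ed := by
  induction ed using SimpleGraph.edgeSet_induction_on v with
  | incident q =>
    obtain rfl : x = nbrSub q := Subtype.ext ((Sym2.mem_iff.mp hx).resolve_left x.2)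
    simp
  | avoiding y z h =>
    rcases Sym2.mem_iff.mp hx with hxy | hxz
    · simp [Subtype.ext hxy]
    · simp [Subtype.ext hxz]

end StarEdge

theorem bergeRamseyProp_of_gStarRamseyProp {V : Type} {G : SimpleGraph V} {v : V} {r k N : ℕ}
    (hr : 3 ≤ r) (h : GStarRamseyProp G v k N) : BergeRamseyProp G r k (N + (r - 2)) := by
  classical
  intro c
  let S : Finset (Fin (N + (r - 2))) := univ.map (Fin.natAddEmb N)
  let e : Fin N ↪ Fin (N + (r - 2)) := Fin.castAddEmb (r - 2)
  have he : ∀ b, e b ∉ S := fun b hb => by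
    obtain ⟨j, -, hj⟩ := mem_map.mp hb
    have := congrArg Fin.val hj
    simp [e] at this
    omega
  have hcard : ∀ z : Sym2 (Fin N), ¬ z.IsDiag → #(S ∪ (z.map e).toFinset) = r := fun z hz => by
    rw [card_union_of_disjoint (disjoint_toFinset_map he z),
      Sym2.card_toFinset_of_not_isDiag _ ((Sym2.isDiag_map e.injective).not.mpr hz)]
    simp [S]
    omega
  obtain ⟨i, ι, ρ, hι, hρ, hpp, hpe, hcolι, hcolρ⟩ := h fun z => c (S ∪ (z.map e).toFinset)
  refine ⟨i, bergeIn_of_cone (mem_map_of_mem _ (mem_univ ⟨0, by omega⟩)) e he hι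
    (starEdge_injective hι hpp hpe) mem_starEdge fun ed => ?_⟩
  induction ed using SimpleGraph.edgeSet_induction_on v with
  | incident q => exact ⟨hcard _ (by simpa using (hρ q).symm), by simpa using hcolρ q⟩
  | avoiding x y hxy =>
    exact ⟨hcard _ (by simpa using hι.ne (Subtype.coe_ne_coe.mp hxy.ne)),
      by simpa using hcolι x y hxy⟩

theorem bergeRamsey_le_gStarRamsey_general {V : Type} [Fintype V]
    (G : SimpleGraph V) (v : V) (r k : ℕ) (hr : 3 ≤ r) :
    bergeRamsey G r k ≤ GStarRamsey G v k + r - 2 := by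
  have hN := Nat.sInf_mem (exists_gStarRamseyProp G v k)
  calc bergeRamsey G r k ≤ GStarRamsey G v k + (r - 2) :=
        Nat.sInf_le (bergeRamseyProp_of_gStarRamseyProp hr hN)
    _ = GStarRamsey G v k + r - 2 := by omega

/-- For every finite graph `G`, vertex `v`, `r ≥ 3` and `k ≥ 2`,
`R_r(𝓑(G), k) ≤ R(𝒢*(v), k) + r - 2`. -/
theorem bergeRamsey_le_gStarRamsey {V : Type} [Fintype V] [DecidableEq V]
    (G : SimpleGraph V) (v : V) (r k : ℕ) (hr : 3 ≤ r) (hk : 2 ≤ k) :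
    bergeRamsey G r k ≤ GStarRamsey G v k + r - 2 :=
  bergeRamsey_le_gStarRamsey_general G v r k hr
end

section
/- For every finite simple graph G with at least one edge, every integer r ≥ 3 and every integer k ≥ 2, R_r(B(G), k) ≤ R(G, k) + r − 2, where R(G, k) is the k-color graph Ramsey number of G. -/
open SimpleGraph

/-- Every `k`-coloring of the edges of `K_n` contains a monochromatic copy of `G`. -/
def graphRamseyProp {V : Type} (G : SimpleGraph V) (k n : ℕ) : Prop :=
  ∀ c : Sym2 (Fin n) → Fin k, ∃ (i : Fin k) (f : V → Fin n),
    Function.Injective f ∧ ∀ x y : V, G.Adj x y → c s(f x, f y) = i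

/-- The `k`-color graph Ramsey number `R(G, k)`. -/
noncomputable def graphRamsey {V : Type} (G : SimpleGraph V) (k : ℕ) : ℕ :=
  sInf {n | graphRamseyProp G k n}

/-!
Put `r - 2` fresh vertices `T` next to `R(G, k)` vertices and colour each pair `{x, y}` of the
latter by the colour of the `r`-set `{x, y} ∪ T`. A monochromatic copy of `G` for this edge
colouring, with every edge `e` replaced by `e ∪ T`, is a monochromatic Berge-`G`.

That `R(G, k)` is finite is the classical greedy argument: pick vertices one at a time, each time
keeping only the remaining vertices joined to the new one in its majority colour.
-/

open Finset Function

theorem exists_injective_seq_color_eq_of_lt {α κ : Type*} [DecidableEq α] [Fintype κ]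
    (c : Sym2 α → κ) (t : ℕ) {S : Finset α} (hS : (Fintype.card κ + 1) ^ t ≤ #S) :
    ∃ (a : Fin t → α) (g : Fin t → κ), Injective a ∧ (∀ i, a i ∈ S) ∧
      ∀ i j, i < j → c s(a i, a j) = g i := by
  classical
  induction t generalizing S with
  | zero => exact ⟨Fin.elim0, Fin.elim0, fun i => i.elim0, fun i => i.elim0, fun i => i.elim0⟩
  | succ t ih =>
    obtain ⟨v, hv⟩ : S.Nonempty := card_pos.mp (lt_of_lt_of_le (by positivity) hS)
    have : Nonempty κ := ⟨c s(v, v)⟩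
    have hrest : Fintype.card κ * (Fintype.card κ + 1) ^ t ≤ #(S.erase v) := by
      rw [card_erase_of_mem hv]
      rw [pow_succ', add_one_mul] at hS
      have : 0 < (Fintype.card κ + 1) ^ t := by positivity
      omega
    obtain ⟨i₀, -, hfiber⟩ := exists_le_card_fiber_of_mul_le_card_of_maps_to
      (f := fun x => c s(v, x)) (fun _ _ => mem_univ _) univ_nonempty (by simpa using hrest)
    obtain ⟨a, g, ha, haS, hag⟩ := ih hfiber
    simp only [mem_filter, mem_erase] at haS
    refine ⟨Fin.cons v a, Fin.cons i₀ g, ?_, ?_, ?_⟩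
    · exact Fin.cons_injective_iff.mpr ⟨fun ⟨i, hi⟩ => (haS i).1.1 hi, ha⟩
    · exact Fin.forall_fin_succ.mpr ⟨hv, fun i => (haS i).1.2⟩
    · refine Fin.forall_fin_succ.mpr ⟨fun j hj => ?_, fun i => Fin.forall_fin_succ.mpr ⟨?_, ?_⟩⟩
      · obtain ⟨j, rfl⟩ := Fin.exists_succ_eq.mpr (Fin.pos_iff_ne_zero.mp hj)
        simpa using (haS j).2
      · simp
      · simpa using hag i

theorem exists_injective_monochromatic {α κ : Type*} [Fintype α] [Fintype κ] (c : Sym2 α → κ)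
    (q : ℕ) (h : (Fintype.card κ + 1) ^ (Fintype.card κ * q) ≤ Fintype.card α) :
    ∃ (i : κ) (f : Fin q → α), Injective f ∧ ∀ x y, x ≠ y → c s(f x, f y) = i := by
  classical
  obtain ⟨a, g, ha, -, hag⟩ :=
    exists_injective_seq_color_eq_of_lt c (Fintype.card κ * q) (S := univ) (by simpa using h)
  obtain ⟨v⟩ : Nonempty α := Fintype.card_pos_iff.mp (lt_of_lt_of_le (by positivity) h)
  have : Nonempty κ := ⟨c s(v, v)⟩
  obtain ⟨i, hi⟩ := Fintype.exists_le_card_fiber_of_mul_le_card g (n := q) (by simp)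
  set b := (univ.filter fun x => g x = i).orderEmbOfCardLe hi
  have hb : ∀ x, g (b x) = i := fun x => (mem_filter.mp (orderEmbOfCardLe_mem _ hi x)).2
  refine ⟨i, a ∘ b, ha.comp b.injective, fun x y hxy => ?_⟩
  rcases hxy.lt_or_gt with hlt | hlt
  · simpa [hb] using hag _ _ (b.strictMono hlt)
  · simpa [Sym2.eq_swap, hb] using hag _ _ (b.strictMono hlt)

theorem graphRamseyProp_succ_pow {V : Type} [Fintype V] (G : SimpleGraph V) (k : ℕ) :
    graphRamseyProp G k ((k + 1) ^ (k * Fintype.card V)) := by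
  intro c
  obtain ⟨i, f, hf, hfc⟩ := exists_injective_monochromatic c (Fintype.card V) (by simp)
  let e := Fintype.equivFin V
  exact ⟨i, f ∘ e, hf.comp e.injective, fun x y hxy => hfc _ _ (e.injective.ne hxy.ne)⟩

section Padding

variable {α β : Type} [DecidableEq β] {φ : α → β} {T : Finset β}

theorem mem_map_toFinset_union_iff (hφ : Injective φ) (hT : ∀ v, φ v ∉ T) {e : Sym2 α} {x : α} :
    φ x ∈ (e.map φ).toFinset ∪ T ↔ x ∈ e := by
  simp [Sym2.mem_toFinset, Sym2.mem_map, hφ.eq_iff, hT]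

theorem card_map_toFinset_union (hφ : Injective φ) (hT : ∀ v, φ v ∉ T) {e : Sym2 α}
    (he : ¬e.IsDiag) : #((e.map φ).toFinset ∪ T) = 2 + #T := by
  rw [card_union_of_disjoint, Sym2.card_toFinset_of_not_isDiag _ ((Sym2.isDiag_map hφ).not.mpr he)]
  refine disjoint_left.mpr fun y hy => ?_
  obtain ⟨x, -, rfl⟩ := Sym2.mem_map.mp (Sym2.mem_toFinset.mp hy)
  exact hT x

theorem bergeIn_of_forall_mem {G : SimpleGraph α} {A : Set (Finset β)} (hφ : Injective φ)
    (hT : ∀ v, φ v ∉ T) (hA : ∀ e ∈ G.edgeSet, (e.map φ).toFinset ∪ T ∈ A) : BergeIn G A := by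
  refine ⟨φ, hφ, fun e => ((e : Sym2 α).map φ).toFinset ∪ T, fun e₁ e₂ h => ?_,
    fun e => hA e e.2, fun e x hx => (mem_map_toFinset_union_iff hφ hT).mpr hx⟩
  exact Subtype.ext <| Sym2.ext fun x => by
    simpa only [mem_map_toFinset_union_iff hφ hT] using Iff.of_eq (congrArg (φ x ∈ ·) h)

end Padding

theorem bergeRamseyProp_add_sub_two {V : Type} {G : SimpleGraph V} {k m r : ℕ}
    (h : graphRamseyProp G k m) (hr : 2 ≤ r) : BergeRamseyProp G r k (m + (r - 2)) := by
  intro c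
  set T : Finset (Fin (m + (r - 2))) := univ.map (Fin.natAddEmb m)
  have hT : ∀ v, Fin.castAdd (r - 2) v ∉ T := by
    simp only [T, mem_map, mem_univ, Fin.natAddEmb_apply, Fin.ext_iff, Fin.val_natAdd,
      Fin.val_castAdd, true_and, not_exists]
    omega
  obtain ⟨i, f, hf, hfc⟩ := h fun e => c ((e.map (Fin.castAdd (r - 2))).toFinset ∪ T)
  have hφ : Injective (Fin.castAdd (r - 2) ∘ f) := (Fin.castAdd_injective _ _).comp hf
  refine ⟨i, bergeIn_of_forall_mem hφ (hT <| f ·) fun e he => ?_⟩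
  induction e using Sym2.ind with | _ a b => ?_
  refine ⟨?_, by simpa [Sym2.map_map] using hfc a b he⟩
  rw [card_map_toFinset_union hφ (hT <| f ·) (G.not_isDiag_of_mem_edgeSet he), card_map, card_univ,
    Fintype.card_fin]
  omega

theorem bergeRamsey_le_graphRamsey_general {V : Type} [Fintype V]
    (G : SimpleGraph V) (r k : ℕ) (hr : 3 ≤ r) :
    bergeRamsey G r k ≤ graphRamsey G k + r - 2 := by
  have hG : graphRamseyProp G k (graphRamsey G k) :=
    Nat.sInf_mem (s := {n | graphRamseyProp G k n}) ⟨_, graphRamseyProp_succ_pow G k⟩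
  calc bergeRamsey G r k ≤ graphRamsey G k + (r - 2) :=
        Nat.sInf_le (bergeRamseyProp_add_sub_two hG (by omega))
    _ = graphRamsey G k + r - 2 := by omega

/-- For every finite graph `G` with at least one edge, `r ≥ 3` and `k ≥ 2`,
`R_r(𝓑(G), k) ≤ R(G, k) + r - 2`. -/
theorem bergeRamsey_le_graphRamsey {V : Type} [Fintype V] [DecidableEq V]
    (G : SimpleGraph V) (hE : G.edgeSet.Nonempty) (r k : ℕ) (hr : 3 ≤ r) (hk : 2 ≤ k) :
    bergeRamsey G r k ≤ graphRamsey G k + r - 2 :=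
  bergeRamsey_le_graphRamsey_general G r k hr
end

section
/- Let G be a finite simple graph having a vertex v such that G − v is acyclic (contains no cycle). Then for all integers r ≥ 3 and k ≥ 2, R_r(B(G), k) ≤ 4k·|V(G)| + r − 2. -/
open SimpleGraph

/-!
Fix an `(r - 2)`-set `Q`, a point `a ∈ Q`, and colour each pair `xy` outside `Q` by the colour of
the `r`-set `Q ∪ {x, y}`. The `4km` points outside `Q` carry a pair colour class of average degree
above `2(2m - 1)` (`m = |V(G)|`), hence a nonempty set `B` on which every vertex has degree at least
`2m` in that colour. Replace `v` by one pendant leaf per incident edge: `G - v` plus leaves is still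
1-degenerate and has fewer than `2m` vertices, so it embeds greedily into that colour class on `B`.
Sending `v` to `a` and each embedded edge `xy` to `Q ∪ {x, y}` yields a monochromatic Berge-`G`,
since `a` lies in every such hyperedge.
-/

open Finset

namespace SimpleGraph

variable {W β : Type*} {F : SimpleGraph W} {H : SimpleGraph β}

def IsOneDegenerate (F : SimpleGraph W) : Prop :=
  ∀ s : Finset W, s.Nonempty → ∃ u ∈ s, (F.neighborSet u ∩ s).Subsingleton

lemma IsAcyclic.exists_subsingleton_neighborSet [Finite W] [Nonempty W] (hF : F.IsAcyclic) :
    ∃ u, (F.neighborSet u).Subsingleton := by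
  -- `u` ends a longest path, so each of its neighbours lies on the path and is its second vertex.
  obtain ⟨u, w, p, hp, hmax⟩ := Walk.exists_isPath_forall_isPath_length_le_length F
  have hsnd : ∀ x, F.Adj u x → x = p.snd := fun x hx ↦ hF.eq_snd_of_adj_start hp hx <| by
    by_contra hxp
    simpa using hmax _ _ (p.cons hx.symm) (hp.cons hxp)
  exact ⟨u, fun x hx y hy ↦ (hsnd x hx).trans (hsnd y hy).symm⟩

lemma IsAcyclic.isOneDegenerate (hF : F.IsAcyclic) : F.IsOneDegenerate := by
  intro s hs
  have : Nonempty s := hs.to_subtype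
  obtain ⟨u, hu⟩ := (hF.induce s).exists_subsingleton_neighborSet
  exact ⟨u, u.2, fun x hx y hy ↦ congrArg Subtype.val <|
    hu (x := ⟨x, hx.2⟩) hx.1 (y := ⟨y, hy.2⟩) hy.1⟩

section Greedy

variable [DecidableEq β] [DecidableRel H.Adj]

lemma exists_fresh_adj_of_subsingleton_neighborSet {s : Finset W} {u : W} {θ : W → β} {B : Finset β}
    (hB : B.Nonempty) (hdeg : ∀ b ∈ B, #s ≤ #{b' ∈ B | H.Adj b b'}) (hmaps : Set.MapsTo θ s B)
    (hu : (F.neighborSet u ∩ s).Subsingleton) :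
    ∃ b ∈ B, b ∉ s.image θ ∧ ∀ p ∈ s, F.Adj u p → H.Adj (θ p) b := by
  by_cases hp : ∃ p ∈ s, F.Adj u p
  · obtain ⟨p, hps, hup⟩ := hp
    -- `θ p ∈ s.image θ` is not its own neighbour, so its `≥ #s` neighbours cannot all lie there.
    have hfresh : ¬ {b ∈ B | H.Adj (θ p) b} ⊆ s.image θ := fun hsub ↦ by
      have hlt := card_lt_card <| ssubset_of_subset_of_ne hsub fun h ↦
        H.irrefl (mem_filter.1 (h ▸ mem_image_of_mem θ hps)).2
      have := (hdeg _ (hmaps hps)).trans_lt (hlt.trans_le card_image_le)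
      exact this.false
    obtain ⟨b, hb, hbθ⟩ := not_subset.1 hfresh
    refine ⟨b, (mem_filter.1 hb).1, hbθ, fun q hqs huq ↦ ?_⟩
    rw [hu ⟨huq, hqs⟩ ⟨hup, hps⟩]
    exact (mem_filter.1 hb).2
  · obtain ⟨b₀, hb₀⟩ := hB
    have hlt : #(s.image θ) < #B := calc
      #(s.image θ) ≤ #{b' ∈ B | H.Adj b₀ b'} := card_image_le.trans (hdeg b₀ hb₀)
      _ < #B := card_lt_card <| ssubset_of_subset_of_ne (filter_subset _ _) fun h ↦
          H.irrefl (mem_filter.1 (h ▸ hb₀)).2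
    obtain ⟨b, hb, hbθ⟩ := exists_mem_notMem_of_card_lt_card hlt
    exact ⟨b, hb, hbθ, fun p hps hup ↦ (hp ⟨p, hps, hup⟩).elim⟩

lemma IsOneDegenerate.exists_injOn_hom [DecidableEq W] (hF : F.IsOneDegenerate) {B : Finset β}
    (hB : B.Nonempty) (s : Finset W) (hdeg : ∀ b ∈ B, #s ≤ #{b' ∈ B | H.Adj b b'} + 1) :
    ∃ θ : W → β, Set.MapsTo θ s B ∧ Set.InjOn θ s ∧
      ∀ x ∈ s, ∀ y ∈ s, F.Adj x y → H.Adj (θ x) (θ y) := by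
  induction s using Finset.strongInduction with | H s ih =>
  obtain rfl | hs := s.eq_empty_or_nonempty
  · exact ⟨fun _ ↦ hB.choose, by simp [Set.MapsTo], by simp, by simp⟩
  obtain ⟨u, hus, hu⟩ := hF s hs
  have hcard : #(s.erase u) + 1 = #s := card_erase_add_one hus
  obtain ⟨θ, hmaps, hinj, hhom⟩ := ih _ (erase_ssubset hus) fun b hb ↦ by
    have := hdeg b hb; omega
  obtain ⟨b, hbB, hbθ, hbadj⟩ := exists_fresh_adj_of_subsingleton_neighborSet (H := H) hB
    (fun b hb ↦ by have := hdeg b hb; omega) hmaps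
    (hu.anti (Set.inter_subset_inter_right _ (by simp)))
  refine ⟨Function.update θ u b, fun x hx ↦ ?_, fun x hx y hy hxy ↦ ?_, fun x hx y hy hxy ↦ ?_⟩
  · by_cases hxu : x = u
    · simpa [hxu] using hbB
    · simpa [hxu] using hmaps (mem_erase.2 ⟨hxu, hx⟩)
  · have hθ : ∀ z ∈ s, z ≠ u → θ z ≠ b := fun z hz hzu h ↦
      hbθ (h ▸ mem_image_of_mem θ (mem_erase.2 ⟨hzu, hz⟩))
    by_cases hxu : x = u <;> by_cases hyu : y = u
    · rw [hxu, hyu]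
    · simp [hxu, hyu] at hxy; exact absurd hxy.symm (hθ y hy hyu)
    · simp [hxu, hyu] at hxy; exact absurd hxy (hθ x hx hxu)
    · simp only [Function.update_of_ne hxu, Function.update_of_ne hyu] at hxy
      exact hinj (mem_erase.2 ⟨hxu, hx⟩) (mem_erase.2 ⟨hyu, hy⟩) hxy
  · by_cases hxu : x = u <;> by_cases hyu : y = u
    · exact absurd (hxu ▸ hyu ▸ hxy) F.irrefl
    · simpa [hxu, hyu] using (hbadj y (mem_erase.2 ⟨hyu, hy⟩) (hxu ▸ hxy)).symm
    · simpa [hxu, hyu] using hbadj x (mem_erase.2 ⟨hxu, hx⟩) (hyu ▸ hxy.symm)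
    · simpa [hxu, hyu] using hhom x (mem_erase.2 ⟨hxu, hx⟩) y (mem_erase.2 ⟨hyu, hy⟩) hxy

lemma IsOneDegenerate.exists_copy [Fintype W] [DecidableEq W] (hF : F.IsOneDegenerate)
    {B : Finset β} (hB : B.Nonempty)
    (hdeg : ∀ b ∈ B, Fintype.card W ≤ #{b' ∈ B | H.Adj b b'} + 1) :
    ∃ f : Copy F H, ∀ w, f w ∈ B := by
  obtain ⟨θ, hmaps, hinj, hhom⟩ := hF.exists_injOn_hom hB univ hdeg
  exact ⟨⟨⟨θ, hhom _ (mem_univ _) _ (mem_univ _)⟩, Set.injOn_univ.1 (by simpa using hinj)⟩,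
    fun w ↦ hmaps (mem_univ w)⟩

end Greedy

section MinDegree

variable [DecidableEq β] [DecidableRel H.Adj]

lemma sum_card_adj_eq_sum_erase_add {C : Finset β} {x : β} (hx : x ∈ C) :
    ∑ y ∈ C, #{z ∈ C | H.Adj y z} =
      ∑ y ∈ C.erase x, #{z ∈ C.erase x | H.Adj y z} + 2 * #{z ∈ C | H.Adj x z} := by
  set C' := C.erase x
  have hC : C = insert x C' := (insert_erase hx).symm
  have hx' : x ∉ C' := notMem_erase x C
  have hdeg : #{z ∈ C | H.Adj x z} = ∑ y ∈ C', if H.Adj y x then 1 else 0 := by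
    rw [← card_filter, hC, filter_insert, if_neg H.irrefl]
    simp only [H.adj_comm]
  have hstep : ∀ y ∈ C',
      #{z ∈ C | H.Adj y z} = #{z ∈ C' | H.Adj y z} + if H.Adj y x then 1 else 0 := by
    intro y hy
    rw [hC, filter_insert]
    split_ifs <;> simp [card_insert_of_notMem, hx']
  rw [hC, sum_insert hx', ← hC, sum_congr rfl hstep, sum_add_distrib, ← hdeg]
  ring

lemma exists_subset_forall_lt_card_adj (t : ℕ) (C : Finset β)
    (h : 2 * t * #C < ∑ x ∈ C, #{y ∈ C | H.Adj x y}) :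
    ∃ B ⊆ C, B.Nonempty ∧ ∀ x ∈ B, t < #{y ∈ B | H.Adj x y} := by
  induction C using Finset.strongInduction with | H C ih =>
  by_cases hC : ∀ x ∈ C, t < #{y ∈ C | H.Adj x y}
  · refine ⟨C, subset_rfl, nonempty_iff_ne_empty.2 ?_, hC⟩
    rintro rfl
    simp at h
  push Not at hC
  obtain ⟨x, hx, hxt⟩ := hC
  -- Deleting `x`, of degree at most `t`, lowers the degree sum by at most `2t`.
  obtain ⟨B, hBC, hB, hBdeg⟩ := ih _ (erase_ssubset hx) <| by
    rw [sum_card_adj_eq_sum_erase_add hx, ← card_erase_add_one hx] at h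
    nlinarith
  exact ⟨B, hBC.trans (erase_subset _ _), hB, hBdeg⟩

end MinDegree

section SplitVertex

variable {V : Type*} (G : SimpleGraph V) (v : V)

/-- `v` is replaced by a pendant copy `inr y` of itself for every neighbour `y`; the vertices
`inr y` with `¬ G.Adj v y` are isolated. -/
def splitVertex : SimpleGraph ({u // u ≠ v} ⊕ V) where
  Adj
    | .inl x, .inl y => G.Adj x y
    | .inl x, .inr y => (x : V) = y ∧ G.Adj v y
    | .inr y, .inl x => (x : V) = y ∧ G.Adj v y
    | .inr _, .inr _ => False
  symm := ⟨by rintro (x | x) (y | y) h <;> simp_all [G.adj_comm]⟩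
  loopless := ⟨by rintro (x | x) h <;> simp_all⟩

@[simp] lemma splitVertex_adj_inl_inl {x y : {u // u ≠ v}} :
    (G.splitVertex v).Adj (.inl x) (.inl y) ↔ G.Adj x y := Iff.rfl

@[simp] lemma splitVertex_adj_inl_inr {x : {u // u ≠ v}} {y : V} :
    (G.splitVertex v).Adj (.inl x) (.inr y) ↔ (x : V) = y ∧ G.Adj v y := Iff.rfl

@[simp] lemma splitVertex_adj_inr_inl {x : {u // u ≠ v}} {y : V} :
    (G.splitVertex v).Adj (.inr y) (.inl x) ↔ (x : V) = y ∧ G.Adj v y := Iff.rfl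

@[simp] lemma splitVertex_adj_inr_inr {x y : V} : ¬ (G.splitVertex v).Adj (.inr x) (.inr y) :=
  id

def splitVertexHom : G.splitVertex v →g G where
  toFun := Sum.elim Subtype.val fun _ ↦ v
  map_rel' := by
    rintro (x | x) (y | y) h <;> simp_all [splitVertex, G.adj_comm]

lemma splitVertexHom_mapEdgeSet_surjective :
    Function.Surjective (G.splitVertexHom v).mapEdgeSet := by
  rintro ⟨e, he⟩
  induction e using Sym2.ind with | _ x y =>
  have hxy : G.Adj x y := he
  by_cases hx : x = v
  · subst hx
    refine ⟨⟨s(.inr y, .inl ⟨y, hxy.ne'⟩), ⟨rfl, hxy⟩⟩, Subtype.ext ?_⟩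
    simp [Hom.mapEdgeSet, splitVertexHom]
  by_cases hy : y = v
  · subst hy
    refine ⟨⟨s(.inl ⟨x, hx⟩, .inr x), ⟨rfl, hxy.symm⟩⟩, Subtype.ext ?_⟩
    simp [Hom.mapEdgeSet, splitVertexHom]
  refine ⟨⟨s(.inl ⟨x, hx⟩, .inl ⟨y, hy⟩), hxy⟩, Subtype.ext ?_⟩
  simp [Hom.mapEdgeSet, splitVertexHom]

variable {G v}

lemma IsOneDegenerate.splitVertex (h : (G.induce {u | u ≠ v}).IsOneDegenerate) :
    (G.splitVertex v).IsOneDegenerate := by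
  intro s hs
  by_cases hr : ∃ y, .inr y ∈ s
  · obtain ⟨y, hy⟩ := hr
    refine ⟨.inr y, hy, ?_⟩
    rintro (a | a) ⟨ha, -⟩ (b | b) ⟨hb, -⟩
    · rw [mem_neighborSet, splitVertex_adj_inr_inl] at ha hb
      exact congrArg _ (Subtype.ext (ha.1.trans hb.1.symm))
    all_goals simp_all
  push Not at hr
  have hs' : s.toLeft.Nonempty := by
    obtain ⟨w | w, hw⟩ := hs
    · exact ⟨w, mem_toLeft.2 hw⟩
    · exact (hr w hw).elim
  obtain ⟨u, hu, hsub⟩ := h _ hs'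
  refine ⟨.inl u, mem_toLeft.1 hu, ?_⟩
  rintro (a | a) ⟨ha, has⟩ (b | b) ⟨hb, hbs⟩
  · exact congrArg _ (hsub ⟨ha, mem_toLeft.2 has⟩ ⟨hb, mem_toLeft.2 hbs⟩)
  all_goals simp_all

end SplitVertex

section LinkGraph

variable {α κ : Type*} [DecidableEq α] (c : Finset α → κ) (Q : Finset α) (i : κ)

def linkGraph : SimpleGraph α where
  Adj x y := x ≠ y ∧ x ∉ Q ∧ y ∉ Q ∧ c (Q ∪ {x, y}) = i
  symm := ⟨fun x y ⟨hxy, hx, hy, hc⟩ ↦ ⟨hxy.symm, hy, hx, by rwa [pair_comm]⟩⟩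
  loopless := ⟨fun _ h ↦ h.1 rfl⟩

instance [DecidableEq κ] : DecidableRel (linkGraph c Q i).Adj := fun x y ↦
  inferInstanceAs (Decidable (x ≠ y ∧ x ∉ Q ∧ y ∉ Q ∧ c (Q ∪ {x, y}) = i))

variable {c Q i}

@[simp] lemma linkGraph_adj {x y : α} :
    (linkGraph c Q i).Adj x y ↔ x ≠ y ∧ x ∉ Q ∧ y ∉ Q ∧ c (Q ∪ {x, y}) = i := Iff.rfl

lemma notMem_of_mem_edgeSet_linkGraph {e : Sym2 α} (he : e ∈ (linkGraph c Q i).edgeSet) {x : α}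
    (hx : x ∈ e) : x ∉ Q := by
  induction e using Sym2.ind with | _ y z =>
  obtain rfl | rfl := Sym2.mem_iff.1 hx
  exacts [he.2.1, he.2.2.1]

lemma union_toFinset_mem_of_mem_edgeSet_linkGraph {e : Sym2 α}
    (he : e ∈ (linkGraph c Q i).edgeSet) : Q ∪ e.toFinset ∈ {s | #s = #Q + 2 ∧ c s = i} := by
  induction e using Sym2.ind with | _ x y =>
  obtain ⟨hxy, hx, hy, hc⟩ := he
  rw [Sym2.toFinset_mk_eq]
  exact ⟨by rw [card_union_of_disjoint (by simp [hx, hy]), card_pair hxy], hc⟩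

lemma injOn_union_toFinset_edgeSet_linkGraph :
    Set.InjOn (fun e : Sym2 α ↦ Q ∪ e.toFinset) (linkGraph c Q i).edgeSet := by
  intro e he e' he' h
  have key : ∀ e ∈ (linkGraph c Q i).edgeSet, ∀ x, x ∈ e ↔ x ∈ Q ∪ e.toFinset ∧ x ∉ Q :=
    fun e he x ↦ ⟨fun hx ↦ ⟨by simp [hx], notMem_of_mem_edgeSet_linkGraph he hx⟩,
      fun ⟨hx, hxQ⟩ ↦ by simpa [hxQ] using hx⟩
  exact Sym2.ext fun x ↦ by
    rw [key e he, key e' he', show Q ∪ e.toFinset = Q ∪ e'.toFinset from h]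

lemma sum_sum_card_adj_linkGraph [Fintype κ] [DecidableEq κ] (c : Finset α → κ) {C : Finset α}
    (hCQ : Disjoint C Q) :
    ∑ i, ∑ x ∈ C, #{y ∈ C | (linkGraph c Q i).Adj x y} = #C * (#C - 1) := by
  have hdeg : ∀ x ∈ C, ∑ i, #{y ∈ C | (linkGraph c Q i).Adj x y} = #C - 1 := fun x hx ↦ by
    have hfiber : ∀ i, {y ∈ C | (linkGraph c Q i).Adj x y} =
        {y ∈ C.erase x | c (Q ∪ {x, y}) = i} := fun i ↦ by
      ext y
      have := Finset.disjoint_left.1 hCQ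
      simp only [mem_filter, mem_erase, linkGraph_adj]
      grind
    simp_rw [hfiber]
    rw [← card_eq_sum_card_fiberwise fun _ _ ↦ mem_coe.2 (mem_univ _), card_erase_of_mem hx]
  rw [sum_comm, sum_congr rfl hdeg, sum_const, smul_eq_mul]

lemma exists_subset_forall_le_card_adj_linkGraph [Fintype κ] [Nonempty κ] [DecidableEq κ]
    (c : Finset α → κ) {C : Finset α} (hCQ : Disjoint C Q) {d : ℕ} (hd : 0 < d)
    (hC : #C = 2 * Fintype.card κ * d) :
    ∃ i, ∃ B ⊆ C, B.Nonempty ∧ ∀ x ∈ B, d ≤ #{y ∈ B | (linkGraph c Q i).Adj x y} := by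
  obtain ⟨i, hi⟩ : ∃ i, 2 * (d - 1) * #C < ∑ x ∈ C, #{y ∈ C | (linkGraph c Q i).Adj x y} := by
    refine (exists_lt_of_sum_lt (s := univ) ?_).imp fun _ ↦ And.right
    rw [sum_sum_card_adj_linkGraph c hCQ, sum_const, card_univ, smul_eq_mul, hC]
    have hK : 0 < Fintype.card κ := Fintype.card_pos
    have h1 : 1 ≤ d := hd
    have h2 : 1 ≤ 2 * Fintype.card κ * d := Nat.one_le_iff_ne_zero.2 (by positivity)
    zify [h1, h2]
    nlinarith [mul_pos (by exact_mod_cast hK : (0 : ℤ) < Fintype.card κ)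
      (by exact_mod_cast hd : (0 : ℤ) < d)]
  obtain ⟨B, hBC, hB, hBdeg⟩ := exists_subset_forall_lt_card_adj (d - 1) C hi
  exact ⟨i, B, hBC, hB, fun x hx ↦ by have := hBdeg x hx; omega⟩

end LinkGraph

lemma bergeIn_of_copy_splitVertex {V α κ : Type} [DecidableEq V] [DecidableEq α]
    {G : SimpleGraph V} {v : V} {c : Finset α → κ} {Q : Finset α} {i : κ} {a : α} (ha : a ∈ Q)
    (f : Copy (G.splitVertex v) (linkGraph c Q i)) (hfQ : ∀ w, f w ∉ Q) :
    BergeIn G {s | #s = #Q + 2 ∧ c s = i} := by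
  obtain ⟨lift, hlift⟩ : ∃ lift : G.edgeSet → (G.splitVertex v).edgeSet,
      Function.LeftInverse (G.splitVertexHom v).mapEdgeSet lift :=
    ⟨_, Function.rightInverse_surjInv (splitVertexHom_mapEdgeSet_surjective G v)⟩
  let φ : V → α := fun x ↦ if hx : x = v then a else f (.inl ⟨x, hx⟩)
  have hφ : ∀ w, φ (G.splitVertexHom v w) = a ∨ φ (G.splitVertexHom v w) = f w := by
    rintro (x | y)
    exacts [Or.inr (dif_neg x.2), Or.inl (dif_pos rfl)]
  refine ⟨φ, fun x y hxy ↦ ?_, fun e ↦ Q ∪ (f.mapEdgeSet (lift e)).1.toFinset,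
    fun e e' h ↦ hlift.injective <| f.mapEdgeSet.injective <| Subtype.ext <|
      injOn_union_toFinset_edgeSet_linkGraph (f.mapEdgeSet (lift e)).2 (f.mapEdgeSet (lift e')).2 h,
    fun e ↦ union_toFinset_mem_of_mem_edgeSet_linkGraph (f.mapEdgeSet (lift e)).2,
    fun e x hx ↦ ?_⟩
  · by_cases hx : x = v <;> by_cases hy : y = v <;> simp only [φ, hx, hy, ↓reduceDIte] at hxy
    · exact hx.trans hy.symm
    · exact absurd (hxy ▸ ha) (hfQ _)
    · exact absurd (hxy ▸ ha) (hfQ _)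
    · simpa using f.injective hxy
  · rw [← hlift e] at hx
    obtain ⟨w, hw, rfl⟩ := Sym2.mem_map.1 hx
    rcases hφ w with h | h <;> rw [h]
    · exact mem_union_left _ ha
    · exact mem_union_right _ (Sym2.mem_toFinset.2 (Sym2.mem_map.2 ⟨w, hw, rfl⟩))

end SimpleGraph

/-- If `G` has a vertex `v` such that `G - v` is acyclic, then for all `r ≥ 3` and `k ≥ 2`,
`R_r(𝓑(G), k) ≤ 4k|V(G)| + r - 2`. -/
theorem bergeRamsey_le_of_acyclic_del_vertex {V : Type} [Fintype V] [DecidableEq V]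
    (G : SimpleGraph V) (v : V) (hac : (G.induce {u : V | u ≠ v}).IsAcyclic)
    (r k : ℕ) (hr : 3 ≤ r) (hk : 2 ≤ k) :
    bergeRamsey G r k ≤ 4 * k * Fintype.card V + r - 2 := by
  set m := Fintype.card V
  have hm : 0 < m := Fintype.card_pos_iff.2 ⟨v⟩
  have : Nonempty (Fin k) := ⟨⟨0, by omega⟩⟩
  refine Nat.sInf_le fun c ↦ ?_
  obtain ⟨Q, -, hQ⟩ := exists_subset_card_eq (s := (univ : Finset (Fin (4 * k * m + r - 2))))
    (n := r - 2) (by simp; omega)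
  obtain ⟨a, ha⟩ : Q.Nonempty := card_pos.1 (by omega)
  obtain ⟨i, B, hBQ, hB, hBdeg⟩ := exists_subset_forall_le_card_adj_linkGraph c
    disjoint_compl_left (d := 2 * m) (by omega) <| by
      rw [card_compl, hQ, Fintype.card_fin, Fintype.card_fin]; ring_nf; omega
  have hW : Fintype.card ({u // u ≠ v} ⊕ V) ≤ 2 * m := by
    rw [Fintype.card_sum, two_mul]
    exact Nat.add_le_add_right (Fintype.card_subtype_le _) m
  obtain ⟨f, hfB⟩ := hac.isOneDegenerate.splitVertex.exists_copy (H := linkGraph c Q i) hB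
    fun b hb ↦ (hW.trans (hBdeg b hb)).trans (Nat.le_succ _)
  refine ⟨i, ?_⟩
  simpa [hQ, Nat.sub_add_cancel (by omega : 2 ≤ r)] using
    bergeIn_of_copy_splitVertex ha f fun w ↦ mem_compl.1 (hBQ (hfB w))
end

section
/- For every integer n ≥ 3, there exists a coloring of the 3-element subsets of {1, …, n} with at most 2n + ⌈log₂ n⌉ colors such that no three pairwise distinct 3-sets of the same color form a Berge-K_3. -/
/-!
Split the ground set into halves `L` and `R` of sizes `⌈m/2⌉` and `⌊m/2⌋` and colour the triples
inside either half recursively, with the same palette for both halves. A triple meeting `L` in a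
pair gets the colour of that pair in a proper edge colouring of the complete graph on `L`, and
symmetrically for `R`; this costs `#L + #R = m` further colours. In such a class the traces of the
triples on the half are pairwise equal or disjoint and every triple has a single point outside
it, which leaves no room for a Berge triangle. The count `f m ≤ f ⌈m/2⌉ + m` gives
`2m + ⌈log₂ m⌉`.
-/

open SimpleGraph

/-- The triangle `K₃`. -/
def K3 : SimpleGraph (Fin 3) := ⊤

open Finset

section BergeTriangle

variable {α : Type*}

def HasBergeTriangle (A : Set (Finset α)) : Prop :=
  ∃ e₁ ∈ A, ∃ e₂ ∈ A, ∃ e₃ ∈ A, e₁ ≠ e₂ ∧ e₁ ≠ e₃ ∧ e₂ ≠ e₃ ∧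
    ∃ x₁ x₂ x₃, x₁ ≠ x₂ ∧ x₁ ≠ x₃ ∧ x₂ ≠ x₃ ∧
      x₁ ∈ e₁ ∧ x₂ ∈ e₁ ∧ x₂ ∈ e₂ ∧ x₃ ∈ e₂ ∧ x₁ ∈ e₃ ∧ x₃ ∈ e₃

theorem HasBergeTriangle.mono {A B : Set (Finset α)} (hAB : A ⊆ B) :
    HasBergeTriangle A → HasBergeTriangle B := by
  rintro ⟨e₁, h₁, e₂, h₂, e₃, h₃, h⟩
  exact ⟨e₁, hAB h₁, e₂, hAB h₂, e₃, hAB h₃, h⟩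

theorem HasBergeTriangle.of_bergeIn_K3 {α : Type} {A : Set (Finset α)} (h : BergeIn K3 A) :
    HasBergeTriangle A := by
  obtain ⟨φ, hφ, ψ, hψ, hA, hmem⟩ := h
  have h₁ : s((0 : Fin 3), 1) ∈ K3.edgeSet := by simp [K3]
  have h₂ : s((1 : Fin 3), 2) ∈ K3.edgeSet := by simp [K3]
  have h₃ : s((0 : Fin 3), 2) ∈ K3.edgeSet := by simp [K3]
  have hψne : ∀ {a b} (ha : a ∈ K3.edgeSet) (hb : b ∈ K3.edgeSet),
      a ≠ b → ψ ⟨a, ha⟩ ≠ ψ ⟨b, hb⟩ :=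
    fun _ _ hab h => hab (congrArg Subtype.val (hψ h))
  refine ⟨ψ ⟨_, h₁⟩, hA _, ψ ⟨_, h₂⟩, hA _, ψ ⟨_, h₃⟩, hA _,
    hψne h₁ h₂ (by decide), hψne h₁ h₃ (by decide), hψne h₂ h₃ (by decide),
    φ 0, φ 1, φ 2, hφ.ne (by decide), hφ.ne (by decide), hφ.ne (by decide), ?_⟩
  simp only [hmem, Sym2.mem_iff, true_or, or_true, and_self]

/-- The sides of a Berge triangle pairwise meet, so they all lie in `A` or all in `B`. -/
theorem not_hasBergeTriangle_union {A B : Set (Finset α)} (hA : ¬HasBergeTriangle A)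
    (hB : ¬HasBergeTriangle B) (hAB : ∀ e ∈ A, ∀ f ∈ B, Disjoint e f) :
    ¬HasBergeTriangle (A ∪ B) := by
  rintro ⟨e₁, h₁, e₂, h₂, e₃, h₃, htri⟩
  have ⟨_, _, _, _, _, _, _, _, _, m₁₁, m₂₁, m₂₂, m₃₂, m₁₃, m₃₃⟩ := htri
  have cross : ∀ {e f x}, e ∈ A → f ∈ B → x ∈ e → x ∈ f → False :=
    fun he hf hxe hxf => disjoint_left.mp (hAB _ he _ hf) hxe hxf
  rcases h₁ with h₁ | h₁
  · have h₂ : e₂ ∈ A := h₂.resolve_right fun h₂ => cross h₁ h₂ m₂₁ m₂₂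
    have h₃ : e₃ ∈ A := h₃.resolve_right fun h₃ => cross h₁ h₃ m₁₁ m₁₃
    exact hA ⟨e₁, h₁, e₂, h₂, e₃, h₃, htri⟩
  · have h₂ : e₂ ∈ B := h₂.resolve_left fun h₂ => cross h₂ h₁ m₂₂ m₂₁
    have h₃ : e₃ ∈ B := h₃.resolve_left fun h₃ => cross h₃ h₁ m₁₃ m₁₁
    exact hB ⟨e₁, h₁, e₂, h₂, e₃, h₃, htri⟩

end BergeTriangle

section Traces

variable {α : Type*} [DecidableEq α]

/- Two corners outside `S` would lie on a common side, which has only one point outside `S`.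
If all three corners lie in `S`, two sides share a corner, hence their trace, which then contains
all three corners. If exactly one corner `x` lies outside `S`, both sides through `x` have the
trace of the third side, so they agree inside and outside `S`. -/
theorem not_hasBergeTriangle_of_traces {S : Finset α} {A : Set (Finset α)}
    (hA : ∀ e ∈ A, #e = 3 ∧ #(e ∩ S) = 2)
    (htrace : ∀ e ∈ A, ∀ f ∈ A, ∀ x ∈ S, x ∈ e → x ∈ f → e ∩ S = f ∩ S) :
    ¬HasBergeTriangle A := by
  have hout : ∀ e ∈ A, #(e \ S) = 1 := fun e he => by
    have := card_sdiff_add_card_inter e S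
    have := hA e he
    omega
  have sdiff_eq : ∀ e ∈ A, ∀ {x}, x ∈ e → x ∉ S → e \ S = {x} := fun e he x hx hxS => by
    obtain ⟨a, ha⟩ := card_eq_one.mp (hout e he)
    have hxa : x ∈ ({a} : Finset α) := ha ▸ mem_sdiff.mpr ⟨hx, hxS⟩
    rw [ha, mem_singleton.mp hxa]
  have out_eq : ∀ e ∈ A, ∀ {x y}, x ∈ e → y ∈ e → x ∉ S → y ∉ S → x = y :=
    fun e he x y hx hy hxS hyS =>
      mem_singleton.mp (sdiff_eq e he hy hyS ▸ mem_sdiff.mpr ⟨hx, hxS⟩)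
  have side_eq : ∀ e ∈ A, ∀ f ∈ A, ∀ g ∈ A, ∀ {x y z}, x ∉ S → x ∈ e → x ∈ f →
      y ∈ S → y ∈ e → y ∈ g → z ∈ S → z ∈ f → z ∈ g → e = f := by
    intro e he f hf g hg x y z hxS hxe hxf hyS hye hyg hzS hzf hzg
    have hinter : e ∩ S = f ∩ S :=
      (htrace e he g hg y hyS hye hyg).trans (htrace f hf g hg z hzS hzf hzg).symm
    rw [← sdiff_union_inter e S, ← sdiff_union_inter f S, hinter, sdiff_eq e he hxe hxS,
      sdiff_eq f hf hxf hxS]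
  rintro ⟨e₁, he₁, e₂, he₂, e₃, he₃, hne₁₂, hne₁₃, hne₂₃, x₁, x₂, x₃, hx₁₂, hx₁₃, hx₂₃,
    m₁₁, m₂₁, m₂₂, m₃₂, m₁₃, m₃₃⟩
  by_cases h₁ : x₁ ∈ S <;> by_cases h₂ : x₂ ∈ S <;> by_cases h₃ : x₃ ∈ S
  · have hinter := htrace e₁ he₁ e₂ he₂ x₂ h₂ m₂₁ m₂₂
    have hsub : {x₁, x₂, x₃} ⊆ e₁ ∩ S :=
      insert_subset (mem_inter.mpr ⟨m₁₁, h₁⟩) <| insert_subset (mem_inter.mpr ⟨m₂₁, h₂⟩) <|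
        singleton_subset_iff.mpr (hinter ▸ mem_inter.mpr ⟨m₃₂, h₃⟩)
    have := card_le_card hsub
    rw [card_eq_three.mpr ⟨x₁, x₂, x₃, hx₁₂, hx₁₃, hx₂₃, rfl⟩, (hA e₁ he₁).2] at this
    omega
  · exact hne₂₃ (side_eq e₂ he₂ e₃ he₃ e₁ he₁ h₃ m₃₂ m₃₃ h₂ m₂₂ m₂₁ h₁ m₁₃ m₁₁)
  · exact hne₁₂ (side_eq e₁ he₁ e₂ he₂ e₃ he₃ h₂ m₂₁ m₂₂ h₁ m₁₁ m₁₃ h₃ m₃₂ m₃₃)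
  · exact hx₂₃ (out_eq e₂ he₂ m₂₂ m₃₂ h₂ h₃)
  · exact hne₁₃ (side_eq e₁ he₁ e₃ he₃ e₂ he₂ h₁ m₁₁ m₁₃ h₂ m₂₁ m₂₂ h₃ m₃₃ m₃₂)
  · exact hx₁₃ (out_eq e₃ he₃ m₁₃ m₃₃ h₁ h₃)
  · exact hx₁₂ (out_eq e₁ he₁ m₁₁ m₂₁ h₁ h₂)
  · exact hx₁₂ (out_eq e₁ he₁ m₁₁ m₂₁ h₁ h₂)

end Traces

section PairLabelling

variable {α : Type*} [DecidableEq α]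

/-- A proper edge colouring of the complete graph on `S` with `#S` colours, edges being the
`2`-subsets of `S`. -/
def IsProperPairLabelling (π : Finset α → ℕ) (S : Finset α) : Prop :=
  (∀ p ⊆ S, #p = 2 → π p < #S) ∧
    ∀ p ⊆ S, ∀ q ⊆ S, #p = 2 → #q = 2 → ∀ x ∈ p, x ∈ q → π p = π q → p = q

/-- Number the points of `S` by `0, …, #S - 1` and label `{i, j}` by `(i + j) % #S`. -/
theorem exists_isProperPairLabelling (S : Finset α) : ∃ π, IsProperPairLabelling π S := by
  let g : α → ℕ := fun x => if h : x ∈ S then S.equivFin ⟨x, h⟩ else 0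
  have hg_lt : ∀ x ∈ S, g x < #S := fun x hx => by simp only [g, dif_pos hx, Fin.is_lt]
  have hg_inj : ∀ x ∈ S, ∀ y ∈ S, g x = g y → x = y := fun x hx y hy hxy => by
    simp only [g, dif_pos hx, dif_pos hy, Fin.val_inj, Equiv.apply_eq_iff_eq, Subtype.mk.injEq]
      at hxy
    exact hxy
  refine ⟨fun p => (∑ x ∈ p, g x) % #S, fun p hpS hp => Nat.mod_lt _ ?_, ?_⟩
  · exact card_pos.mpr ((card_pos.mp (by omega)).mono hpS)
  intro p hpS q hqS hp hq x hxp hxq hpq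
  obtain ⟨y, hy⟩ := card_eq_one.mp (show #(p.erase x) = 1 by rw [card_erase_of_mem hxp, hp])
  obtain ⟨z, hz⟩ := card_eq_one.mp (show #(q.erase x) = 1 by rw [card_erase_of_mem hxq, hq])
  have hyS : y ∈ S := hpS (mem_of_mem_erase (hy ▸ mem_singleton_self y))
  have hzS : z ∈ S := hqS (mem_of_mem_erase (hz ▸ mem_singleton_self z))
  have hmod : g y ≡ g z [MOD #S] := by
    refine Nat.ModEq.add_left_cancel' (g x) ?_
    simpa only [Nat.ModEq, ← add_sum_erase p g hxp, ← add_sum_erase q g hxq, hy, hz, sum_singleton]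
      using hpq
  have hyz : y = z := hg_inj y hyS z hzS
    (Nat.mod_eq_of_lt (hg_lt y hyS) ▸ Nat.mod_eq_of_lt (hg_lt z hzS) ▸ hmod)
  rw [← insert_erase hxp, ← insert_erase hxq, hy, hz, hyz]

theorem not_hasBergeTriangle_of_isProperPairLabelling {π : Finset α → ℕ} {S : Finset α}
    (hπ : IsProperPairLabelling π S) (j : ℕ) :
    ¬HasBergeTriangle {e : Finset α | #e = 3 ∧ #(e ∩ S) = 2 ∧ π (e ∩ S) = j} :=
  not_hasBergeTriangle_of_traces (fun _ he => ⟨he.1, he.2.1⟩) fun _ he _ hf x hxS hxe hxf =>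
    hπ.2 _ inter_subset_right _ inter_subset_right he.2.1 hf.2.1 x (mem_inter.mpr ⟨hxe, hxS⟩)
      (mem_inter.mpr ⟨hxf, hxS⟩) (he.2.2.trans hf.2.2.symm)

end PairLabelling

section Coloring

variable {α : Type*}

def IsBergeTriangleFreeColoring (c : Finset α → ℕ) (V : Finset α) (N : ℕ) : Prop :=
  (∀ s ⊆ V, #s = 3 → c s < N) ∧ ∀ i, ¬HasBergeTriangle {s | s ⊆ V ∧ #s = 3 ∧ c s = i}

theorem IsBergeTriangleFreeColoring.mono {c : Finset α → ℕ} {V : Finset α} {N N' : ℕ}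
    (hc : IsBergeTriangleFreeColoring c V N) (hN : N ≤ N') : IsBergeTriangleFreeColoring c V N' :=
  ⟨fun s hs h3 => (hc.1 s hs h3).trans_le hN, hc.2⟩

theorem isBergeTriangleFreeColoring_of_card_lt_three {V : Finset α} (hV : #V < 3)
    (c : Finset α → ℕ) (N : ℕ) : IsBergeTriangleFreeColoring c V N := by
  have no_triple : ∀ s ⊆ V, #s ≠ 3 := fun s hs h3 => by
    have := card_le_card hs
    omega
  exact ⟨fun s hs h3 => absurd h3 (no_triple s hs),
    fun _ ⟨_, ⟨hs, h3, _⟩, _⟩ => no_triple _ hs h3⟩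

variable [DecidableEq α]

theorem card_inter_eq_two_of_not_subset {L R s : Finset α} (hLR : Disjoint L R)
    (hs : s ⊆ L ∪ R) (h3 : #s = 3) (hL : ¬s ⊆ L) (hR : ¬s ⊆ R) (h2 : #(s ∩ L) ≠ 2) :
    #(s ∩ R) = 2 := by
  have hsum : #(s ∩ L) + #(s ∩ R) = #s := by
    rw [← card_union_of_disjoint (hLR.mono inter_subset_right inter_subset_right),
      ← inter_union_distrib_left, inter_eq_left.mpr hs]
  have hproper : ∀ T, ¬s ⊆ T → #(s ∩ T) < #s := fun T hT =>
    card_lt_card (inter_subset_left.ssubset_of_ne fun h => hT (inter_eq_left.mp h))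
  have := hproper L hL
  have := hproper R hR
  omega

def splitColoring (L R : Finset α) (cL cR πL πR : Finset α → ℕ) (B : ℕ) (s : Finset α) : ℕ :=
  if s ⊆ L then cL s
  else if s ⊆ R then cR s
  else if #(s ∩ L) = 2 then B + πL (s ∩ L)
  else B + #L + πR (s ∩ R)

section Split

variable {L R : Finset α} {cL cR πL πR : Finset α → ℕ} {B : ℕ}

theorem splitColoring_lt (hLR : Disjoint L R) (hL : IsBergeTriangleFreeColoring cL L B)
    (hR : IsBergeTriangleFreeColoring cR R B) (hπL : IsProperPairLabelling πL L)
    (hπR : IsProperPairLabelling πR R) {s : Finset α} (hs : s ⊆ L ∪ R) (h3 : #s = 3) :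
    splitColoring L R cL cR πL πR B s < B + #L + #R := by
  unfold splitColoring
  split_ifs with h₁ h₂ h₃
  · have := hL.1 s h₁ h3; omega
  · have := hR.1 s h₂ h3; omega
  · have := hπL.1 _ inter_subset_right h₃; omega
  · have := hπR.1 _ inter_subset_right (card_inter_eq_two_of_not_subset hLR hs h3 h₁ h₂ h₃)
    omega

theorem isBergeTriangleFreeColoring_splitColoring (hLR : Disjoint L R)
    (hL : IsBergeTriangleFreeColoring cL L B) (hR : IsBergeTriangleFreeColoring cR R B)
    (hπL : IsProperPairLabelling πL L) (hπR : IsProperPairLabelling πR R) :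
    IsBergeTriangleFreeColoring (splitColoring L R cL cR πL πR B) (L ∪ R) (B + #L + #R) := by
  refine ⟨fun s hs h3 => splitColoring_lt hLR hL hR hπL hπR hs h3, fun i => ?_⟩
  rcases lt_or_ge i B with hiB | hiB
  · refine fun h => not_hasBergeTriangle_union (hL.2 i) (hR.2 i) ?_ (h.mono ?_)
    · rintro e ⟨heL, -⟩ f ⟨hfR, -⟩
      exact hLR.mono heL hfR
    · rintro s ⟨-, h3, hc⟩
      unfold splitColoring at hc
      split_ifs at hc with h₁ h₂
      · exact Or.inl ⟨h₁, h3, hc⟩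
      · exact Or.inr ⟨h₂, h3, hc⟩
      all_goals omega
  rcases lt_or_ge i (B + #L) with hiL | hiL
  · refine fun h => not_hasBergeTriangle_of_isProperPairLabelling hπL (i - B) (h.mono ?_)
    rintro s ⟨-, h3, hc⟩
    unfold splitColoring at hc
    split_ifs at hc with h₁ h₂ h₃
    · have := hL.1 s h₁ h3; omega
    · have := hR.1 s h₂ h3; omega
    · exact ⟨h3, h₃, by omega⟩
    · omega
  · refine fun h => not_hasBergeTriangle_of_isProperPairLabelling hπR (i - B - #L) (h.mono ?_)
    rintro s ⟨hs, h3, hc⟩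
    unfold splitColoring at hc
    split_ifs at hc with h₁ h₂ h₃
    · have := hL.1 s h₁ h3; omega
    · have := hR.1 s h₂ h3; omega
    · have := hπL.1 _ inter_subset_right h₃; omega
    · exact ⟨h3, card_inter_eq_two_of_not_subset hLR hs h3 h₁ h₂ h₃, by omega⟩

end Split

theorem exists_isBergeTriangleFreeColoring (V : Finset α) :
    ∃ c, IsBergeTriangleFreeColoring c V (2 * #V + Nat.clog 2 #V) := by
  induction hm : #V using Nat.strong_induction_on generalizing V with
  | _ m ih =>
  rcases lt_or_ge m 3 with hm3 | hm3
  · exact ⟨0, isBergeTriangleFreeColoring_of_card_lt_three (by omega) _ _⟩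
  set k := (m + 1) / 2
  obtain ⟨L, hLV, hL⟩ := exists_subset_card_eq (show k ≤ #V by omega)
  have hR : #(V \ L) = m - k := by rw [card_sdiff_of_subset hLV, hm, hL]
  obtain ⟨cL, hcL⟩ := ih k (by omega) L hL
  obtain ⟨cR, hcR⟩ := ih (m - k) (by omega) (V \ L) hR
  obtain ⟨πL, hπL⟩ := exists_isProperPairLabelling L
  obtain ⟨πR, hπR⟩ := exists_isProperPairLabelling (V \ L)
  have hclog : Nat.clog 2 m = Nat.clog 2 k + 1 := by
    rw [Nat.clog_of_two_le (by norm_num) (by omega), show (m + 2 - 1) / 2 = k by omega]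
  have hclogR : Nat.clog 2 (m - k) ≤ Nat.clog 2 k := Nat.clog_mono_right _ (by omega)
  have hsplit := isBergeTriangleFreeColoring_splitColoring disjoint_sdiff hcL
    (hcR.mono (show _ ≤ 2 * k + Nat.clog 2 k by omega)) hπL hπR
  rw [union_sdiff_of_subset hLV, hL, hR] at hsplit
  exact ⟨_, hsplit.mono (by omega)⟩

end Coloring

/-- For every `n ≥ 3`, the 3-element subsets of an `n`-element set can be colored with at most
`2n + ⌈log₂ n⌉` colors such that no color class contains a Berge-`K₃`. -/
theorem exists_coloring_triples_no_berge_triangle (n : ℕ) (hn : 3 ≤ n) :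
    ∃ c : Finset (Fin n) → Fin (2 * n + Nat.clog 2 n),
      ∀ i, ¬ BergeIn K3 {s : Finset (Fin n) | s.card = 3 ∧ c s = i} := by
  obtain ⟨c, hlt, hfree⟩ := exists_isBergeTriangleFreeColoring (univ : Finset (Fin n))
  rw [card_univ, Fintype.card_fin] at hlt
  have hN : 0 < 2 * n + Nat.clog 2 n := by omega
  refine ⟨fun s => ⟨c s % _, Nat.mod_lt _ hN⟩, fun i h => hfree i ?_⟩
  refine (HasBergeTriangle.of_bergeIn_K3 h).mono ?_
  rintro s ⟨h3, rfl⟩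
  exact ⟨subset_univ s, h3, (Nat.mod_eq_of_lt (hlt s (subset_univ s) h3)).symm⟩
end

section
/- R_3(B(K_3), 2) = 5, R_3(B(K_3), 3) = 5, and R_3(B(K_3), 4) = 6. -/
/-!
Upper bounds: a colour class of maximal size has at least `⌈10/k⌉ ≥ 4` triples of `Fin 5`
when `k ≤ 3`, and at least `⌈20/4⌉ = 5` triples of `Fin 6` when `k = 4`; an exhaustive search
shows that any `4` triples of `Fin 5` and any `5` triples of `Fin 6` contain a Berge triangle.
Lower bounds: in a *book*, a family of triples sharing a common pair, only the two spine vertices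
lie in two pages, so a book has no Berge triangle. Every triple of `Fin 4` contains `{0,1}` or
`{2,3}`, and every triple of `Fin 5` contains one of `{0,1}, {2,3}, {2,4}, {3,4}`, so colouring a
triple by a pair it contains splits the triples into `2` resp. `4` books. -/

open SimpleGraph

namespace BergeIn

variable {V α β : Type} {G : SimpleGraph V}

theorem mono {A B : Set (Finset α)} (hAB : A ⊆ B) : BergeIn G A → BergeIn G B := by
  rintro ⟨φ, hφ, ψ, hψ, hψA, hφψ⟩
  exact ⟨φ, hφ, ψ, hψ, fun e => hAB (hψA e), hφψ⟩

theorem map {A : Set (Finset α)} (f : α ↪ β) : BergeIn G A → BergeIn G (Finset.map f '' A) := by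
  rintro ⟨φ, hφ, ψ, hψ, hψA, hφψ⟩
  exact ⟨f ∘ φ, f.injective.comp hφ, Finset.map f ∘ ψ, (Finset.map_injective f).comp hψ,
    fun e => ⟨ψ e, hψA e, rfl⟩, fun e x hx => Finset.mem_map_of_mem f (hφψ e x hx)⟩

end BergeIn

section BergeRamsey

variable {V : Type} {G : SimpleGraph V} {r k : ℕ}

theorem BergeRamseyProp.mono {m n : ℕ} (hmn : m ≤ n) (h : BergeRamseyProp G r k m) :
    BergeRamseyProp G r k n := by
  intro c
  obtain ⟨i, hi⟩ := h fun s => c (s.map (Fin.castLEEmb hmn))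
  refine ⟨i, (hi.map (Fin.castLEEmb hmn)).mono ?_⟩
  rintro _ ⟨s, ⟨hs, hcs⟩, rfl⟩
  exact ⟨by rw [Finset.card_map, hs], hcs⟩

theorem bergeRamsey_eq_succ {n : ℕ} (hsucc : BergeRamseyProp G r k (n + 1))
    (hn : ¬ BergeRamseyProp G r k n) : bergeRamsey G r k = n + 1 := by
  refine le_antisymm (Nat.sInf_le hsucc) (le_csInf ⟨_, hsucc⟩ fun m hm => ?_)
  by_contra! hmn
  exact hn (hm.mono (Nat.le_of_lt_succ hmn))

theorem bergeRamseyProp_of_forall_card_eq {n b : ℕ}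
    (h : ∀ A : Finset (Finset (Fin n)), (∀ s ∈ A, s.card = r) → A.card = b + 1 →
      BergeIn G (A : Set (Finset (Fin n))))
    (hcount : k * b < n.choose r) : BergeRamseyProp G r k n := by
  intro c
  have hmaps : ∀ s ∈ Finset.univ.powersetCard r, c s ∈ (Finset.univ : Finset (Fin k)) :=
    fun s _ => Finset.mem_univ _
  obtain ⟨i, -, hi⟩ := Finset.exists_lt_card_fiber_of_mul_lt_card_of_maps_to hmaps
    (by simpa [Finset.card_powersetCard] using hcount)
  obtain ⟨A, hA, hcard⟩ := Finset.exists_subset_card_eq (Nat.succ_le_of_lt hi)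
  have hAr : ∀ s ∈ A, s.card = r ∧ c s = i := fun s hs => by
    simpa using Finset.mem_filter.1 (hA hs)
  exact ⟨i, (h A (fun s hs => (hAr s hs).1) hcard).mono hAr⟩

end BergeRamsey

section Triangle

variable {α : Type} [DecidableEq α]

def IsBergeTriangle (e₁ e₂ e₃ : Finset α) : Prop :=
  e₁ ≠ e₂ ∧ e₂ ≠ e₃ ∧ e₁ ≠ e₃ ∧
    ∃ x ∈ e₃ ∩ e₁, ∃ y ∈ e₁ ∩ e₂, ∃ z ∈ e₂ ∩ e₃, x ≠ y ∧ y ≠ z ∧ x ≠ z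

instance (e₁ e₂ e₃ : Finset α) : Decidable (IsBergeTriangle e₁ e₂ e₃) := by
  unfold IsBergeTriangle; infer_instance

theorem K3.edge_cases :
    ∀ e ∈ K3.edgeSet, e = s(0, 1) ∨ e = s(1, 2) ∨ e = s(0, 2) := by
  refine Sym2.ind fun a b he => ?_
  have hab : a ≠ b := by simpa [K3] using he
  clear he
  revert a b
  decide

theorem bergeIn_K3_iff (A : Set (Finset α)) :
    BergeIn K3 A ↔ ∃ e₁ ∈ A, ∃ e₂ ∈ A, ∃ e₃ ∈ A, IsBergeTriangle e₁ e₂ e₃ := by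
  have h01 : s(0, 1) ∈ K3.edgeSet := by simp [K3]
  have h12 : s(1, 2) ∈ K3.edgeSet := by simp [K3]
  have h02 : s(0, 2) ∈ K3.edgeSet := by simp [K3]
  constructor
  · rintro ⟨φ, hφ, ψ, hψ, hψA, hφψ⟩
    refine ⟨_, hψA ⟨_, h01⟩, _, hψA ⟨_, h12⟩, _, hψA ⟨_, h02⟩,
      hψ.ne (Subtype.coe_ne_coe.mp (by simp)), hψ.ne (Subtype.coe_ne_coe.mp (by simp)),
      hψ.ne (Subtype.coe_ne_coe.mp (by simp)), φ 0, ?_, φ 1, ?_, φ 2, ?_,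
      hφ.ne (by decide), hφ.ne (by decide), hφ.ne (by decide)⟩ <;>
    exact Finset.mem_inter.2 ⟨hφψ _ _ (by simp), hφψ _ _ (by simp)⟩
  · rintro ⟨e₁, h₁, e₂, h₂, e₃, h₃, h12, h23, h13, x, hx, y, hy, z, hz, hxy, hyz, hxz⟩
    simp only [Finset.mem_inter] at hx hy hz
    refine ⟨![x, y, z], ?_, fun e => if e.1 = s(0, 1) then e₁ else if e.1 = s(1, 2) then e₂ else e₃,
      ?_, ?_, ?_⟩
    · intro i j hij
      fin_cases i <;> fin_cases j <;> simp_all [eq_comm]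
    · intro a b hab
      rcases K3.edge_cases a a.2 with ha | ha | ha <;>
        rcases K3.edge_cases b b.2 with hb | hb | hb <;> simp_all [Subtype.ext_iff, eq_comm]
    · intro e
      rcases K3.edge_cases e e.2 with he | he | he <;> simp [*]
    · intro e v hv
      rcases K3.edge_cases e e.2 with he | he | he <;> rw [he] at hv <;>
        rcases Sym2.mem_iff.1 hv with rfl | rfl <;> simp [*]

instance (l : List (Finset α)) : Decidable (BergeIn K3 {e | e ∈ l}) :=
  decidable_of_iff (∃ e₁ ∈ l, ∃ e₂ ∈ l, ∃ e₃ ∈ l, IsBergeTriangle e₁ e₂ e₃)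
    (bergeIn_K3_iff _).symm

theorem not_bergeIn_K3_of_forall_subset {p : Finset α} (hp : p.card = 2) {A : Set (Finset α)}
    (hA : ∀ e ∈ A, e.card = 3 ∧ p ⊆ e) : ¬ BergeIn K3 A := by
  rw [bergeIn_K3_iff]
  rintro ⟨e₁, h₁, e₂, h₂, e₃, h₃, h12, h23, h13, x, hx, y, hy, z, hz, hxy, hyz, hxz⟩
  have hspine : ∀ e ∈ A, ∀ e' ∈ A, e ≠ e' → ∀ v ∈ e ∩ e', v ∈ p := by
    intro e he e' he' hne v hv
    by_contra hvp
    have hcard : (insert v p).card = 3 := by rw [Finset.card_insert_of_notMem hvp, hp]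
    have page : ∀ f ∈ A, v ∈ f → insert v p = f := fun f hf hvf =>
      Finset.eq_of_subset_of_card_le (Finset.insert_subset hvf (hA f hf).2)
        (by rw [hcard, (hA f hf).1])
    rw [Finset.mem_inter] at hv
    exact hne ((page e he hv.1).symm.trans (page e' he' hv.2))
  have hxyz : {x, y, z} ⊆ p := by
    simp only [Finset.insert_subset_iff, Finset.singleton_subset_iff]
    exact ⟨hspine _ h₃ _ h₁ h13.symm x hx, hspine _ h₁ _ h₂ h12 y hy, hspine _ h₂ _ h₃ h23 z hz⟩
  have := Finset.card_le_card hxyz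
  rw [Finset.card_eq_three.2 ⟨x, y, z, hxy, hxz, hyz, rfl⟩, hp] at this
  omega

end Triangle

theorem not_bergeRamseyProp_K3_of_cover {n k : ℕ} [NeZero k] (p : Fin k → Finset (Fin n))
    (hp : ∀ i, (p i).card = 2) (hcover : ∀ s : Finset (Fin n), s.card = 3 → ∃ i, p i ⊆ s) :
    ¬ BergeRamseyProp K3 3 k n := by
  classical
  intro h
  obtain ⟨i, hi⟩ := h fun s => if hs : ∃ i, p i ⊆ s then hs.choose else 0
  refine not_bergeIn_K3_of_forall_subset (hp i) ?_ hi
  rintro s ⟨hs, hcs⟩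
  have hsp := hcover s hs
  rw [dif_pos hsp] at hcs
  exact ⟨hs, hcs ▸ hsp.choose_spec⟩

section Search

variable {β : Type}

def checkSublistsLen (P : List β → Prop) [DecidablePred P] : List β → ℕ → List β → Bool
  | _, 0, cur => decide (P cur)
  | [], _ + 1, _ => true
  | t :: l, d + 1, cur =>
    -- for a monotone `P`, once `P (t :: cur)` holds every extension of `t :: cur` is settled
    (decide (P (t :: cur)) || checkSublistsLen P l d (t :: cur)) && checkSublistsLen P l (d + 1) cur

theorem checkSublistsLen_sound {P : List β → Prop} [DecidablePred P]
    (hP : ∀ ⦃l l' : List β⦄, l ⊆ l' → P l → P l') {l : List β} {d : ℕ} {cur : List β}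
    (hcheck : checkSublistsLen P l d cur = true) {S : List β} (hS : S.Sublist l)
    (hlen : S.length = d) : P (S ++ cur) := by
  induction l generalizing d cur S with
  | nil =>
    obtain rfl := List.sublist_nil.1 hS
    subst hlen
    simpa [checkSublistsLen] using hcheck
  | cons t l ih =>
    cases d with
    | zero =>
      obtain rfl := List.length_eq_zero_iff.1 hlen
      simpa [checkSublistsLen] using hcheck
    | succ d =>
      simp only [checkSublistsLen, Bool.and_eq_true, Bool.or_eq_true, decide_eq_true_eq]
        at hcheck
      obtain ⟨hwith, hwithout⟩ := hcheck
      cases hS with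
      | cons _ hS => exact ih hwithout hS hlen
      | cons_cons _ hS =>
        rcases hwith with ht | hrest
        · exact hP (List.cons_subset_cons t (List.subset_append_right _ cur)) ht
        · exact hP List.perm_middle.subset (ih hrest hS (by simpa using hlen))

theorem List.exists_sublist_length_eq_card [DecidableEq β] {L : List β} {A : Finset β}
    (hA : ∀ a ∈ A, a ∈ L) : ∃ S : List β, S.Sublist L ∧ S.length = A.card ∧ ∀ a ∈ S, a ∈ A := by
  refine ⟨L.dedup.filter (· ∈ A), (List.filter_sublist).trans (List.dedup_sublist L), ?_,
    fun a ha => by simpa using (List.mem_filter.1 ha).2⟩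
  rw [← List.toFinset_card_of_nodup ((List.nodup_dedup L).filter _)]
  congr 1
  ext a
  simpa using hA a

end Search

def subsetsOfCard (r n : ℕ) : List (Finset (Fin n)) :=
  ((List.finRange n).sublistsLen r).map List.toFinset

theorem mem_subsetsOfCard {r n : ℕ} {s : Finset (Fin n)} (hs : s.card = r) :
    s ∈ subsetsOfCard r n := by
  have hfilter : ((List.finRange n).filter (· ∈ s)).toFinset = s := by ext; simp
  refine List.mem_map.2 ⟨_, List.mem_sublistsLen.2 ⟨List.filter_sublist, ?_⟩, hfilter⟩
  have hlen := List.toFinset_card_of_nodup ((List.nodup_finRange n).filter (· ∈ s))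
  rw [hfilter] at hlen
  rw [← hlen, hs]

theorem bergeIn_K3_of_checkSublistsLen {n d : ℕ}
    (hcheck : checkSublistsLen (fun l => BergeIn K3 {e | e ∈ l}) (subsetsOfCard 3 n) d [] = true)
    (A : Finset (Finset (Fin n))) (hA : ∀ s ∈ A, s.card = 3) (hcard : A.card = d) :
    BergeIn K3 (A : Set (Finset (Fin n))) := by
  obtain ⟨S, hS, hlen, hSA⟩ :=
    List.exists_sublist_length_eq_card fun s hs => mem_subsetsOfCard (hA s hs)
  have hmono : ∀ ⦃l l' : List (Finset (Fin n))⦄, l ⊆ l' →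
      BergeIn K3 {e | e ∈ l} → BergeIn K3 {e | e ∈ l'} := fun _ _ h => BergeIn.mono h
  have := checkSublistsLen_sound hmono hcheck hS (hlen.trans hcard)
  exact this.mono fun e he => hSA e (by simpa using he)

theorem bergeIn_K3_of_card_eq_four (A : Finset (Finset (Fin 5))) (hA : ∀ s ∈ A, s.card = 3)
    (hcard : A.card = 4) : BergeIn K3 (A : Set (Finset (Fin 5))) :=
  bergeIn_K3_of_checkSublistsLen (by decide +kernel) A hA hcard

theorem bergeIn_K3_of_card_eq_five (A : Finset (Finset (Fin 6))) (hA : ∀ s ∈ A, s.card = 3)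
    (hcard : A.card = 5) : BergeIn K3 (A : Set (Finset (Fin 6))) :=
  bergeIn_K3_of_checkSublistsLen (by decide +kernel) A hA hcard

/-- `R₃(𝓑(K₃), 2) = 5`, `R₃(𝓑(K₃), 3) = 5` and `R₃(𝓑(K₃), 4) = 6`. -/
theorem bergeRamsey_K3_small :
    bergeRamsey K3 3 2 = 5 ∧ bergeRamsey K3 3 3 = 5 ∧ bergeRamsey K3 3 4 = 6 := by
  have upper₅ {k : ℕ} (hk : k ≤ 3) : BergeRamseyProp K3 3 k 5 :=
    bergeRamseyProp_of_forall_card_eq bergeIn_K3_of_card_eq_four (by norm_num [Nat.choose]; omega)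
  refine ⟨bergeRamsey_eq_succ (upper₅ (by norm_num)) ?_, bergeRamsey_eq_succ (upper₅ le_rfl) ?_,
    bergeRamsey_eq_succ (bergeRamseyProp_of_forall_card_eq bergeIn_K3_of_card_eq_five
      (by decide)) ?_⟩
  · exact not_bergeRamseyProp_K3_of_cover ![{0, 1}, {2, 3}] (by decide) (by decide)
  · exact not_bergeRamseyProp_K3_of_cover ![{0, 1}, {2, 3}, {0, 2}] (by decide) (by decide)
  · exact not_bergeRamseyProp_K3_of_cover ![{0, 1}, {2, 3}, {2, 4}, {3, 4}] (by decide) (by decide)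
end

section
/- For every integer n ≥ 3, f(n, B(K_3)) ≤ 2^{n−2}; that is, there exists a coloring of all subsets of {1, …, n} with 2^{n−2} colors such that no three pairwise distinct subsets of the same color form a Berge-K_3. -/
open SimpleGraph

/-!
Fix two points `a ≠ b`. Replace each set by whichever of it and its complement avoids `a`,
then forget `b`; color by the resulting subset of the remaining `n - 2` points. A color class
then consists of at most the four sets `R`, `R ∪ {b}` and their complements, so any three
distinct sets of one color contain a complementary, hence disjoint, pair. The three hyperedges
of a Berge triangle, however, pairwise share the image of a vertex.
-/

theorem BergeIn.exists_pairwise_not_disjoint_of_K3 {α : Type} {A : Set (Finset α)}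
    (h : BergeIn K3 A) :
    ∃ S ∈ A, ∃ T ∈ A, ∃ U ∈ A, S ≠ T ∧ S ≠ U ∧ T ≠ U ∧
      ¬ Disjoint S T ∧ ¬ Disjoint S U ∧ ¬ Disjoint T U := by
  obtain ⟨φ, -, ψ, hψ, hA, hφψ⟩ := h
  let e01 : K3.edgeSet := ⟨s(0, 1), by simp [K3]⟩
  let e02 : K3.edgeSet := ⟨s(0, 2), by simp [K3]⟩
  let e12 : K3.edgeSet := ⟨s(1, 2), by simp [K3]⟩
  refine ⟨ψ e01, hA _, ψ e02, hA _, ψ e12, hA _, hψ.ne (by decide), hψ.ne (by decide),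
    hψ.ne (by decide), ?_, ?_, ?_⟩ <;> rw [Finset.not_disjoint_iff]
  · exact ⟨φ 0, hφψ e01 0 (by simp [e01]), hφψ e02 0 (by simp [e02])⟩
  · exact ⟨φ 1, hφψ e01 1 (by simp [e01]), hφψ e12 1 (by simp [e12])⟩
  · exact ⟨φ 2, hφψ e02 2 (by simp [e02]), hφψ e12 2 (by simp [e12])⟩

namespace Finset

variable {α : Type} [Fintype α] [DecidableEq α]

def complIfMem (a : α) (S : Finset α) : Finset α :=
  if a ∈ S then Sᶜ else S

theorem notMem_complIfMem (a : α) (S : Finset α) : a ∉ complIfMem a S := by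
  unfold complIfMem
  split_ifs <;> simpa

theorem eq_or_eq_compl_of_complIfMem_eq {a : α} {S T : Finset α}
    (h : complIfMem a S = complIfMem a T) : S = T ∨ S = Tᶜ := by
  unfold complIfMem at h
  split_ifs at h
  · exact Or.inl (compl_inj_iff.mp h)
  · exact Or.inr (compl_eq_comm.mp h).symm
  · exact Or.inr h
  · exact Or.inl h

theorem disjoint_of_erase_complIfMem_eq {a b : α} {S T : Finset α} (hST : S ≠ T)
    (hkey : (complIfMem a S).erase b = (complIfMem a T).erase b)
    (hb : b ∈ complIfMem a S ↔ b ∈ complIfMem a T) : Disjoint S T := by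
  have hcompl : complIfMem a S = complIfMem a T := by
    ext x
    by_cases hx : x = b
    · exact hx ▸ hb
    · simpa [hx] using Finset.ext_iff.mp hkey x
  rcases eq_or_eq_compl_of_complIfMem_eq hcompl with h | rfl
  · exact absurd h hST
  · exact disjoint_compl_left

theorem disjoint_of_three_erase_complIfMem_eq {a b : α} {S T U : Finset α}
    (hST : S ≠ T) (hSU : S ≠ U) (hTU : T ≠ U)
    (hT : (complIfMem a S).erase b = (complIfMem a T).erase b)
    (hU : (complIfMem a S).erase b = (complIfMem a U).erase b) :
    Disjoint S T ∨ Disjoint S U ∨ Disjoint T U := by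
  -- pigeonhole on whether `b` lies in `complIfMem a ·`
  by_cases hbT : b ∈ complIfMem a S ↔ b ∈ complIfMem a T
  · exact Or.inl (disjoint_of_erase_complIfMem_eq hST hT hbT)
  by_cases hbU : b ∈ complIfMem a S ↔ b ∈ complIfMem a U
  · exact Or.inr (Or.inl (disjoint_of_erase_complIfMem_eq hSU hU hbU))
  · exact Or.inr (Or.inr (disjoint_of_erase_complIfMem_eq hTU (hT.symm.trans hU) (by tauto)))

theorem not_bergeIn_K3_of_erase_complIfMem_eq (a b : α) {A : Set (Finset α)}
    (hA : ∀ S ∈ A, ∀ T ∈ A, (complIfMem a S).erase b = (complIfMem a T).erase b) :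
    ¬ BergeIn K3 A := by
  intro h
  obtain ⟨S, hS, T, hT, U, hU, hST, hSU, hTU, h₁, h₂, h₃⟩ :=
    h.exists_pairwise_not_disjoint_of_K3
  rcases disjoint_of_three_erase_complIfMem_eq hST hSU hTU (hA S hS T hT) (hA S hS U hU)
    with h | h | h <;> contradiction

theorem erase_complIfMem_mem_powerset (a b : α) (S : Finset α) :
    (complIfMem a S).erase b ∈ ((univ.erase a).erase b).powerset := by
  rw [mem_powerset]
  exact erase_subset_erase b (subset_erase.mpr ⟨subset_univ _, notMem_complIfMem a S⟩)

theorem exists_coloring_no_bergeIn_K3 {a b : α} (hab : a ≠ b) :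
    ∃ c : Finset α → Fin (2 ^ (Fintype.card α - 2)),
      ∀ i, ¬ BergeIn K3 {S : Finset α | c S = i} := by
  have hcard : Fintype.card ((univ.erase a).erase b).powerset = 2 ^ (Fintype.card α - 2) := by
    rw [Fintype.card_coe, card_powerset,
      card_erase_of_mem (mem_erase.mpr ⟨hab.symm, mem_univ b⟩), card_erase_of_mem (mem_univ a), card_univ, Nat.sub_sub]
  let e := Fintype.equivFinOfCardEq hcard
  let key : Finset α → ((univ.erase a).erase b).powerset :=
    fun S => ⟨_, erase_complIfMem_mem_powerset a b S⟩
  refine ⟨e ∘ key, fun i => not_bergeIn_K3_of_erase_complIfMem_eq a b fun S hS T hT => ?_⟩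
  exact congrArg Subtype.val (e.injective (hS.trans hT.symm))

end Finset

/-- For every `n ≥ 3`, `f(n, 𝓑(K₃)) ≤ 2^(n-2)`: all subsets of an `n`-element set can be
colored with `2^(n-2)` colors so that no color class contains a Berge-`K₃`. -/
theorem exists_coloring_subsets_no_berge_triangle (n : ℕ) (hn : 3 ≤ n) :
    ∃ c : Finset (Fin n) → Fin (2 ^ (n - 2)),
      ∀ i, ¬ BergeIn K3 {s : Finset (Fin n) | c s = i} := by
  have hab : (⟨0, by omega⟩ : Fin n) ≠ ⟨1, by omega⟩ := by simp
  have h := Finset.exists_coloring_no_bergeIn_K3 hab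
  rwa [Fintype.card_fin] at h
end

section
/- For every odd integer n ≥ 3 with n ≠ 5, f(n, B(K_3)) = 2^{n−2}: the subsets of an n-element set can be colored with 2^{n−2} colors without a monochromatic Berge-K_3, but every coloring with fewer than 2^{n−2} colors contains three pairwise distinct subsets of the same color forming a Berge-K_3. -/
open SimpleGraph

/-!
Indexing each hyperedge of a Berge triangle by the vertex opposite to its edge, a Berge triangle
is a triple of distinct sets `S₀, S₁, S₂` with distinct points `vᵢ ∈ Sⱼ` for all `i ≠ j`.

Upper bound: fix `a ≠ b`, replace `X` by whichever of `X`, `Xᶜ` contains `b`, and colour `X` by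
what remains of that set outside `{a, b}`. There are `2^(n-2)` colours, and a colour class is
`{T, Tᶜ, T', T'ᶜ}` with `T' = T ∆ {a}`; any three of its members contain a complementary, hence
disjoint, pair, so they do not form a Berge triangle.

Lower bound, `n = 2k + 1`: complementation shows that `2^(n-1)` subsets have more than `k`
elements, so with fewer than `2^(n-2)` colours three of them share a colour. For three distinct
such sets `A, B, C`, Hall's theorem gives distinct representatives of `B ∩ C`, `A ∩ C`, `A ∩ B`:
the pair conditions follow from `|A ∪ B| ≥ k + 2`, and the triple condition from
`|A| + |B| + |C| ≤ n + 2 |W|`, `W` the union of the pairwise intersections, as soon as `k ≥ 3`.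
The case `n = 3` is a finite check; for `n = 5` the triple condition fails.
-/

open Finset Function

lemma mem_edgeSet_K3 {e : Sym2 (Fin 3)} : e ∈ K3.edgeSet ↔ ¬ e.IsDiag := by
  simp [K3]

def oppositeEdge (j : Fin 3) : K3.edgeSet :=
  ⟨s(j + 1, j + 2), mem_edgeSet_K3.2 (by revert j; decide)⟩

/-- On an edge `s(i, j)` of `K3` this is the third vertex, since `0 + 1 + 2 = 0` in `Fin 3`. -/
def oppositeVertex : Sym2 (Fin 3) → Fin 3 :=
  Sym2.lift ⟨fun i j => -(i + j), fun i j => by simp only [add_comm]⟩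

lemma mem_oppositeEdge_iff {i j : Fin 3} : i ∈ (oppositeEdge j : Sym2 (Fin 3)) ↔ i ≠ j := by
  revert i j; decide

lemma oppositeEdge_injective : Injective oppositeEdge := by
  intro i j h
  have := congrArg Subtype.val h
  revert i j; decide

lemma oppositeVertex_injOn : Set.InjOn oppositeVertex K3.edgeSet := by
  intro e he f hf
  rw [mem_edgeSet_K3] at he hf
  revert e f; decide

lemma ne_oppositeVertex_of_mem {e : Sym2 (Fin 3)} (he : e ∈ K3.edgeSet) {v : Fin 3}
    (hv : v ∈ e) : v ≠ oppositeVertex e := by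
  rw [mem_edgeSet_K3] at he
  revert e v; decide

theorem bergeIn_K3_iff_s8 {α : Type} {F : Set (Finset α)} :
    BergeIn K3 F ↔ ∃ S : Fin 3 → Finset α, Injective S ∧ (∀ j, S j ∈ F) ∧
      ∃ φ : Fin 3 → α, Injective φ ∧ ∀ i j, i ≠ j → φ i ∈ S j := by
  constructor
  · rintro ⟨φ, hφ, ψ, hψ, hF, hmem⟩
    exact ⟨ψ ∘ oppositeEdge, hψ.comp oppositeEdge_injective, fun j => hF _, φ, hφ,
      fun i j hij => hmem _ i (mem_oppositeEdge_iff.2 hij)⟩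
  · rintro ⟨S, hS, hF, φ, hφ, hmem⟩
    exact ⟨φ, hφ, fun e => S (oppositeVertex e),
      fun e f h => Subtype.ext (oppositeVertex_injOn e.2 f.2 (hS h)), fun e => hF _,
      fun e v hv => hmem _ _ (ne_oppositeVertex_of_mem e.2 hv)⟩

lemma Finset.eq_of_sdiff_eq_of_forall_mem_iff {β : Type*} [DecidableEq β] {s t u : Finset β}
    (h : s \ u = t \ u) (hu : ∀ x ∈ u, x ∈ s ↔ x ∈ t) : s = t := by
  ext x
  by_cases hx : x ∈ u
  · exact hu x hx
  · simpa [hx] using congrArg (x ∈ ·) h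

lemma exists_fin_coloring_of_mapsTo {β γ : Type*} (key : β → γ) (s : Finset γ)
    (hs : ∀ x, key x ∈ s) {m : ℕ} (hm : #s ≤ m) :
    ∃ c : β → Fin m, ∀ x y, c x = c y → key x = key y :=
  ⟨fun x => Fin.castLE hm (s.equivFin ⟨key x, hs x⟩), fun x y h => by
    simpa using s.equivFin.injective (Fin.castLE_injective hm h)⟩

section Coloring

variable {α : Type} [Fintype α] [DecidableEq α]

def complRep (b : α) (s : Finset α) : Finset α := if b ∈ s then s else sᶜ

lemma mem_complRep (b : α) (s : Finset α) : b ∈ complRep b s := by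
  unfold complRep; split_ifs with h <;> simp [h]

lemma eq_or_eq_compl_of_complRep_eq {b : α} {s t : Finset α}
    (h : complRep b s = complRep b t) : s = t ∨ s = tᶜ := by
  unfold complRep at h
  split_ifs at h
  · exact .inl h
  · exact .inr h
  · exact .inr (by rw [← h, compl_compl])
  · exact .inl (compl_inj_iff.1 h)

def colorKey (a b : α) (s : Finset α) : Finset α := complRep b s \ {a, b}

lemma exists_eq_compl_of_colorKey_eq {a b : α} {S : Fin 3 → Finset α} (hS : Injective S)
    (hkey : ∀ i j, colorKey a b (S i) = colorKey a b (S j)) : ∃ i j, i ≠ j ∧ S i = (S j)ᶜ := by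
  obtain ⟨i, j, hij, hsame⟩ := Fintype.exists_ne_map_eq_of_card_lt
    (fun i => decide (a ∈ complRep b (S i))) (by simp)
  have hrep : complRep b (S i) = complRep b (S j) := by
    refine eq_of_sdiff_eq_of_forall_mem_iff (hkey i j) fun x hx => ?_
    rcases mem_insert.1 hx with rfl | hx
    · exact decide_eq_decide.1 hsame
    · rw [mem_singleton.1 hx]
      exact iff_of_true (mem_complRep _ _) (mem_complRep _ _)
  exact ⟨i, j, hij, (eq_or_eq_compl_of_complRep_eq hrep).resolve_left (hS.ne hij)⟩

theorem exists_coloring_forall_not_bergeIn_K3 (hα : 2 ≤ Fintype.card α) :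
    ∃ c : Finset α → Fin (2 ^ (Fintype.card α - 2)), ∀ i, ¬ BergeIn K3 {s | c s = i} := by
  obtain ⟨a, b, hab⟩ := Fintype.exists_pair_of_one_lt_card hα
  obtain ⟨c, hc⟩ := exists_fin_coloring_of_mapsTo (colorKey a b) (univ \ {a, b}).powerset
    (fun s => mem_powerset.2 (sdiff_subset_sdiff (subset_univ _) le_rfl))
    (by rw [card_powerset, card_univ_sdiff, card_pair hab])
  refine ⟨c, fun k hk => ?_⟩
  obtain ⟨S, hS, hcS, φ, -, hφ⟩ := bergeIn_K3_iff_s8.1 hk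
  obtain ⟨i, j, -, hSij⟩ := exists_eq_compl_of_colorKey_eq hS
    fun i j => hc _ _ ((hcS i).trans (hcS j).symm)
  obtain ⟨l, hli, hlj⟩ : ∃ l, l ≠ i ∧ l ≠ j :=
    (by decide : ∀ i j : Fin 3, ∃ l, l ≠ i ∧ l ≠ j) i j
  have hφi := hφ l i hli
  rw [hSij] at hφi
  exact mem_compl.1 hφi (hφ l j hlj)

end Coloring

lemma Matrix.injective_vec3 {β : Type*} {x y z : β} (hxy : x ≠ y) (hxz : x ≠ z) (hyz : y ≠ z) :
    Injective ![x, y, z] := by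
  rw [Matrix.vecCons, Fin.cons_injective_iff]
  simp [Matrix.range_cons, hxy, hxz, hyz]

lemma Finset.add_one_le_card_union_of_ne {β : Type*} [DecidableEq β] {s t : Finset β} {r : ℕ}
    (hst : s ≠ t) (hs : r ≤ #s) (ht : r ≤ #t) : r + 1 ≤ #(s ∪ t) := by
  by_contra! h
  exact hst <| (eq_of_subset_of_card_le subset_union_left (by omega)).trans
    (eq_of_subset_of_card_le subset_union_right (by omega)).symm

lemma exists_distinct_mem_of_hall_three {β : Type*} [DecidableEq β] {X Y Z : Finset β}
    (hX : X.Nonempty) (hY : Y.Nonempty) (hZ : Z.Nonempty) (hXY : 2 ≤ #(X ∪ Y))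
    (hXZ : 2 ≤ #(X ∪ Z)) (hYZ : 2 ≤ #(Y ∪ Z)) (hXYZ : 3 ≤ #(X ∪ Y ∪ Z)) :
    ∃ x ∈ X, ∃ y ∈ Y, ∃ z ∈ Z, x ≠ y ∧ x ≠ z ∧ y ≠ z := by
  obtain ⟨f, hf, hft⟩ := (all_card_le_biUnion_card_iff_exists_injective ![X, Y, Z]).1 fun s => by
    have hs : #s ≤ 3 := by simpa using card_le_univ s
    interval_cases hcard : #s
    · exact Nat.zero_le _
    · obtain ⟨i, rfl⟩ := card_eq_one.1 hcard
      fin_cases i <;> simpa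
    · obtain ⟨i, j, hij, rfl⟩ := card_eq_two.1 hcard
      fin_cases i <;> fin_cases j <;> simp_all [union_comm]
    · rw [eq_univ_of_card s hcard]
      simpa [Fin.univ_succ, ← union_assoc] using hXYZ
  exact ⟨f 0, hft 0, f 1, hft 1, f 2, hft 2, hf.ne (by decide), hf.ne (by decide),
    hf.ne (by decide)⟩

section Counting

variable {α : Type*} [Fintype α] [DecidableEq α]

lemma Finset.card_add_card_le_card_add_card_inter (s t : Finset α) :
    #s + #t ≤ Fintype.card α + #(s ∩ t) := by
  rw [← card_union_add_card_inter]
  exact Nat.add_le_add_right (card_le_univ _) _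

/-- A point outside the union of the pairwise intersections lies in at most one of the sets. -/
lemma Finset.card_add_card_add_card_le (A B C : Finset α) :
    #A + #B + #C ≤ Fintype.card α + 2 * #(B ∩ C ∪ A ∩ C ∪ A ∩ B) := by
  have hcard : ∀ s : Finset α, #s = ∑ x, if x ∈ s then 1 else 0 := by simp
  rw [hcard A, hcard B, hcard C, hcard (B ∩ C ∪ A ∩ C ∪ A ∩ B), ← card_univ, card_eq_sum_ones,
    mul_sum, ← sum_add_distrib, ← sum_add_distrib, ← sum_add_distrib]
  refine sum_le_sum fun x _ => ?_
  by_cases hA : x ∈ A <;> by_cases hB : x ∈ B <;> by_cases hC : x ∈ C <;> simp [hA, hB, hC]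

lemma card_filter_lt_card_eq_two_pow {k : ℕ} (hα : Fintype.card α = 2 * k + 1) :
    #{s : Finset α | k < #s} = 2 ^ (2 * k) := by
  have hsmall : #{s : Finset α | ¬ k < #s} = #{s : Finset α | k < #s} := by
    refine card_nbij' compl compl (fun s hs => ?_) (fun s hs => ?_) (fun s _ => compl_compl s)
      (fun s _ => compl_compl s) <;>
    simp only [coe_filter, mem_univ, true_and, Set.mem_ofPred_eq, card_compl] at hs ⊢ <;> omega
  have htotal := card_filter_add_card_filter_not (s := (univ : Finset (Finset α)))
    (fun s => k < #s)
  rw [hsmall, card_univ, Fintype.card_finset, hα, pow_succ] at htotal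
  omega

lemma exists_distinct_mem_inter_of_lt_card {k : ℕ} (hα : Fintype.card α = 2 * k + 1)
    (hk : 3 ≤ k) {A B C : Finset α} (hAB : A ≠ B) (hAC : A ≠ C) (hBC : B ≠ C)
    (hA : k < #A) (hB : k < #B) (hC : k < #C) :
    ∃ x ∈ B ∩ C, ∃ y ∈ A ∩ C, ∃ z ∈ A ∩ B, x ≠ y ∧ x ≠ z ∧ y ≠ z := by
  have hinter {P Q : Finset α} (hP : k < #P) (hQ : k < #Q) : (P ∩ Q).Nonempty := by
    have := card_add_card_le_card_add_card_inter P Q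
    exact card_pos.1 (by omega)
  have hpair {P Q R : Finset α} (hQR : Q ≠ R) (hP : k < #P) (hQ : k < #Q) (hR : k < #R) :
      2 ≤ #(P ∩ (Q ∪ R)) := by
    have := card_add_card_le_card_add_card_inter P (Q ∪ R)
    have := add_one_le_card_union_of_ne hQR hQ hR
    omega
  apply exists_distinct_mem_of_hall_three (hinter hB hC) (hinter hA hC) (hinter hA hB)
  · rw [← union_inter_distrib_right, inter_comm]
    exact hpair hAB.symm hC hB hA
  · rw [inter_comm A B, ← inter_union_distrib_left]
    exact hpair hAC.symm hB hC hA
  · rw [← inter_union_distrib_left]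
    exact hpair hBC.symm hA hC hB
  · have := card_add_card_add_card_le A B C
    omega

end Counting

set_option synthInstance.maxSize 1024 in
lemma exists_distinct_mem_inter_of_lt_card_fin {n k : ℕ} (hn : n = 2 * k + 1) (hk : 1 ≤ k)
    (hk2 : k ≠ 2) {A B C : Finset (Fin n)}
    (hAB : A ≠ B) (hAC : A ≠ C) (hBC : B ≠ C) (hA : k < #A) (hB : k < #B) (hC : k < #C) :
    ∃ x ∈ B ∩ C, ∃ y ∈ A ∩ C, ∃ z ∈ A ∩ B, x ≠ y ∧ x ≠ z ∧ y ≠ z := by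
  obtain rfl | hk3 : k = 1 ∨ 3 ≤ k := by omega
  · subst hn
    revert A B C
    decide
  · exact exists_distinct_mem_inter_of_lt_card (by simp [hn]) hk3 hAB hAC hBC hA hB hC

theorem exists_bergeIn_K3_of_lt {n k : ℕ} (hn : n = 2 * k + 1) (hk : 1 ≤ k) (hk2 : k ≠ 2)
    {m : ℕ} (hm : m < 2 ^ (n - 2)) (c : Finset (Fin n) → Fin m) :
    ∃ i, BergeIn K3 {s | c s = i} := by
  have hlarge : #(univ : Finset (Fin m)) * 2 < #{s : Finset (Fin n) | k < #s} := by
    rw [card_univ, Fintype.card_fin, card_filter_lt_card_eq_two_pow (by simp [hn]),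
      show 2 * k = n - 2 + 1 by omega, pow_succ]
    omega
  obtain ⟨i, -, hi⟩ := exists_lt_card_fiber_of_mul_lt_card_of_maps_to
    (fun s _ => mem_univ (c s)) hlarge
  obtain ⟨A, hA, B, hB, C, hC, hAB, hAC, hBC⟩ := two_lt_card.1 hi
  simp only [mem_filter, mem_univ, true_and] at hA hB hC
  obtain ⟨x, hx, y, hy, z, hz, hxy, hxz, hyz⟩ :=
    exists_distinct_mem_inter_of_lt_card_fin hn hk hk2 hAB hAC hBC hA.1 hB.1 hC.1
  refine ⟨i, bergeIn_K3_iff_s8.2 ⟨![A, B, C], Matrix.injective_vec3 hAB hAC hBC,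
    fun j => ?_, ![x, y, z], Matrix.injective_vec3 hxy hxz hyz, fun j l hjl => ?_⟩⟩
  · fin_cases j <;> simp [hA.2, hB.2, hC.2]
  · rw [mem_inter] at hx hy hz
    fin_cases j <;> fin_cases l <;> simp_all

/-- For every odd `n ≥ 3` with `n ≠ 5`, `f(n, 𝓑(K₃)) = 2^(n-2)`: the subsets of an `n`-set can
be colored with `2^(n-2)` colors without a monochromatic Berge-`K₃`, but every coloring with
fewer colors has a monochromatic Berge-`K₃`. -/
theorem coloring_number_berge_triangle (n : ℕ) (hn : 3 ≤ n) (hodd : Odd n) (hn5 : n ≠ 5) :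
    (∃ c : Finset (Fin n) → Fin (2 ^ (n - 2)),
      ∀ i, ¬ BergeIn K3 {s : Finset (Fin n) | c s = i}) ∧
    (∀ m : ℕ, m < 2 ^ (n - 2) → ∀ c : Finset (Fin n) → Fin m,
      ∃ i, BergeIn K3 {s : Finset (Fin n) | c s = i}) := by
  obtain ⟨k, rfl⟩ := hodd
  refine ⟨?_, fun m hm c => exists_bergeIn_K3_of_lt rfl (by omega) (by omega) hm c⟩
  have h := exists_coloring_forall_not_bergeIn_K3 (α := Fin (2 * k + 1)) (by simp; omega)
  rwa [Fintype.card_fin] at h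
end

section
/- Let G be a finite simple graph with maximum degree at most 2 and at least one edge, let n ≥ |V(G)|, and let X_1, …, X_m with m = |E(G)| be pairwise distinct subsets of {1, …, n}, each satisfying 2|X_i| ≥ n + |V(G)|. Then the hypergraph with hyperedges X_1, …, X_m contains a Berge-G. -/
/-! Match the hyperedges bijectively with the edges of `G` and let `S x` be the intersection of
the hyperedges at the vertex `x`. Each hyperedge misses at most `(n - |V|)/2` points and `x` lies
on at most two edges, so `|S x| ≥ |V|`. Hall's condition for the family `S` is then immediate, and
a system of distinct representatives `φ x ∈ S x` is the injection of a Berge-`G`. -/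

open SimpleGraph

open Finset

namespace Finset

theorem card_univ_le_card_inf_add_sum_card_compl {ι α : Type*} [Fintype α]
    [DecidableEq α] (s : Finset ι) (A : ι → Finset α) :
    Fintype.card α ≤ #(s.inf A) + ∑ i ∈ s, #(A i)ᶜ := by
  have hcompl : #(s.inf A)ᶜ ≤ ∑ i ∈ s, #(A i)ᶜ := by
    rw [Finset.compl_inf, Finset.sup_eq_biUnion]
    exact card_biUnion_le
  rw [card_compl] at hcompl
  omega

theorem le_card_inf_of_card_le_two {ι α : Type*} [Fintype α] [DecidableEq α]
    {s : Finset ι} {A : ι → Finset α} {k : ℕ} (hs : #s ≤ 2) (hk : k ≤ Fintype.card α)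
    (hA : ∀ i ∈ s, Fintype.card α + k ≤ 2 * #(A i)) : k ≤ #(s.inf A) := by
  have hcompl : ∀ i ∈ s, 2 * #(A i)ᶜ ≤ Fintype.card α - k := by
    intro i hi
    have := hA i hi
    rw [card_compl]
    omega
  have hsum : 2 * ∑ i ∈ s, #(A i)ᶜ ≤ 2 * (Fintype.card α - k) :=
    calc 2 * ∑ i ∈ s, #(A i)ᶜ ≤ #s * (Fintype.card α - k) := by
          rw [mul_sum]; exact sum_le_card_nsmul _ _ _ hcompl
      _ ≤ 2 * (Fintype.card α - k) := Nat.mul_le_mul_right _ hs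
  have := card_univ_le_card_inf_add_sum_card_compl s A
  omega

theorem exists_injective_mem_of_card_le {ι α : Type*} [Fintype ι] [DecidableEq α]
    (t : ι → Finset α) (ht : ∀ i, Fintype.card ι ≤ #(t i)) :
    ∃ f : ι → α, Function.Injective f ∧ ∀ i, f i ∈ t i := by
  refine (all_card_le_biUnion_card_iff_exists_injective t).1 fun s => ?_
  obtain rfl | ⟨i, hi⟩ := s.eq_empty_or_nonempty
  · simp
  · calc #s ≤ Fintype.card ι := card_le_univ s
      _ ≤ #(t i) := ht i
      _ ≤ #(s.biUnion t) := card_le_card (subset_biUnion_of_mem t hi)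

end Finset

namespace SimpleGraph

variable {V : Type} [Fintype V] [DecidableEq V] (G : SimpleGraph V) [DecidableRel G.Adj]

def incidentEdges (x : V) : Finset G.edgeSet := {e | x ∈ (e : Sym2 V)}

theorem card_incidentEdges (x : V) : #(G.incidentEdges x) = G.degree x := by
  rw [← card_incidenceFinset_eq_degree, ← card_map (Function.Embedding.subtype _)]
  congr 1
  ext e
  simp [incidentEdges, mem_incidenceFinset, incidenceSet, and_comm]

theorem bergeIn_of_card_le_card_inf {α : Type} [Fintype α] [DecidableEq α]
    {A : Set (Finset α)} (ψ : G.edgeSet → Finset α) (hψ : Function.Injective ψ)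
    (hA : ∀ e, ψ e ∈ A) (hlarge : ∀ x, Fintype.card V ≤ #((G.incidentEdges x).inf ψ)) :
    BergeIn G A := by
  obtain ⟨φ, hφ, hφψ⟩ := exists_injective_mem_of_card_le _ hlarge
  refine ⟨φ, hφ, ψ, hψ, hA, fun e x hx => ?_⟩
  exact inf_le (f := ψ) (by simpa [incidentEdges] using hx) (hφψ x)

end SimpleGraph

theorem large_sets_contain_berge_general {V : Type} [Fintype V]
    (G : SimpleGraph V) [DecidableRel G.Adj]
    (hdeg : ∀ u : V, G.degree u ≤ 2)
    (n : ℕ) (hn : Fintype.card V ≤ n)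
    (X : Fin G.edgeFinset.card → Finset (Fin n)) (hX : Function.Injective X)
    (hsize : ∀ i, n + Fintype.card V ≤ 2 * (X i).card) :
    BergeIn G (Set.range X) := by
  classical
  let eqv : G.edgeSet ≃ Fin #G.edgeFinset :=
    Fintype.equivFinOfCardEq (Set.toFinset_card _).symm
  refine G.bergeIn_of_card_le_card_inf (X ∘ eqv) (hX.comp eqv.injective)
    (fun e => ⟨eqv e, rfl⟩) fun x => le_card_inf_of_card_le_two ?_ ?_ ?_
  · exact (G.card_incidentEdges x).trans_le (hdeg x)
  · simpa using hn
  · intro e _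
    simpa using hsize (eqv e)

/-- If `G` has maximum degree at most `2` and at least one edge, `n ≥ |V(G)|`, and
`X₁, …, X_m` (`m = |E(G)|`) are pairwise distinct subsets of an `n`-set each of size at least
`(n + |V(G)|)/2`, then they form a Berge-`G`. -/
theorem large_sets_contain_berge {V : Type} [Fintype V] [DecidableEq V]
    (G : SimpleGraph V) [DecidableRel G.Adj]
    (hdeg : ∀ u : V, G.degree u ≤ 2) (hE : G.edgeSet.Nonempty)
    (n : ℕ) (hn : Fintype.card V ≤ n)
    (X : Fin G.edgeFinset.card → Finset (Fin n)) (hX : Function.Injective X)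
    (hsize : ∀ i, n + Fintype.card V ≤ 2 * (X i).card) :
    BergeIn G (Set.range X) :=
  large_sets_contain_berge_general G hdeg n hn X hX hsize
end

section
/- Let G be a finite simple graph with maximum degree at most 2 and at least two edges, and let n ≥ |V(G)|. Then f(n, B(G)) ≥ N/(|E(G)|−1), where N is the number of subsets A of {1, …, n} with 2|A| ≥ n + |V(G)|. -/
/-!
Assign any `|E|` distinct sets of size at least `(n + |V|)/2` to the edges. Each misses at most
`(n - |V|)/2` points and a vertex of degree at most `2` lies in at most two edges, so the sets at
every vertex share at least `|V|` points; Hall's theorem then picks distinct representatives for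
the vertices, and these sets form a Berge-`G`. Hence each color class of a coloring without a
monochromatic Berge-`G` contains at most `|E| - 1` of the large sets.
-/

open SimpleGraph

/-- `f(n, 𝓑(G))`: the smallest number of colors in a coloring of all subsets of an `n`-element
set with no monochromatic Berge-`G`. -/
noncomputable def bergeColorNumber {V : Type} (G : SimpleGraph V) (n : ℕ) : ℕ :=
  sInf {m | ∃ c : Finset (Fin n) → Fin m,
    ∀ i, ¬ BergeIn G {s : Finset (Fin n) | c s = i}}

open Finset

variable {V α : Type} {G : SimpleGraph V}

theorem Finset.exists_injective_forall_mem_of_card_le {ι : Type*} [Fintype ι] [DecidableEq α]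
    (t : ι → Finset α) (ht : ∀ i, Fintype.card ι ≤ #(t i)) :
    ∃ f : ι → α, Function.Injective f ∧ ∀ i, f i ∈ t i := by
  refine (all_card_le_biUnion_card_iff_exists_injective t).mp fun s => ?_
  obtain rfl | ⟨i, hi⟩ := s.eq_empty_or_nonempty
  · simp
  · calc #s ≤ Fintype.card ι := card_le_univ s
      _ ≤ #(t i) := ht i
      _ ≤ #(s.biUnion t) := card_le_card (subset_biUnion_of_mem t hi)

theorem not_bergeIn_of_subsingleton (hG : G.edgeSet.Nontrivial) {A : Set (Finset α)}
    (hA : A.Subsingleton) : ¬ BergeIn G A := by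
  rintro ⟨-, -, ψ, hψ, hψA, -⟩
  obtain ⟨a, ha, b, hb, hab⟩ := hG
  exact hab (congrArg Subtype.val (hψ (hA (hψA ⟨a, ha⟩) (hψA ⟨b, hb⟩))))

theorem exists_coloring_bergeColorNumber (hG : G.edgeSet.Nontrivial) (n : ℕ) :
    ∃ c : Finset (Fin n) → Fin (bergeColorNumber G n),
      ∀ i, ¬ BergeIn G {s : Finset (Fin n) | c s = i} :=
  Nat.sInf_mem (s := {m | ∃ c : Finset (Fin n) → Fin m, ∀ i, ¬ BergeIn G {s | c s = i}})
    ⟨_, Fintype.equivFin _, fun _ => not_bergeIn_of_subsingleton hG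
    fun _ hs _ ht => (Fintype.equivFin _).injective (hs.trans ht.symm)⟩

section Incident

variable [Fintype V] [DecidableEq V] [DecidableRel G.Adj] [Fintype α] [DecidableEq α]

def incidentInter (ψ : G.edgeSet → Finset α) (v : V) : Finset α :=
  {x | ∀ e : G.edgeSet, v ∈ (e : Sym2 V) → x ∈ ψ e}

theorem card_incident_le_degree (v : V) :
    #{e : G.edgeSet | v ∈ (e : Sym2 V)} ≤ G.degree v := by
  rw [← card_incidenceFinset_eq_degree, ← card_map (Function.Embedding.subtype _)]
  refine card_le_card fun x hx => ?_
  obtain ⟨e, he, rfl⟩ := mem_map.mp hx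
  exact (mem_incidenceFinset _ _ _).mpr ⟨e.2, (mem_filter.mp he).2⟩

theorem card_compl_incidentInter_le (ψ : G.edgeSet → Finset α) (v : V) (d : ℕ)
    (hψ : ∀ e, #(ψ e)ᶜ ≤ d) : #(incidentInter ψ v)ᶜ ≤ G.degree v * d := by
  have hsub : (incidentInter ψ v)ᶜ ⊆
      ({e : G.edgeSet | v ∈ (e : Sym2 V)} : Finset _).biUnion fun e => (ψ e)ᶜ := by
    intro x hx
    simp only [incidentInter, mem_compl, mem_filter, mem_univ, true_and, not_forall] at hx
    obtain ⟨e, hve, hxe⟩ := hx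
    exact mem_biUnion.mpr ⟨e, mem_filter.mpr ⟨mem_univ e, hve⟩, mem_compl.mpr hxe⟩
  calc #(incidentInter ψ v)ᶜ ≤ #{e : G.edgeSet | v ∈ (e : Sym2 V)} * d :=
        (card_le_card hsub).trans (card_biUnion_le_card_mul _ _ d fun e _ => hψ e)
    _ ≤ G.degree v * d := Nat.mul_le_mul_right d (card_incident_le_degree v)

theorem card_le_card_incidentInter (hdeg : ∀ v, G.degree v ≤ 2)
    (hV : Fintype.card V ≤ Fintype.card α) (ψ : G.edgeSet → Finset α)
    (hψ : ∀ e, Fintype.card α + Fintype.card V ≤ 2 * #(ψ e)) (v : V) :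
    Fintype.card V ≤ #(incidentInter ψ v) := by
  set d := (Fintype.card α - Fintype.card V) / 2
  have hψc : ∀ e, #(ψ e)ᶜ ≤ d := fun e => by
    have := hψ e
    rw [card_compl]
    omega
  have hcompl := (card_compl_incidentInter_le ψ v d hψc).trans (Nat.mul_le_mul_right d (hdeg v))
  have := card_le_univ (incidentInter ψ v)
  rw [card_compl] at hcompl
  omega

theorem bergeIn_of_card_edgeFinset_le (hdeg : ∀ v, G.degree v ≤ 2) (hE : 0 < #G.edgeFinset)
    {A : Set (Finset α)} {T : Finset (Finset α)} (hTA : ∀ s ∈ T, s ∈ A)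
    (hT : ∀ s ∈ T, Fintype.card α + Fintype.card V ≤ 2 * #s) (hcard : #G.edgeFinset ≤ #T) :
    BergeIn G A := by
  have hV : Fintype.card V ≤ Fintype.card α := by
    obtain ⟨s, hs⟩ := card_pos.mp (hE.trans_le hcard)
    have := hT s hs
    have := card_le_univ s
    omega
  obtain ⟨ψ⟩ := Function.Embedding.nonempty_of_card_le
    (α := G.edgeSet) (β := T) (by rwa [Fintype.card_coe, card_edgeSet])
  obtain ⟨φ, hφ, hφψ⟩ := exists_injective_forall_mem_of_card_le _
    (card_le_card_incidentInter hdeg hV (fun e => ψ e) fun e => hT _ (ψ e).2)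
  refine ⟨φ, hφ, fun e => ψ e, fun a b h => ψ.injective (Subtype.ext h),
    fun e => hTA _ (ψ e).2, fun e x hx => ?_⟩
  exact (mem_filter.mp (hφψ x)).2 e hx

end Incident

theorem bergeColorNumber_lower_bound_general {V : Type} [Fintype V]
    (G : SimpleGraph V) [DecidableRel G.Adj]
    (hdeg : ∀ u : V, G.degree u ≤ 2) (hE : 2 ≤ G.edgeFinset.card)
    (n : ℕ) :
    ((Finset.univ.filter
        fun A : Finset (Fin n) => n + Fintype.card V ≤ 2 * A.card).card : ℝ)
        / ((G.edgeFinset.card : ℝ) - 1)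
      ≤ (bergeColorNumber G n : ℝ) := by
  classical
  set S := univ.filter fun A : Finset (Fin n) => n + Fintype.card V ≤ 2 * A.card
  have hG : G.edgeSet.Nontrivial := by
    rw [← coe_edgeFinset]; exact one_lt_card_iff_nontrivial.mp hE
  obtain ⟨c, hc⟩ := exists_coloring_bergeColorNumber hG n
  have hfiber : ∀ i ∈ univ, #{A ∈ S | c A = i} ≤ #G.edgeFinset - 1 := fun i _ =>
    Nat.le_sub_one_of_lt <| lt_of_not_ge fun h => hc i <|
      bergeIn_of_card_edgeFinset_le hdeg (by omega) (fun s hs => (mem_filter.mp hs).2)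
        (fun s hs => by simpa using (mem_filter.mp (mem_filter.mp hs).1).2) h
  have hcount := card_le_mul_card_image_of_maps_to (fun A _ => mem_univ (c A)) _ hfiber
  rw [card_univ, Fintype.card_fin] at hcount
  have hE' : (1 : ℝ) < #G.edgeFinset := by exact_mod_cast hE
  rw [div_le_iff₀ (sub_pos.mpr hE'), mul_comm]
  calc (#S : ℝ) ≤ ((#G.edgeFinset - 1) * bergeColorNumber G n : ℕ) := by exact_mod_cast hcount
    _ = _ := by push_cast [Nat.cast_sub (by omega : 1 ≤ #G.edgeFinset)]; rfl

/-- If `G` has maximum degree at most `2` and at least two edges, and `n ≥ |V(G)|`, then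
`f(n, 𝓑(G)) ≥ N / (|E(G)| - 1)` where `N` is the number of subsets `A` of an `n`-set with
`2|A| ≥ n + |V(G)|`. -/
theorem bergeColorNumber_lower_bound {V : Type} [Fintype V] [DecidableEq V]
    (G : SimpleGraph V) [DecidableRel G.Adj]
    (hdeg : ∀ u : V, G.degree u ≤ 2) (hE : 2 ≤ G.edgeFinset.card)
    (n : ℕ) (hn : Fintype.card V ≤ n) :
    ((Finset.univ.filter
        fun A : Finset (Fin n) => n + Fintype.card V ≤ 2 * A.card).card : ℝ)
        / ((G.edgeFinset.card : ℝ) - 1)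
      ≤ (bergeColorNumber G n : ℝ) :=
  bergeColorNumber_lower_bound_general G hdeg hE n
end

section
/- For every integer n ≥ 3, f(n, B(2K_2)) = 2^n − n(n−1)/2 − n − 1, where 2K_2 is the graph consisting of two vertex-disjoint edges. -/
open SimpleGraph

/-- `2K₂`: two vertex-disjoint edges. -/
def twoK2 : SimpleGraph (Fin 4) := SimpleGraph.fromEdgeSet {s(0, 1), s(2, 3)}

/-! Two distinct members of a family form a Berge-`2K₂` exactly when they contain disjoint
pairs, and two distinct sets of size at least three always do. Hence a colouring without a
monochromatic Berge-`2K₂` is injective on the sets of size at least three, which gives the lower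
bound. Conversely, colour each set `s` by a superset `K` of size at least three (`s` itself if it is
that large, a `3`-set otherwise). Disjoint pairs inside two sets of colour `K` force `#K ≥ 4`, so
both sets are large, and hence both equal `K`. -/

open Finset

theorem twoK2_edge_cases (e : twoK2.edgeSet) :
    (e : Sym2 (Fin 4)) = s(0, 1) ∨ (e : Sym2 (Fin 4)) = s(2, 3) := by
  have he := e.2
  simp only [twoK2, edgeSet_fromEdgeSet] at he
  simpa using he.1

theorem bergeIn_twoK2_iff {α : Type} {𝒜 : Set (Finset α)} :
    BergeIn twoK2 𝒜 ↔ ∃ A ∈ 𝒜, ∃ B ∈ 𝒜, A ≠ B ∧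
      ∃ P ⊆ A, ∃ Q ⊆ B, #P = 2 ∧ #Q = 2 ∧ Disjoint P Q := by
  classical
  constructor
  · rintro ⟨φ, hφ, ψ, hψ, hψ𝒜, hφψ⟩
    have h₀₁ : s(0, 1) ∈ twoK2.edgeSet := by simp [twoK2]
    have h₂₃ : s(2, 3) ∈ twoK2.edgeSet := by simp [twoK2]
    refine ⟨_, hψ𝒜 ⟨_, h₀₁⟩, _, hψ𝒜 ⟨_, h₂₃⟩, fun h => by simpa using hψ h,
      {φ 0, φ 1}, ?_, {φ 2, φ 3}, ?_, ?_, ?_, ?_⟩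
    · simp [insert_subset_iff, hφψ ⟨_, h₀₁⟩]
    · simp [insert_subset_iff, hφψ ⟨_, h₂₃⟩]
    · simp [hφ.ne]
    · simp [hφ.ne]
    · simp [hφ.ne]
  · rintro ⟨A, hA, B, hB, hAB, P, hPA, Q, hQB, hP, hQ, hPQ⟩
    obtain ⟨a, b, hab, rfl⟩ := card_eq_two.1 hP
    obtain ⟨c, d, hcd, rfl⟩ := card_eq_two.1 hQ
    simp only [disjoint_insert_left, disjoint_insert_right, disjoint_singleton, mem_insert,
      mem_singleton, not_or] at hPQ
    simp only [insert_subset_iff, singleton_subset_iff] at hPA hQB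
    refine ⟨![a, b, c, d], ?_, fun e => if (0 : Fin 4) ∈ (e : Sym2 (Fin 4)) then A else B,
      ?_, ?_, ?_⟩
    · intro x y hxy
      fin_cases x <;> fin_cases y <;> simp_all [eq_comm]
    · intro e₁ e₂ h
      rcases twoK2_edge_cases e₁ with h₁ | h₁ <;> rcases twoK2_edge_cases e₂ with h₂ | h₂ <;>
        simp_all [Subtype.ext_iff]
    · intro e; dsimp only; split <;> assumption
    · intro e x hx
      rcases twoK2_edge_cases e with h | h <;> rw [h] at hx <;>
        rcases Sym2.mem_iff.1 hx with rfl | rfl <;> simp_all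

theorem exists_disjoint_pairs_of_not_subset {α : Type} [DecidableEq α] {A B : Finset α}
    (hA : 3 ≤ #A) (hB : 2 ≤ #B) (hBA : ¬B ⊆ A) :
    ∃ P ⊆ A, ∃ Q ⊆ B, #P = 2 ∧ #Q = 2 ∧ Disjoint P Q := by
  obtain ⟨c, hcB, hcA⟩ := not_subset.1 hBA
  obtain ⟨d, hdB, hdc⟩ := exists_mem_ne hB c
  obtain ⟨P, hPA, hP⟩ := exists_subset_card_eq (s := A.erase d) (n := 2)
    (by have := pred_card_le_card_erase (s := A) (a := d); omega)
  refine ⟨P, hPA.trans (erase_subset d A), {c, d}, by simp [insert_subset_iff, hcB, hdB], hP,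
    card_pair hdc.symm, ?_⟩
  simp only [disjoint_insert_right, disjoint_singleton_right]
  exact ⟨fun hc => hcA (mem_of_mem_erase (hPA hc)), fun hd => by simpa using hPA hd⟩

theorem injOn_three_le_card_of_not_bergeIn {α ι : Type} (c : Finset α → ι)
    (hc : ∀ i, ¬BergeIn twoK2 {s | c s = i}) : Set.InjOn c {s | 3 ≤ #s} := by
  classical
  intro A (hA : 3 ≤ #A) B (hB : 3 ≤ #B) hAB
  by_contra hne
  refine hc (c A) (bergeIn_twoK2_iff.2 ⟨A, rfl, B, hAB.symm, hne, ?_⟩)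
  by_cases hBA : B ⊆ A
  · obtain ⟨Q, hQB, P, hPA, hQ, hP, hQP⟩ := exists_disjoint_pairs_of_not_subset hB
      (by omega) fun hAB' => hne (subset_antisymm hAB' hBA)
    exact ⟨P, hPA, Q, hQB, hP, hQ, hQP.symm⟩
  · exact exists_disjoint_pairs_of_not_subset hA (by omega) hBA

section Padding

variable {α : Type} [Fintype α]

theorem exists_superset_card_eq_three (hα : 3 ≤ Fintype.card α) (s : Finset α) (hs : #s < 3) :
    ∃ t, s ⊆ t ∧ #t = 3 := by
  obtain ⟨t, hst, -, ht⟩ := exists_subsuperset_card_eq (subset_univ s) hs.le (by simpa using hα)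
  exact ⟨t, hst, ht⟩

noncomputable def padToThree (hα : 3 ≤ Fintype.card α) (s : Finset α) : Finset α :=
  if h : 3 ≤ #s then s else (exists_superset_card_eq_three hα s (not_le.1 h)).choose

variable (hα : 3 ≤ Fintype.card α) {s : Finset α}

theorem subset_padToThree : s ⊆ padToThree hα s := by
  unfold padToThree
  split_ifs with h
  · exact subset_rfl
  · exact (exists_superset_card_eq_three hα s (not_le.1 h)).choose_spec.1

theorem three_le_card_padToThree : 3 ≤ #(padToThree hα s) := by
  unfold padToThree
  split_ifs with h
  · exact h
  · exact (exists_superset_card_eq_three hα s (not_le.1 h)).choose_spec.2.ge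

theorem padToThree_eq_self_of_four_le_card (h : 4 ≤ #(padToThree hα s)) :
    padToThree hα s = s := by
  unfold padToThree at h ⊢
  split_ifs with hs
  · rfl
  · rw [dif_neg hs, (exists_superset_card_eq_three hα s (not_le.1 hs)).choose_spec.2] at h
    omega

theorem not_bergeIn_fiber_padToThree (K : Finset α) :
    ¬BergeIn twoK2 {s | padToThree hα s = K} := by
  classical
  rw [bergeIn_twoK2_iff]
  rintro ⟨A, rfl, B, hB, hne, P, hPA, Q, hQB, hP, hQ, hPQ⟩
  have hPQK : P ∪ Q ⊆ padToThree hα A :=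
    union_subset (hPA.trans (subset_padToThree hα)) (hB ▸ hQB.trans (subset_padToThree hα))
  have hK : 4 ≤ #(padToThree hα A) := by
    simpa [card_union_of_disjoint hPQ, hP, hQ] using card_le_card hPQK
  have hA := padToThree_eq_self_of_four_le_card hα hK
  rw [← hB] at hK
  exact hne (hA.symm.trans (hB.symm.trans (padToThree_eq_self_of_four_le_card hα hK)))

end Padding

theorem card_filter_three_le_card (α : Type) [Fintype α] :
    #{s : Finset α | 3 ≤ #s} =
      2 ^ Fintype.card α - (Fintype.card α).choose 2 - Fintype.card α - 1 := by
  classical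
  have hsmall : #{s : Finset α | #s < 3} = ∑ j ∈ range 3, (Fintype.card α).choose j := by
    rw [card_eq_sum_card_fiberwise (f := card) (t := range 3) fun s hs => by simpa using hs]
    refine sum_congr rfl fun j hj => ?_
    rw [filter_filter, filter_congr fun s _ => and_iff_right_of_imp fun h => h ▸ mem_range.1 hj,
      univ_filter_card_eq, card_powersetCard, card_univ]
  have hsplit := card_filter_add_card_filter_not (s := (univ : Finset (Finset α))) (#· < 3)
  simp only [hsmall, not_lt, card_univ, Fintype.card_finset, sum_range_succ, range_zero,
    sum_empty, Nat.choose_zero_right, Nat.choose_one_right] at hsplit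
  omega

theorem card_filter_three_le_card_le_of_not_bergeIn {α ι : Type} [Fintype α] [Fintype ι]
    (c : Finset α → ι) (hc : ∀ i, ¬BergeIn twoK2 {s | c s = i}) :
    #{s : Finset α | 3 ≤ #s} ≤ Fintype.card ι :=
  card_le_card_of_injOn c (fun _ _ => mem_univ _) <| by
    simpa using injOn_three_le_card_of_not_bergeIn c hc

theorem exists_coloring_not_bergeIn_twoK2 {α : Type} [Fintype α] (hα : 3 ≤ Fintype.card α) :
    ∃ c : Finset α → Fin #{s : Finset α | 3 ≤ #s}, ∀ i, ¬BergeIn twoK2 {s | c s = i} := by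
  let e := equivFin {s : Finset α | 3 ≤ #s}
  refine ⟨fun s => e ⟨padToThree hα s, by simpa using three_le_card_padToThree hα⟩, fun i => ?_⟩
  simpa [← e.eq_symm_apply, Subtype.ext_iff] using
    not_bergeIn_fiber_padToThree hα (e.symm i : Finset α)

/-- For every `n ≥ 3`, `f(n, 𝓑(2K₂)) = 2^n - n(n-1)/2 - n - 1`. -/
theorem bergeColorNumber_twoK2 (n : ℕ) (hn : 3 ≤ n) :
    bergeColorNumber twoK2 n = 2 ^ n - n * (n - 1) / 2 - n - 1 := by
  have hcard : #{s : Finset (Fin n) | 3 ≤ #s} = 2 ^ n - n * (n - 1) / 2 - n - 1 := by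
    rw [card_filter_three_le_card, Fintype.card_fin, Nat.choose_two_right]
  have hupper := exists_coloring_not_bergeIn_twoK2 (α := Fin n) (by simpa using hn)
  rw [bergeColorNumber, ← hcard]
  refine le_antisymm (Nat.sInf_le hupper) (le_csInf ⟨_, hupper⟩ ?_)
  rintro m ⟨c, hc⟩
  simpa using card_filter_three_le_card_le_of_not_bergeIn c hc
end

section
/- For every integer n ≥ 2 there exists a coloring of the 3-element subsets of {1, …, n} with at most 2⌈log₂ n⌉² colors such that every color class is 3-partite, i.e., for each color there is a partition of {1, …, n} into three parts such that every 3-set of that color has exactly one element in each part. In particular, no color class contains a Berge-K_4, and consequently R_3(B(K_4), k) > 2^{⌊√(k/2)⌋} for every integer k ≥ 2. -/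
open SimpleGraph

/-- The complete graph `K₄`. -/
def K4 : SimpleGraph (Fin 4) := ⊤


/-!
Identify the vertices with binary codes of length `m`. For three distinct codes some coordinate
`i` takes one value on exactly one of them and the other value on the other two, and some
coordinate `j` separates those two; colouring the triple by `(that value, i, j)` uses `2m²`
colours, and the triple then has one element in each part of the tripartition determined by
its colour. A Berge-`K₄` in a 3-partite family would map the four vertices injectively into
the three parts, so no colour class contains one; with `m = ⌊√(k/2)⌋` this bounds
`R₃(𝓑(K₄), k)` from below. Since `R₃(𝓑(K₄), k)` is an infimum, some `n` with the Ramsey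
property is also needed: colouring the pairs `{x, y}` by the colour of `{apex, x, y}`, the
classical greedy argument gives a sequence in which the colour of a pair depends only on its
first element, and four elements with the same such colour span a monochromatic Berge-`K₄`.
-/

open Finset

section Tripartite

variable {α β : Type*}

lemma card_filter_eq_one_of_injOn [Fintype β] [DecidableEq β] {P : α → β} {s : Finset α}
    (hs : #s = Fintype.card β) (hP : Set.InjOn P s) (j : β) :
    #(s.filter fun x => P x = j) = 1 := by
  have himage : s.image P = univ := eq_univ_of_card _ (by rw [card_image_of_injOn hP, hs])
  obtain ⟨x, hx, rfl⟩ := mem_image.1 (himage ▸ mem_univ j)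
  refine card_eq_one.2 ⟨x, ?_⟩
  ext y
  simp only [mem_filter, mem_singleton]
  exact ⟨fun ⟨hy, hPy⟩ => hP hy hx hPy, by rintro rfl; exact ⟨hx, rfl⟩⟩

lemma injOn_triple_of_ne {P : α → β} {x y z : α} (hxy : P x ≠ P y) (hxz : P x ≠ P z)
    (hyz : P y ≠ P z) : Set.InjOn P {x, y, z} := by
  rintro a (rfl | rfl | rfl) b (rfl | rfl | rfl) h <;> simp_all [eq_comm]

theorem not_bergeIn_top_of_injOn {V α β : Type} [Fintype V] [Fintype β]
    (hcard : Fintype.card β < Fintype.card V) (P : α → β) {A : Set (Finset α)}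
    (hA : ∀ s ∈ A, Set.InjOn P s) : ¬ BergeIn (⊤ : SimpleGraph V) A := by
  rintro ⟨φ, hφ, ψ, -, hψA, hcover⟩
  have hinj : Function.Injective (P ∘ φ) := by
    intro x y hxy
    by_contra hne
    let e : (⊤ : SimpleGraph V).edgeSet := ⟨s(x, y), by simpa using hne⟩
    exact hne (hφ (hA _ (hψA e) (hcover e x (Sym2.mem_mk_left x y))
      (hcover e y (Sym2.mem_mk_right x y)) hxy))
  exact (Fintype.card_le_of_injective _ hinj).not_gt hcard

def IsTripartiteColoring {C : Type*} (c : Finset α → C) : Prop :=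
  ∀ i, ∃ P : α → Fin 3, ∀ s : Finset α, #s = 3 → c s = i → Set.InjOn P s

lemma IsTripartiteColoring.comp_injective {C D : Type*} {c : Finset α → C}
    (hc : IsTripartiteColoring c) {f : C → D} (hf : Function.Injective f) :
    IsTripartiteColoring (f ∘ c) := by
  intro i
  by_cases hi : ∃ κ, f κ = i
  · obtain ⟨κ, rfl⟩ := hi
    obtain ⟨P, hP⟩ := hc κ
    exact ⟨P, fun s hs hcs => hP s hs (hf hcs)⟩
  · exact ⟨fun _ => 0, fun s _ hcs => (hi ⟨c s, hcs⟩).elim⟩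

lemma IsTripartiteColoring.not_bergeIn_K4 {α C : Type} {c : Finset α → C}
    (hc : IsTripartiteColoring c) (i : C) : ¬ BergeIn K4 {s | #s = 3 ∧ c s = i} := by
  obtain ⟨P, hP⟩ := hc i
  exact not_bergeIn_top_of_injOn (by simp) P fun s hs => hP s hs.1 hs.2

end Tripartite

section BinaryCodes

variable {ι : Type*}

def bitPart (κ : Fin 2 × ι × ι) (v : ι → Fin 2) : Fin 3 :=
  if v κ.2.1 = κ.1 then 0 else if v κ.2.2 = 0 then 1 else 2

lemma bitPart_pairwise_ne {u v w : ι → Fin 2} {i j : ι} (hv : v i ≠ u i) (hw : w i ≠ u i)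
    (hvw : v j ≠ w j) :
    bitPart (u i, i, j) u ≠ bitPart (u i, i, j) v ∧ bitPart (u i, i, j) u ≠ bitPart (u i, i, j) w ∧
      bitPart (u i, i, j) v ≠ bitPart (u i, i, j) w := by
  simp only [bitPart, hv, hw, if_true, if_false]
  refine ⟨by split <;> decide, by split <;> decide, ?_⟩
  split <;> split <;> first | decide | omega

lemma exists_bitPart_pairwise_ne {x y z : ι → Fin 2} (hxy : x ≠ y) (hxz : x ≠ z) (hyz : y ≠ z) :
    ∃ κ, bitPart κ x ≠ bitPart κ y ∧ bitPart κ x ≠ bitPart κ z ∧ bitPart κ y ≠ bitPart κ z := by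
  obtain ⟨i, hi⟩ := Function.ne_iff.1 hxy
  by_cases hzi : z i = x i
  · obtain ⟨j, hj⟩ := Function.ne_iff.1 hxz
    obtain ⟨h₁, h₂, h₃⟩ := bitPart_pairwise_ne (u := y) (j := j) hi (by rwa [hzi]) hj
    exact ⟨_, h₁.symm, h₃, h₂⟩
  · obtain ⟨j, hj⟩ := Function.ne_iff.1 hyz
    exact ⟨_, bitPart_pairwise_ne (Ne.symm hi) hzi hj⟩

theorem exists_isTripartiteColoring_of_injective {α : Type*} [Nonempty ι] {code : α → ι → Fin 2}
    (hcode : Function.Injective code) :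
    ∃ c : Finset α → Fin 2 × ι × ι, IsTripartiteColoring c := by
  classical
  have h : ∀ s : Finset α, ∃ κ : Fin 2 × ι × ι, #s = 3 → Set.InjOn (bitPart κ ∘ code) s := by
    intro s
    by_cases hs : #s = 3
    · obtain ⟨x, y, z, hxy, hxz, hyz, rfl⟩ := card_eq_three.1 hs
      obtain ⟨κ, h₁, h₂, h₃⟩ :=
        exists_bitPart_pairwise_ne (hcode.ne hxy) (hcode.ne hxz) (hcode.ne hyz)
      exact ⟨κ, fun _ => by simpa using injOn_triple_of_ne (P := bitPart κ ∘ code) h₁ h₂ h₃⟩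
    · exact ⟨Classical.arbitrary _, fun h => (hs h).elim⟩
  choose c hc using h
  exact ⟨c, fun κ => ⟨bitPart κ ∘ code, fun s hs hcs => hcs ▸ hc s hs⟩⟩

theorem exists_isTripartiteColoring_fin {n m : ℕ} (hm : 0 < m) (hn : n ≤ 2 ^ m) :
    ∃ c : Finset (Fin n) → Fin (2 * m ^ 2), IsTripartiteColoring c := by
  have : NeZero m := ⟨hm.ne'⟩
  obtain ⟨c, hc⟩ := exists_isTripartiteColoring_of_injective
    (finFunctionFinEquiv.symm.injective.comp (Fin.castLE_injective hn))
  let e : Fin 2 × Fin m × Fin m ≃ Fin (2 * m ^ 2) := Fintype.equivFinOfCardEq (by simp [sq])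
  exact ⟨e ∘ c, hc.comp_injective e.injective⟩

end BinaryCodes

section Ramsey

variable {α C : Type*} [DecidableEq α] [Fintype C] [DecidableEq C] [Nonempty C]

lemma exists_le_card_filter_pair_eq (c : Finset α → C) {S : Finset α} {N : ℕ} {v : α}
    (hv : v ∈ S) (hS : (Fintype.card C + 1) * N ≤ #S) (hN : 0 < N) :
    ∃ d, N ≤ #((S.erase v).filter fun x => c {v, x} = d) := by
  obtain ⟨d, -, hd⟩ := exists_le_card_fiber_of_mul_le_card_of_maps_to
    (f := fun x => c {v, x}) (s := S.erase v) (n := N) (fun _ _ => mem_univ _) univ_nonempty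
    (by rw [card_univ, card_erase_of_mem hv]; rw [add_one_mul] at hS; omega)
  exact ⟨d, hd⟩

theorem exists_seq_pair_eq_left (c : Finset α → C) (t : ℕ) {S : Finset α}
    (hS : (Fintype.card C + 1) ^ t ≤ #S) :
    ∃ (v : Fin t → α) (d : Fin t → C), Function.Injective v ∧ (∀ i, v i ∈ S) ∧
      ∀ i j, i < j → c {v i, v j} = d i := by
  induction t generalizing S with
  | zero => exact ⟨finZeroElim, finZeroElim, Function.injective_of_subsingleton _,
      finZeroElim, finZeroElim⟩
  | succ t ih =>
    obtain ⟨v₀, hv₀⟩ := card_pos.1 (lt_of_lt_of_le (by positivity) hS)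
    obtain ⟨d₀, hd₀⟩ := exists_le_card_filter_pair_eq c hv₀ (by rwa [← pow_succ']) (by positivity)
    obtain ⟨v, d, hv, hvS, hvd⟩ := ih hd₀
    simp only [mem_filter, mem_erase] at hvS
    refine ⟨Fin.cons v₀ v, Fin.cons d₀ d, Fin.cons_injective_iff.2 ⟨?_, hv⟩, ?_, ?_⟩
    · rintro ⟨i, hi⟩
      exact (hvS i).1.1 hi
    · simp [Fin.forall_fin_succ, hv₀, hvS]
    · simpa [Fin.forall_fin_succ, hvS] using hvd

end Ramsey

theorem bergeIn_of_star {V α : Type} [DecidableEq α] {G : SimpleGraph V} {A : Set (Finset α)}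
    {w : V → α} (hw : Function.Injective w) {L : α} (hL : ∀ x, w x ≠ L)
    (hA : ∀ x y, G.Adj x y → insert L {w x, w y} ∈ A) : BergeIn G A := by
  have hmem : ∀ (e : Sym2 V) x, w x ∈ insert L (e.map w).toFinset ↔ x ∈ e := by
    intro e x
    simp [hL x, Sym2.mem_map, hw.eq_iff]
  refine ⟨w, hw, fun e => insert L ((e : Sym2 V).map w).toFinset, ?_, ?_,
    fun e x hx => (hmem e x).2 hx⟩
  · intro e e' (he : insert L _ = insert L _)
    exact Subtype.ext (Sym2.ext fun x => by rw [← hmem, ← hmem, he])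
  · rintro ⟨e, he⟩
    induction e using Sym2.ind with
    | _ x y => simpa [Sym2.toFinset_mk_eq] using hA x y he

theorem bergeRamseyProp_K4_three {k : ℕ} (hk : 0 < k) :
    BergeRamseyProp K4 3 k ((k + 1) ^ (3 * k + 1) + 1) := by
  intro c
  have : Nonempty (Fin k) := ⟨⟨0, hk⟩⟩
  obtain ⟨v, d, hv, hvS, hvd⟩ := exists_seq_pair_eq_left (fun p => c (insert (Fin.last _) p))
    (3 * k + 1) (S := univ.erase (Fin.last _)) (by simp)
  obtain ⟨i, hi⟩ := Fintype.exists_lt_card_fiber_of_mul_lt_card (f := d) (n := 3) (by simp; omega)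
  obtain ⟨F, hFi, hF⟩ := exists_subset_card_eq hi
  let a := F.orderEmbOfFin hF
  have hda : ∀ x, d (a x) = i := fun x => (mem_filter.1 (hFi (F.orderEmbOfFin_mem hF x))).2
  have hL : ∀ x, v (a x) ≠ Fin.last _ := fun x => ne_of_mem_erase (hvS (a x))
  refine ⟨i, bergeIn_of_star (w := fun x => v (a x)) (hv.comp a.injective) hL
    fun x y (hxy : x ≠ y) => ?_⟩
  refine ⟨?_, ?_⟩
  · rw [card_insert_of_notMem (by simp [(hL x).symm, (hL y).symm]),
      card_pair (hv.ne (a.injective.ne hxy))]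
  · rcases hxy.lt_or_gt with h | h
    · exact (hvd _ _ (a.strictMono h)).trans (hda x)
    · rw [pair_comm]
      exact (hvd _ _ (a.strictMono h)).trans (hda y)

theorem not_bergeRamseyProp_K4_three {n m k : ℕ} (hm : 0 < m) (hn : n ≤ 2 ^ m)
    (hk : 2 * m ^ 2 ≤ k) : ¬ BergeRamseyProp K4 3 k n := by
  intro h
  obtain ⟨c, hc⟩ := exists_isTripartiteColoring_fin hm hn
  obtain ⟨i, hi⟩ := h (Fin.castLE hk ∘ c)
  exact (hc.comp_injective (Fin.castLE_injective hk)).not_bergeIn_K4 i hi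

theorem two_pow_lt_bergeRamsey_K4_three {m k : ℕ} (hm : 0 < m) (hk : 2 * m ^ 2 ≤ k) :
    2 ^ m < bergeRamsey K4 3 k := by
  have hk₀ : 0 < k := lt_of_lt_of_le (by positivity) hk
  have hne : {n | BergeRamseyProp K4 3 k n}.Nonempty := ⟨_, bergeRamseyProp_K4_three hk₀⟩
  by_contra! hle
  exact not_bergeRamseyProp_K4_three hm hle hk (Nat.sInf_mem hne)

/-- For every `n ≥ 2` there is a coloring of the 3-element subsets of an `n`-set with at most
`2⌈log₂ n⌉²` colors in which every color class is 3-partite (every 3-set of a color has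
exactly one element in each part of a tripartition associated to the color); in particular no
color class contains a Berge-`K₄`. Consequently, `R₃(𝓑(K₄), k) > 2^⌊√(k/2)⌋` for all `k ≥ 2`. -/
theorem tripartite_coloring_and_K4_lower_bound :
    (∀ n : ℕ, 2 ≤ n →
      ∃ c : Finset (Fin n) → Fin (2 * Nat.clog 2 n ^ 2),
        (∀ i, ∃ P : Fin n → Fin 3, ∀ s : Finset (Fin n), s.card = 3 → c s = i →
          ∀ j : Fin 3, (s.filter fun x => P x = j).card = 1) ∧
        (∀ i, ¬ BergeIn K4 {s : Finset (Fin n) | s.card = 3 ∧ c s = i})) ∧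
    ∀ k : ℕ, 2 ≤ k → 2 ^ Nat.sqrt (k / 2) < bergeRamsey K4 3 k := by
  refine ⟨fun n hn => ?_, fun k hk => ?_⟩
  · obtain ⟨c, hc⟩ := exists_isTripartiteColoring_fin (Nat.clog_pos one_lt_two hn)
      (Nat.le_pow_clog one_lt_two n)
    refine ⟨c, fun i => ?_, hc.not_bergeIn_K4⟩
    obtain ⟨P, hP⟩ := hc i
    exact ⟨P, fun s hs hcs => card_filter_eq_one_of_injOn (by simpa using hs) (hP s hs hcs)⟩
  · refine two_pow_lt_bergeRamsey_K4_three (Nat.sqrt_pos.2 (by omega)) ?_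
    have := Nat.sqrt_le' (k / 2)
    omega
end

section
/- For every real ε with 0 < ε < 1/4 and every integer k ≥ 1, R(K_4^*, k) ≤ (1+ε)^k · k!/ε, where R(K_4^*, k) is the k-color Ramsey number of the family K_4^*. -/
open SimpleGraph

/-- `K₄` minus the edge `{2,3}` with a pendant edge `{2,4}` attached at the degree-2 vertex `2`. -/
def K4ePendant : SimpleGraph (Fin 5) :=
  SimpleGraph.fromEdgeSet {s(0, 1), s(0, 2), s(0, 3), s(1, 2), s(1, 3), s(2, 4)}

/-- A triangle `{0,1,2}` with pendant edges to new vertices `3`, `4`, `5`. -/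
def triPendants : SimpleGraph (Fin 6) :=
  SimpleGraph.fromEdgeSet {s(0, 1), s(1, 2), s(0, 2), s(0, 3), s(1, 4), s(2, 5)}

/-- The edge-coloring `c` of `K_n` contains a copy of the graph `F` all of whose edges have
color `i`. -/
def MonoCopy {W : Type} (F : SimpleGraph W) {n k : ℕ} (c : Sym2 (Fin n) → Fin k)
    (i : Fin k) : Prop :=
  ∃ f : W → Fin n, Function.Injective f ∧ ∀ x y : W, F.Adj x y → c s(f x, f y) = i

/-- Every `k`-coloring of the edges of `K_n` contains a monochromatic member of the family
`K₄* = {K₄, K4ePendant, triPendants}`. -/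
def K4starRamseyProp (k n : ℕ) : Prop :=
  ∀ c : Sym2 (Fin n) → Fin k, ∃ i : Fin k,
    MonoCopy K4 c i ∨ MonoCopy K4ePendant c i ∨ MonoCopy triPendants c i

/-- `R(K₄*, k)`. -/
noncomputable def K4starRamsey (k : ℕ) : ℕ := sInf {n | K4starRamseyProp k n}

/-
In a `K₄*`-free colouring every monochromatic triangle has a vertex, a key, whose only neighbours
of that colour are the other two vertices of the triangle: otherwise three pendant edges at the
triangle (distinct or not) complete a monochromatic member of `K₄*`.

Let the edges inside a vertex set `S` use only `m` colours, while every vertex of `S` has degree at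
most `2` in each of the other colours; we bound `|S|` by induction on `m`. For a colour `i` among
the `m`, one key per triangle of colour `i` gives an `i`-independent set of vertices of `i`-degree
at most `2`: a set of the same kind for `m - 1` colours, hence small. Deleting a vertex cover of
the edges opposite to these keys destroys every triangle of colour `i`, and a cover can be chosen
with at most as many vertices as there are keys and at most a third of `|S|`. Once all `m` colours
are triangle-free, the classical bound `R(3; m) ≤ ⌊e · m!⌋ + 1` applies. For `m = 1` a key would
have degree at most `2` in every colour, which is impossible once `n > 2k + 1`.

The recursion gives a bound `7k · k! / 3` for `k ≥ 5`, and `7kε ≤ 3(1 + ε)^k` follows from the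
binomial expansion up to the cubic term.
-/

open Finset

namespace K4Star

/-- The classical bound on vertex sets without monochromatic triangles in `m` colours; it equals
`⌊e · m!⌋` for `m ≥ 1`. -/
def triangleRamseyBound : ℕ → ℕ
  | 0 => 1
  | m + 1 => (m + 1) * triangleRamseyBound m + 1

/-- If at least `peelStep a u` vertices are present, at least `u` survive the deletion of
`min (a - 1) (⌊size / 3⌋)` of them. -/
def peelStep (a u : ℕ) : ℕ := u + min (a - 1) ((u + 1) / 2)

def k4StarBound : ℕ → ℕ
  | 0 => 2
  | 1 => 3
  | m + 2 => (peelStep (k4StarBound (m + 1)))^[m + 2] (triangleRamseyBound (m + 2) + 1)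

lemma le_iterate_peelStep (a t i : ℕ) : t ≤ (peelStep a)^[i] t := by
  induction i with
  | zero => rfl
  | succ i ih => rw [Function.iterate_succ_apply']; exact ih.trans (Nat.le_add_right _ _)

/-- The first two rounds are bounded through `(u + 1) / 2`, the others through `a - 1`. -/
lemma iterate_peelStep_le (a t i : ℕ) :
    4 * (peelStep a)^[i + 2] t ≤ 9 * t + 5 + 4 * (i * (a - 1)) := by
  induction i with
  | zero => simp only [Function.iterate_succ_apply', Function.iterate_zero_apply, peelStep]; omega
  | succ i ih =>
    rw [show i + 1 + 2 = (i + 2) + 1 by ring, Function.iterate_succ_apply', peelStep, add_mul]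
    omega

lemma two_mul_add_one_le_triangleRamseyBound {m : ℕ} (hm : 2 ≤ m) :
    2 * m + 1 ≤ triangleRamseyBound m := by
  induction m, hm using Nat.le_induction with
  | base => decide
  | succ m hm ih => rw [triangleRamseyBound]; nlinarith

lemma triangleRamseyBound_add_one_le {m : ℕ} (hm : 4 ≤ m) :
    4 * (triangleRamseyBound m + 1) ≤ 11 * m.factorial := by
  induction m, hm using Nat.le_induction with
  | base => decide
  | succ m hm ih => rw [triangleRamseyBound, Nat.factorial_succ]; nlinarith

lemma two_mul_add_two_le_k4StarBound {k : ℕ} (hk : 2 ≤ k) : 2 * k + 2 ≤ k4StarBound k := by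
  obtain ⟨m, rfl⟩ := Nat.exists_eq_add_of_le' hk
  have := two_mul_add_one_le_triangleRamseyBound (m := m + 2) (by omega)
  have := le_iterate_peelStep (k4StarBound (m + 1)) (triangleRamseyBound (m + 2) + 1) (m + 2)
  rw [k4StarBound]
  omega

lemma three_mul_k4StarBound_le {k : ℕ} (hk : 5 ≤ k) : 3 * k4StarBound k ≤ 7 * k * k.factorial := by
  induction k, hk using Nat.le_induction with
  | base => decide
  | succ k hk ih =>
    obtain ⟨m, rfl⟩ : ∃ m, k = m + 2 := ⟨k - 2, by omega⟩
    have hW := iterate_peelStep_le (k4StarBound (m + 2)) (triangleRamseyBound (m + 3) + 1) (m + 1)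
    have hT := triangleRamseyBound_add_one_le (m := m + 3) (by omega)
    have hq : 6 ≤ (m + 2).factorial := Nat.factorial_le (by omega : 3 ≤ m + 2)
    have hsub : (m + 1) * (k4StarBound (m + 2) - 1) ≤ (m + 1) * k4StarBound (m + 2) :=
      Nat.mul_le_mul_left _ (Nat.sub_le _ _)
    rw [show m + 2 + 1 = m + 3 by rfl, k4StarBound]
    rw [Nat.factorial_succ (m + 2)] at hT ⊢
    nlinarith

lemma cubic_binomial_le_one_add_pow {ε : ℝ} (hε : 0 ≤ ε) {k : ℕ} (hk : 2 ≤ k) :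
    6 + 6 * k * ε + 3 * k * (k - 1) * ε ^ 2 + k * (k - 1) * (k - 2) * ε ^ 3 ≤ 6 * (1 + ε) ^ k := by
  induction k, hk using Nat.le_induction with
  | base => norm_num; nlinarith
  | succ k hk ih =>
    have hk' : (2 : ℝ) ≤ k := by exact_mod_cast hk
    have h : 0 ≤ (k : ℝ) * (k - 1) * (k - 2) * ε ^ 4 := by
      have : 0 ≤ (k : ℝ) * (k - 1) * (k - 2) := by
        apply mul_nonneg (mul_nonneg _ _) _ <;> linarith
      positivity
    have := mul_le_mul_of_nonneg_right ih (by linarith : (0 : ℝ) ≤ 1 + ε)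
    push_cast
    rw [pow_succ (1 + ε) k]
    nlinarith

lemma seven_mul_le_three_mul_one_add_pow {ε : ℝ} (hε : 0 ≤ ε) {k : ℕ} (hk : 5 ≤ k) :
    7 * k * ε ≤ 3 * (1 + ε) ^ k := by
  have hbin := cubic_binomial_le_one_add_pow hε (by omega : 2 ≤ k)
  have hk' : (5 : ℝ) ≤ k := by exact_mod_cast hk
  have hx : 0 ≤ (k : ℝ) * ε := by positivity
  have hcubic : 24 * (k * ε) ≤ 18 + 36 / 5 * (k * ε) ^ 2 + 36 / 25 * (k * ε) ^ 3 := by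
    nlinarith [mul_nonneg hx (sq_nonneg (k * ε - 6 / 5)), sq_nonneg (k * ε - 6 / 5)]
  have h2 : 36 / 5 * (k * ε) ^ 2 ≤ 9 * k * (k - 1) * ε ^ 2 := by
    have : 36 / 5 * (k : ℝ) ^ 2 ≤ 9 * k * (k - 1) := by nlinarith
    nlinarith [sq_nonneg ε]
  have h3 : 36 / 25 * (k * ε) ^ 3 ≤ 3 * k * (k - 1) * (k - 2) * ε ^ 3 := by
    have : 36 / 25 * (k : ℝ) ^ 2 ≤ 3 * (k - 1) * (k - 2) := by nlinarith
    have : 0 ≤ k * ε ^ 3 := by positivity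
    nlinarith
  nlinarith

lemma k4StarBound_mul_le {ε : ℝ} (hε : 0 ≤ ε) (hε1 : ε < 1 / 4) {k : ℕ} (hk : 2 ≤ k) :
    (k4StarBound k : ℝ) * ε ≤ (1 + ε) ^ k * k.factorial := by
  obtain hk5 | hk5 := lt_or_ge k 5
  · interval_cases k
    · rw [show k4StarBound 2 = 10 by decide]
      norm_num
      nlinarith
    · rw [show k4StarBound 3 = 44 by decide]
      norm_num
      nlinarith [mul_nonneg (sub_nonneg.2 hε1.le) (by linarith : (0 : ℝ) ≤ 6 - 2 * ε),
        pow_nonneg hε 3, sq_nonneg ε]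
    · rw [show k4StarBound 4 = 228 by decide]
      norm_num
      nlinarith [mul_nonneg (sub_nonneg.2 hε1.le) (by linarith : (0 : ℝ) ≤ 24 - 36 * ε),
        pow_nonneg hε 3, pow_nonneg hε 4, sq_nonneg ε]
  · have hW : 3 * (k4StarBound k : ℝ) ≤ 7 * k * k.factorial := by
      exact_mod_cast three_mul_k4StarBound_le hk5
    have hpow := seven_mul_le_three_mul_one_add_pow hε hk5
    have hfac : (0 : ℝ) < k.factorial := by positivity
    nlinarith [mul_le_mul_of_nonneg_right hW hε, mul_le_mul_of_nonneg_right hpow hfac.le]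

section Cover

variable {α : Type*} [DecidableEq α]

lemma exists_vertex_removal (E : Finset (Finset α)) (hE : ∀ e ∈ E, #e = 2) (hne : E.Nonempty) :
    ∃ v, #{e ∈ E | v ∉ e} + 1 ≤ #E ∧
      #{e ∈ E | v ∉ e} + #({e ∈ E | v ∉ e}.biUnion id) + 3 ≤ #E + #(E.biUnion id) := by
  have hsplit : ∀ v, #{e ∈ E | v ∈ e} + #{e ∈ E | v ∉ e} = #E := fun v =>
    card_filter_add_card_filter_not _
  by_cases hdeg : ∃ v, 2 ≤ #{e ∈ E | v ∈ e}
  · obtain ⟨v, hv⟩ := hdeg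
    obtain ⟨e, he⟩ := card_pos.1 (show 0 < #{e ∈ E | v ∈ e} by omega)
    have hv_mem : v ∈ E.biUnion id := mem_biUnion.2 ⟨e, (mem_filter.1 he).1, (mem_filter.1 he).2⟩
    have hv_not : v ∉ {e ∈ E | v ∉ e}.biUnion id := by
      simp only [mem_biUnion, mem_filter, id]; tauto
    have hsub : {e ∈ E | v ∉ e}.biUnion id ⊆ E.biUnion id :=
      biUnion_subset_biUnion_of_subset_left _ (filter_subset _ _)
    have := card_lt_card ((ssubset_iff_of_subset hsub).2 ⟨v, hv_mem, hv_not⟩)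
    exact ⟨v, by have := hsplit v; omega, by have := hsplit v; omega⟩
  · -- `E` is a matching: removing any of its edges removes both endpoints
    push Not at hdeg
    obtain ⟨e, he⟩ := hne
    obtain ⟨v, hv⟩ := card_pos.1 (show 0 < #e by rw [hE e he]; omega)
    have hmatch : ∀ w ∈ e, ∀ f ∈ E, w ∈ f → f = e := by
      intro w hw f hf hwf
      by_contra hfe
      have : ({e, f} : Finset (Finset α)) ⊆ {g ∈ E | w ∈ g} := by
        intro g hg; simp only [mem_insert, mem_singleton] at hg
        rcases hg with rfl | rfl <;> simp [*]
      have := card_le_card this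
      rw [card_pair (Ne.symm hfe)] at this
      have := hdeg w; omega
    have hdisj : {e ∈ E | v ∉ e}.biUnion id ⊆ E.biUnion id \ e := by
      intro w hw
      obtain ⟨f, hf, hwf⟩ := mem_biUnion.1 hw
      obtain ⟨hfE, hvf⟩ := mem_filter.1 hf
      refine mem_sdiff.2 ⟨mem_biUnion.2 ⟨f, hfE, hwf⟩, fun hwe => hvf ?_⟩
      rw [hmatch w hwe f hfE hwf]; exact hv
    have he_sub : e ⊆ E.biUnion id := subset_biUnion_of_mem id he
    have h1 := card_le_card hdisj
    rw [card_sdiff_of_subset he_sub, hE e he] at h1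
    have h2 : 1 ≤ #{e ∈ E | v ∈ e} := card_pos.2 ⟨e, mem_filter.2 ⟨he, hv⟩⟩
    have h3 := hdeg v
    have h4 : 2 ≤ #(E.biUnion id) := hE e he ▸ card_le_card he_sub
    exact ⟨v, by have := hsplit v; omega, by have := hsplit v; omega⟩

theorem exists_cover_of_card_eq_two (E : Finset (Finset α)) (hE : ∀ e ∈ E, #e = 2) :
    ∃ C : Finset α, (∀ e ∈ E, ∃ v ∈ C, v ∈ e) ∧ #C ≤ #E ∧ 3 * #C ≤ #E + #(E.biUnion id) := by
  induction E using Finset.strongInduction with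
  | H E ih =>
  obtain rfl | hne := E.eq_empty_or_nonempty
  · exact ⟨∅, by simp⟩
  obtain ⟨v, h1, h2⟩ := exists_vertex_removal E hE hne
  obtain ⟨C, hC, hC1, hC2⟩ := ih {e ∈ E | v ∉ e} ((filter_subset _ _).ssubset_of_ne fun h => by
      rw [h] at h1; omega) (fun e he => hE e (mem_filter.1 he).1)
  refine ⟨insert v C, fun e he => ?_, ?_, ?_⟩
  · by_cases hv : v ∈ e
    · exact ⟨v, mem_insert_self _ _, hv⟩
    · obtain ⟨w, hw, hwe⟩ := hC e (mem_filter.2 ⟨he, hv⟩)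
      exact ⟨w, mem_insert_of_mem hw, hwe⟩
  · have := card_insert_le v C; omega
  · have := card_insert_le v C; omega

end Cover

section Keys

variable {V : Type*} [Fintype V] [LinearOrder V] {G : SimpleGraph V} [DecidableRel G.Adj]
  {S t : Finset V} {q : V}

def IsKey (G : SimpleGraph V) [DecidableRel G.Adj] (S : Finset V) (q : V) : Prop :=
  insert q (G.neighborFinset q) ⊆ S ∧ G.IsNClique 3 (insert q (G.neighborFinset q))

/-- Picks one key in every triangle that has one. -/
def IsMinKey (G : SimpleGraph V) [DecidableRel G.Adj] (S : Finset V) (q : V) : Prop :=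
  IsKey G S q ∧ ∀ q' ∈ G.neighborFinset q, IsKey G S q' → q < q'

lemma neighborFinset_eq_erase (ht : G.IsNClique 3 t) (hq : q ∈ t) (hdeg : G.degree q ≤ 2) :
    G.neighborFinset q = t.erase q := by
  refine (eq_of_subset_of_card_le (fun v hv => ?_) ?_).symm
  · rw [mem_neighborFinset]
    exact ht.isClique hq (mem_of_mem_erase hv) (ne_of_mem_erase hv).symm
  · rw [card_neighborFinset_eq_degree, card_erase_of_mem hq, ht.card_eq]; omega

lemma IsKey.card_neighborFinset (h : IsKey G S q) : #(G.neighborFinset q) = 2 := by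
  have := h.2.card_eq
  rw [card_insert_of_notMem (by simp)] at this
  omega

lemma IsKey.of_isNClique (ht : G.IsNClique 3 t) (htS : t ⊆ S) (hq : q ∈ t)
    (hdeg : G.degree q ≤ 2) : IsKey G S q := by
  rw [IsKey, neighborFinset_eq_erase ht hq hdeg, insert_erase hq]
  exact ⟨htS, ht⟩

lemma IsMinKey.not_adj {q q' : V} (h : IsMinKey G S q) (h' : IsMinKey G S q') : ¬G.Adj q q' :=
  fun hadj => (h.2 q' ((mem_neighborFinset ..).2 hadj) h'.1).not_gt
    (h'.2 q ((mem_neighborFinset ..).2 hadj.symm) h.1)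

lemma exists_isMinKey_of_isNClique (ht : G.IsNClique 3 t) (htS : t ⊆ S)
    (hkey : ∃ q ∈ t, G.degree q ≤ 2) : ∃ q ∈ t, IsMinKey G S q ∧ G.neighborFinset q ⊆ t := by
  classical
  have hne : {q ∈ t | IsKey G S q}.Nonempty := by
    obtain ⟨q, hq, hdeg⟩ := hkey
    exact ⟨q, mem_filter.2 ⟨hq, .of_isNClique ht htS hq hdeg⟩⟩
  set q := {q ∈ t | IsKey G S q}.min' hne
  obtain ⟨hqt, hq⟩ := mem_filter.1 (min'_mem _ hne)
  have hN : G.neighborFinset q = t.erase q :=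
    neighborFinset_eq_erase ht hqt hq.card_neighborFinset.le
  refine ⟨q, hqt, ⟨hq, fun q' hq' hkey' => ?_⟩, hN ▸ erase_subset _ _⟩
  rw [hN] at hq'
  exact lt_of_le_of_ne (min'_le _ _ (mem_filter.2 ⟨mem_of_mem_erase hq', hkey'⟩))
    (ne_of_mem_erase hq').symm

theorem exists_cliqueFreeOn_subset (S : Finset V) {A : ℕ}
    (hkey : ∀ t ⊆ S, G.IsNClique 3 t → ∃ q ∈ t, G.degree q ≤ 2)
    (hA : ∀ K ⊆ S, G.IsIndepSet K → (∀ q ∈ K, G.degree q ≤ 2) → #K < A) :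
    ∃ T ⊆ S, G.CliqueFreeOn T 3 ∧ #S ≤ #T + min (A - 1) (#S / 3) := by
  classical
  set K := {q ∈ S | IsMinKey G S q}
  set E := K.image fun q => G.neighborFinset q
  have hKmin : ∀ q ∈ K, IsMinKey G S q := fun q hq => (mem_filter.1 hq).2
  have hKA : #K < A := hA K (filter_subset _ _)
    (fun q hq q' hq' _ => (hKmin q hq).not_adj (hKmin q' hq'))
    (fun q hq => (hKmin q hq).1.card_neighborFinset.le)
  have hE : ∀ e ∈ E, #e = 2 := by
    simp only [E, mem_image]
    rintro _ ⟨q, hq, rfl⟩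
    exact (hKmin q hq).1.card_neighborFinset
  have hES : E.biUnion id ⊆ S := by
    simp only [E, biUnion_subset, mem_image]
    rintro _ ⟨q, hq, rfl⟩
    exact (subset_insert _ _).trans (hKmin q hq).1.1
  have hKE : Disjoint K (E.biUnion id) := by
    simp only [E, Finset.disjoint_left, mem_biUnion, mem_image, id]
    rintro v hv ⟨_, ⟨q, hq, rfl⟩, hvq⟩
    exact (hKmin q hq).not_adj (hKmin v hv) ((mem_neighborFinset ..).1 hvq)
  have hKES : #K + #(E.biUnion id) ≤ #S := by
    rw [← card_union_of_disjoint hKE]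
    exact card_le_card (union_subset (filter_subset _ _) hES)
  obtain ⟨C, hC, hCE, hCS⟩ := exists_cover_of_card_eq_two E hE
  refine ⟨S \ C, sdiff_subset, fun t htC ht => ?_, ?_⟩
  · -- the minimal key of `t` is opposite an edge of `t` that `C` meets
    have htC : t ⊆ S \ C := coe_subset.1 htC
    obtain ⟨q, hqt, hq, hNt⟩ :=
      exists_isMinKey_of_isNClique ht (htC.trans sdiff_subset) (hkey t (htC.trans sdiff_subset) ht)
    obtain ⟨v, hvC, hvq⟩ :=
      hC _ (mem_image_of_mem _ (mem_filter.2 ⟨hq.1.1 (mem_insert_self _ _), hq⟩))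
    exact (mem_sdiff.1 (htC (hNt hvq))).2 hvC
  · have := card_le_card_sdiff_add_card (s := S) (t := C)
    have : #E ≤ #K := card_image_le
    omega

end Keys

section ColorGraph

variable {V κ : Type*}

def colorGraph (c : Sym2 V → κ) (i : κ) : SimpleGraph V where
  Adj x y := x ≠ y ∧ c s(x, y) = i
  symm := ⟨fun _ _ h => ⟨h.1.symm, Sym2.eq_swap ▸ h.2⟩⟩
  loopless := ⟨fun _ h => h.1 rfl⟩

@[simp]
lemma colorGraph_adj {c : Sym2 V → κ} {i : κ} {x y : V} :
    (colorGraph c i).Adj x y ↔ x ≠ y ∧ c s(x, y) = i :=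
  Iff.rfl

variable [DecidableEq V] [DecidableEq κ] {c : Sym2 V → κ}

instance (c : Sym2 V → κ) (i : κ) : DecidableRel (colorGraph c i).Adj :=
  fun x y => inferInstanceAs (Decidable (x ≠ y ∧ c s(x, y) = i))

lemma sum_degree_colorGraph [Fintype V] [Fintype κ] (c : Sym2 V → κ) (v : V) :
    ∑ i, (colorGraph c i).degree v = Fintype.card V - 1 := by
  rw [← card_univ, ← card_erase_of_mem (mem_univ v),
    card_eq_sum_card_fiberwise (f := fun w => c s(v, w)) (t := univ) fun _ _ => mem_univ _]
  refine sum_congr rfl fun i _ => ?_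
  rw [← card_neighborFinset_eq_degree]
  congr 1
  ext w
  simp [ne_comm]

theorem card_le_triangleRamseyBound (L : Finset κ) (S : Finset V)
    (hS : ∀ x ∈ S, ∀ y ∈ S, x ≠ y → c s(x, y) ∈ L)
    (hfree : ∀ i ∈ L, (colorGraph c i).CliqueFreeOn S 3) :
    #S ≤ triangleRamseyBound #L := by
  induction h : #L generalizing L S with
  | zero =>
    rw [card_eq_zero.1 h] at hS
    exact card_le_one.2 fun x hx y hy => by_contra fun hxy => by simpa using hS x hx y hy hxy
  | succ m ih =>
    by_contra! hbig
    -- some colour `d` joins a vertex `u` to more than `triangleRamseyBound m` vertices, and these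
    -- span no edge of colour `d`
    obtain ⟨u, hu⟩ : S.Nonempty := card_pos.1 (by omega)
    obtain ⟨d, hd, hfiber⟩ := exists_lt_card_fiber_of_mul_lt_card_of_maps_to
      (s := S.erase u) (t := L) (n := triangleRamseyBound m) (f := fun y => c s(u, y))
      (fun y hy => hS u hu y (mem_of_mem_erase hy) (ne_of_mem_erase hy).symm)
      (by rw [card_erase_of_mem hu, h]; rw [triangleRamseyBound] at hbig; omega)
    set A := {y ∈ S.erase u | c s(u, y) = d}
    have hAS : A ⊆ S := (filter_subset _ _).trans (erase_subset _ _)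
    have hA : ∀ y ∈ A, (colorGraph c d).Adj u y := fun y hy => by
      obtain ⟨hy, hyd⟩ := mem_filter.1 hy
      exact ⟨(ne_of_mem_erase hy).symm, hyd⟩
    refine (ih (L.erase d) A
      (fun x hx y hy hxy => mem_erase.2 ⟨fun hxyd => ?_, hS x (hAS hx) y (hAS hy) hxy⟩)
      (fun i hi t ht => hfree i (mem_of_mem_erase hi) (ht.trans (coe_subset.2 hAS)))
      (by rw [card_erase_of_mem hd, h]; rfl)).not_gt hfiber
    refine hfree d hd (t := {u, x, y}) ?_ (is3Clique_triple_iff.2 ⟨hA x hx, hA y hy, hxy, hxyd⟩)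
    simp only [coe_insert, coe_singleton, Set.insert_subset_iff, mem_coe, Set.singleton_subset_iff]
    exact ⟨hu, hAS hx, hAS hy⟩

theorem card_lt_iterate_peelStep [Fintype V] [LinearOrder V] (L : Finset κ) (S : Finset V)
    (hS : ∀ x ∈ S, ∀ y ∈ S, x ≠ y → c s(x, y) ∈ L)
    (hkey : ∀ i t, (colorGraph c i).IsNClique 3 t → ∃ q ∈ t, (colorGraph c i).degree q ≤ 2)
    {A : ℕ} (hA : ∀ i ∈ L, ∀ K ⊆ S, (colorGraph c i).IsIndepSet K →
      (∀ q ∈ K, (colorGraph c i).degree q ≤ 2) → #K < A)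
    (P : Finset κ) (T : Finset V) (hT : T ⊆ S) (hP : ∀ p ∈ P, (colorGraph c p).CliqueFreeOn T 3) :
    #T < (peelStep A)^[#(L \ P)] (triangleRamseyBound #L + 1) := by
  induction h : #(L \ P) generalizing P T with
  | zero =>
    have hLP : L ⊆ P := sdiff_eq_empty_iff_subset.1 (card_eq_zero.1 h)
    have := card_le_triangleRamseyBound L T (fun x hx y hy => hS x (hT hx) y (hT hy))
      (fun i hi => hP i (hLP hi))
    rw [Function.iterate_zero_apply]
    omega
  | succ j ih =>
    obtain ⟨i, hi⟩ : (L \ P).Nonempty := card_pos.1 (by omega)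
    obtain ⟨T', hT'T, hfree, hcard⟩ := exists_cliqueFreeOn_subset T (fun t _ => hkey i t)
      (fun K hK => hA i (mem_sdiff.1 hi).1 K (hK.trans hT))
    have := ih (insert i P) T' (hT'T.trans hT)
      (fun p hp => (mem_insert.1 hp).elim (fun hpi => hpi ▸ hfree)
        fun hpP t ht => hP p hpP (ht.trans (coe_subset.2 hT'T)))
      (by rw [sdiff_insert, card_erase_of_mem hi, h]; rfl)
    rw [Function.iterate_succ_apply', peelStep]
    omega

end ColorGraph

section K4StarFree

variable {n k : ℕ} {c : Sym2 (Fin n) → Fin k} {i : Fin k} {x y z w p x' y' z' : Fin n}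

def MonoK4Star (c : Sym2 (Fin n) → Fin k) (i : Fin k) : Prop :=
  MonoCopy K4 c i ∨ MonoCopy K4ePendant c i ∨ MonoCopy triPendants c i

lemma monoCopy_fromEdgeSet {W : Type} {s : Set (Sym2 W)} (f : W → Fin n) (hf : f.Injective)
    (hs : ∀ e ∈ s, c (e.map f) = i) : MonoCopy (fromEdgeSet s) c i :=
  ⟨f, hf, fun _ _ h => hs _ ((fromEdgeSet_adj s).1 h).1⟩

lemma monoCopy_K4 (hxy : (colorGraph c i).Adj x y) (hxz : (colorGraph c i).Adj x z)
    (hxw : (colorGraph c i).Adj x w) (hyz : (colorGraph c i).Adj y z)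
    (hyw : (colorGraph c i).Adj y w) (hzw : (colorGraph c i).Adj z w) : MonoCopy K4 c i := by
  refine ⟨![x, y, z, w], ?_, fun a b hab => ?_⟩
  · intro a b hab
    fin_cases a <;> fin_cases b <;> simp_all [eq_comm]
  · fin_cases a <;> fin_cases b <;> simp_all [K4, Sym2.eq_swap]

lemma monoCopy_K4ePendant (hxy : (colorGraph c i).Adj x y) (hxz : (colorGraph c i).Adj x z)
    (hyz : (colorGraph c i).Adj y z) (hxw : (colorGraph c i).Adj x w)
    (hyw : (colorGraph c i).Adj y w) (hzp : (colorGraph c i).Adj z p)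
    (hwz : w ≠ z) (hpx : p ≠ x) (hpy : p ≠ y) (hwp : w ≠ p) : MonoCopy K4ePendant c i := by
  refine monoCopy_fromEdgeSet ![x, y, z, w, p] ?_ ?_
  · intro a b hab
    fin_cases a <;> fin_cases b <;> simp_all [eq_comm]
  · simp only [Set.mem_insert_iff, Set.mem_singleton_iff, forall_eq_or_imp, forall_eq]
    exact ⟨hxy.2, hxz.2, hxw.2, hyz.2, hyw.2, hzp.2⟩

lemma monoCopy_triPendants (hxy : (colorGraph c i).Adj x y) (hxz : (colorGraph c i).Adj x z)
    (hyz : (colorGraph c i).Adj y z) (hx : (colorGraph c i).Adj x x')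
    (hy : (colorGraph c i).Adj y y') (hz : (colorGraph c i).Adj z z')
    (hx' : x' ≠ y ∧ x' ≠ z) (hy' : y' ≠ x ∧ y' ≠ z) (hz' : z' ≠ x ∧ z' ≠ y)
    (hxy' : x' ≠ y') (hxz' : x' ≠ z') (hyz' : y' ≠ z') : MonoCopy triPendants c i := by
  refine monoCopy_fromEdgeSet ![x, y, z, x', y', z'] ?_ ?_
  · intro a b hab
    fin_cases a <;> fin_cases b <;> simp_all [eq_comm]
  · simp only [Set.mem_insert_iff, Set.mem_singleton_iff, forall_eq_or_imp, forall_eq]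
    exact ⟨hxy.2, hyz.2, hxz.2, hx.2, hy.2, hz.2⟩

lemma monoK4Star_of_pendants (hxy : (colorGraph c i).Adj x y) (hxz : (colorGraph c i).Adj x z)
    (hyz : (colorGraph c i).Adj y z) (hx : (colorGraph c i).Adj x x')
    (hy : (colorGraph c i).Adj y y') (hz : (colorGraph c i).Adj z z')
    (hx' : x' ∉ ({x, y, z} : Finset (Fin n))) (hy' : y' ∉ ({x, y, z} : Finset (Fin n)))
    (hz' : z' ∉ ({x, y, z} : Finset (Fin n))) : MonoK4Star c i := by
  simp only [mem_insert, mem_singleton, not_or] at hx' hy' hz'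
  by_cases hxy' : x' = y'
  · subst hxy'
    by_cases hxz' : x' = z'
    · subst hxz'
      exact .inl (monoCopy_K4 hxy hxz hx hyz hy hz)
    · exact .inr (.inl (monoCopy_K4ePendant hxy hxz hyz hx hy hz hx'.2.2 hz'.1 hz'.2.1 hxz'))
  by_cases hxz' : x' = z'
  · subst hxz'
    exact .inr (.inl (monoCopy_K4ePendant hxz hxy hyz.symm hx hz hy hx'.2.1 hy'.1 hy'.2.2 hxy'))
  by_cases hyz' : y' = z'
  · subst hyz'
    exact .inr (.inl
      (monoCopy_K4ePendant hyz hxy.symm hxz.symm hy hz hx hy'.1 hx'.2.1 hx'.2.2 (Ne.symm hxy')))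
  exact .inr (.inr (monoCopy_triPendants hxy hxz hyz hx hy hz ⟨hx'.2.1, hx'.2.2⟩
    ⟨hy'.1, hy'.2.2⟩ ⟨hz'.1, hz'.2.1⟩ hxy' hxz' hyz'))

lemma exists_adj_notMem {V : Type*} [Fintype V] [DecidableEq V] {G : SimpleGraph V}
    [DecidableRel G.Adj] {t : Finset V} {q : V} (ht : G.IsNClique 3 t) (hq : q ∈ t)
    (hdeg : 2 < G.degree q) : ∃ w, G.Adj q w ∧ w ∉ t := by
  by_contra! h
  have hsub : G.neighborFinset q ⊆ t.erase q := fun w hw =>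
    mem_erase.2 ⟨G.ne_of_adj ((mem_neighborFinset ..).1 hw) |>.symm,
      h w ((mem_neighborFinset ..).1 hw)⟩
  have := card_le_card hsub
  rw [card_neighborFinset_eq_degree, card_erase_of_mem hq, ht.card_eq] at this
  omega

theorem exists_degree_le_two (hc : ¬MonoK4Star c i) {t : Finset (Fin n)}
    (ht : (colorGraph c i).IsNClique 3 t) : ∃ q ∈ t, (colorGraph c i).degree q ≤ 2 := by
  by_contra! h
  obtain ⟨x, y, z, hxy, hxz, hyz, rfl⟩ := is3Clique_iff.1 ht
  obtain ⟨x', hx, hx'⟩ := exists_adj_notMem ht (by simp) (h x (by simp))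
  obtain ⟨y', hy, hy'⟩ := exists_adj_notMem ht (by simp) (h y (by simp))
  obtain ⟨z', hz, hz'⟩ := exists_adj_notMem ht (by simp) (h z (by simp))
  exact hc (monoK4Star_of_pendants hxy hxz hyz hx hy hz hx' hy' hz')

lemma exists_two_lt_degree (hn : 2 * k + 2 ≤ n) (c : Sym2 (Fin n) → Fin k) (v : Fin n) :
    ∃ i, 2 < (colorGraph c i).degree v := by
  by_contra! h
  have := sum_degree_colorGraph c v
  have := sum_le_sum fun i (_ : i ∈ univ) => h i
  simp only [Fintype.card_fin, sum_const, card_univ, smul_eq_mul] at *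
  omega

lemma card_lt_three_of_monochromatic (hc : ∀ i, ¬MonoK4Star c i) (hn : 2 * k + 2 ≤ n) {ℓ : Fin k}
    (S : Finset (Fin n)) (hS : ∀ x ∈ S, ∀ y ∈ S, x ≠ y → c s(x, y) = ℓ)
    (hdeg : ∀ x ∈ S, ∀ i ≠ ℓ, (colorGraph c i).degree x ≤ 2) : #S < 3 := by
  by_contra! hS3
  obtain ⟨x, hx, y, hy, z, hz, hxy, hxz, hyz⟩ := two_lt_card.1 hS3
  obtain ⟨q, hq, hdeg_q⟩ := exists_degree_le_two (hc ℓ) (is3Clique_triple_iff.2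
    ⟨⟨hxy, hS x hx y hy hxy⟩, ⟨hxz, hS x hx z hz hxz⟩, ⟨hyz, hS y hy z hz hyz⟩⟩)
  have hqS : q ∈ S := by
    simp only [mem_insert, mem_singleton] at hq
    rcases hq with rfl | rfl | rfl <;> assumption
  obtain ⟨i, hi⟩ := exists_two_lt_degree hn c q
  by_cases hiℓ : i = ℓ
  · subst hiℓ; omega
  · exact (hdeg q hqS i hiℓ).not_gt hi

theorem card_lt_k4StarBound (hc : ∀ i, ¬MonoK4Star c i) (hn : 2 * k + 2 ≤ n)
    (L : Finset (Fin k)) (S : Finset (Fin n)) (hS : ∀ x ∈ S, ∀ y ∈ S, x ≠ y → c s(x, y) ∈ L)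
    (hdeg : ∀ x ∈ S, ∀ i ∉ L, (colorGraph c i).degree x ≤ 2) : #S < k4StarBound #L := by
  induction h : #L using Nat.strong_induction_on generalizing L S with
  | _ m ih =>
  match m with
  | 0 =>
    have := card_le_triangleRamseyBound L S hS (by simp [card_eq_zero.1 h])
    rw [h] at this
    exact Nat.lt_succ_of_le this
  | 1 =>
    obtain ⟨ℓ, rfl⟩ := card_eq_one.1 h
    exact card_lt_three_of_monochromatic hc hn S
      (fun x hx y hy hxy => mem_singleton.1 (hS x hx y hy hxy))
      fun x hx i hi => hdeg x hx i (by simpa using hi)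
  | m + 2 =>
    have hA : ∀ i ∈ L, ∀ K ⊆ S, (colorGraph c i).IsIndepSet K →
        (∀ q ∈ K, (colorGraph c i).degree q ≤ 2) → #K < k4StarBound (m + 1) := by
      intro i hi K hKS hK hKdeg
      refine ih (m + 1) (by omega) (L.erase i) K (fun x hx y hy hxy => ?_) (fun x hx d hd => ?_)
        (by rw [card_erase_of_mem hi, h]; rfl)
      · exact mem_erase.2 ⟨fun hxyi => hK hx hy hxy ⟨hxy, hxyi⟩, hS x (hKS hx) y (hKS hy) hxy⟩
      · by_cases hdi : d = i
        · exact hdi ▸ hKdeg x hx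
        · exact hdeg x (hKS hx) d fun hdL => hd (mem_erase.2 ⟨hdi, hdL⟩)
    have := card_lt_iterate_peelStep L S hS (fun i _ => exists_degree_le_two (hc i)) hA ∅ S
      subset_rfl (by simp)
    rwa [sdiff_empty, h] at this

theorem K4starRamseyProp_k4StarBound {k : ℕ} (hk : 2 ≤ k) :
    K4starRamseyProp k (k4StarBound k) := by
  intro c
  by_contra hc
  have := card_lt_k4StarBound (not_exists.1 hc) (two_mul_add_two_le_k4StarBound hk) univ univ
    (by simp) (by simp)
  simp at this

theorem K4starRamseyProp_one_four : K4starRamseyProp 1 4 :=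
  fun _ => ⟨0, .inl ⟨id, Function.injective_id, fun _ _ _ => Subsingleton.elim _ _⟩⟩

end K4StarFree

end K4Star

/-- For every `0 < ε < 1/4` and `k ≥ 1`, `R(K₄*, k) ≤ (1+ε)^k · k! / ε`. -/
theorem K4starRamsey_upper (ε : ℝ) (hε : 0 < ε) (hε1 : ε < 1 / 4) (k : ℕ) (hk : 1 ≤ k) :
    (K4starRamsey k : ℝ) ≤ (1 + ε) ^ k * (Nat.factorial k) / ε := by
  rw [le_div_iff₀ hε]
  obtain rfl | hk := hk.eq_or_lt
  · have : (K4starRamsey 1 : ℝ) ≤ 4 := by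
      exact_mod_cast Nat.sInf_le K4Star.K4starRamseyProp_one_four
    norm_num
    nlinarith
  · calc (K4starRamsey k : ℝ) * ε ≤ K4Star.k4StarBound k * ε := by
          gcongr
          exact_mod_cast Nat.sInf_le (K4Star.K4starRamseyProp_k4StarBound hk)
      _ ≤ (1 + ε) ^ k * k.factorial := K4Star.k4StarBound_mul_le hε.le hε1 hk
end

section
/- For every integer k ≥ 2, R_3(B(K_4), k) ≤ R(K_4^*, k) + 1. -/
open SimpleGraph

/-!
Colour each pair of `Fin N` by the colour of the triple it spans with the extra vertex `N`. With
`N = R(K₄*, k)` this colouring has a monochromatic member of `K₄*`, that is, a triangle `u₀u₁u₂` with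
a leg `uᵢpᵢ` at each corner, `pᵢ` off the triangle. Coning over `N` gives a monochromatic Berge-`K₄`
with core `u₀, u₁, u₂, N`: the triangle edge `uᵢuⱼ` is carried by `{N, uᵢ, uⱼ}` and the edge `uᵢN`
by `{N, uᵢ, pᵢ}`; these six triples are distinct because the six pairs are.
-/

open Finset

theorem exists_monochromatic_clique {κ : Type*} [Fintype κ] (m : κ → ℕ) :
    ∃ n, ∀ {α : Type*} [DecidableEq α] (c : Sym2 α → κ) (S : Finset α), n ≤ #S →
      ∃ i, ∃ t ⊆ S, #t = m i ∧ (t : Set α).Pairwise fun x y => c s(x, y) = i := by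
  classical
  induction hM : ∑ i, m i using Nat.strong_induction_on generalizing m with
  | _ M ih =>
  by_cases hm : ∃ i, m i = 0
  · obtain ⟨i, hi⟩ := hm
    exact ⟨0, fun c S _ => ⟨i, ∅, empty_subset S, by simp [hi], by simp⟩⟩
  push Not at hm
  have hsmaller (j : κ) : ∑ i, Function.update m j (m j - 1) i < M := by
    subst hM
    refine sum_lt_sum (fun i _ => update_le_self_iff.2 (Nat.sub_le _ _) i) ⟨j, mem_univ j, ?_⟩
    rw [Function.update_self]
    exact Nat.sub_lt (Nat.pos_of_ne_zero (hm j)) one_pos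
  choose N hN using fun j => ih _ (hsmaller j) _ rfl
  refine ⟨Fintype.card κ * ∑ j, N j + 1, fun {α} _ c S hS => ?_⟩
  obtain ⟨v, hv⟩ : S.Nonempty := card_pos.1 (by omega)
  have : Nonempty κ := ⟨c s(v, v)⟩
  obtain ⟨j, -, hj⟩ := exists_le_card_fiber_of_mul_le_card_of_maps_to
    (s := S.erase v) (n := ∑ j, N j) (f := fun w => c s(w, v)) (fun _ _ => mem_univ _) univ_nonempty
    (by rw [card_univ, card_erase_of_mem hv]; omega)
  obtain ⟨i, t, htS, hti, ht⟩ := hN j c _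
    ((single_le_sum (fun _ _ => Nat.zero_le _) (mem_univ j)).trans hj)
  have htS' : t ⊆ S.erase v := htS.trans (filter_subset _ _)
  by_cases hij : i = j
  · subst hij
    have hvt : v ∉ t := fun h => by simpa using htS' h
    refine ⟨i, insert v t, insert_subset hv (htS'.trans (erase_subset v S)), ?_, ?_⟩
    · rw [card_insert_of_notMem hvt, hti, Function.update_self]
      have := hm i; omega
    · rw [coe_insert, Set.pairwise_insert]
      refine ⟨ht, fun w hw _ => ?_⟩
      have hwv : c s(w, v) = i := (mem_filter.1 (htS hw)).2
      exact ⟨by rw [Sym2.eq_swap]; exact hwv, hwv⟩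
  · exact ⟨i, t, htS'.trans (erase_subset v S), by rw [hti, Function.update_of_ne hij], ht⟩

-- `K4starRamsey k` is an `sInf`, which would be `0` if no `n` had the Ramsey property.
theorem exists_K4starRamseyProp (k : ℕ) : ∃ n, K4starRamseyProp k n := by
  obtain ⟨n, hn⟩ := exists_monochromatic_clique (fun _ : Fin k => 4)
  refine ⟨n, fun c => ?_⟩
  obtain ⟨i, t, -, ht, hc⟩ := hn c univ (by simp)
  refine ⟨i, Or.inl ⟨fun x => t.equivFin.symm (Fin.cast ht.symm x), ?_, fun x y hxy => ?_⟩⟩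
  · exact Subtype.val_injective.comp (t.equivFin.symm.injective.comp (Fin.cast_injective _))
  · exact hc (coe_mem _) (coe_mem _) fun h => hxy.ne (by simpa using Subtype.ext h)

section LeggedTriangle

variable {V W : Type*}

/-- A triangle `u` with a leg from each corner `u i` to a vertex `p i` off the triangle; the members
of `K₄*` are the minimal graphs containing one. -/
def HasLeggedTriangle (G : SimpleGraph V) : Prop :=
  ∃ u p : Fin 3 → V,
    (∀ i j, i ≠ j → G.Adj (u i) (u j)) ∧ (∀ i, G.Adj (u i) (p i)) ∧ ∀ i j, p i ≠ u j

theorem HasLeggedTriangle.map {G : SimpleGraph V} {H : SimpleGraph W} {f : V → W}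
    (hf : Function.Injective f) (hGH : ∀ x y, G.Adj x y → H.Adj (f x) (f y))
    (h : HasLeggedTriangle G) : HasLeggedTriangle H := by
  obtain ⟨u, p, hu, hp, hpu⟩ := h
  exact ⟨f ∘ u, f ∘ p, fun i j hij => hGH _ _ (hu i j hij), fun i => hGH _ _ (hp i),
    fun i j => hf.ne (hpu i j)⟩

theorem hasLeggedTriangle_K4 : HasLeggedTriangle K4 :=
  ⟨![0, 1, 2], ![3, 3, 3], by simp [K4]; decide, by simp [K4]; decide, by decide⟩

theorem hasLeggedTriangle_K4ePendant : HasLeggedTriangle K4ePendant :=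
  ⟨![0, 1, 2], ![3, 3, 4], by simp [K4ePendant]; decide, by simp [K4ePendant]; decide, by decide⟩

theorem hasLeggedTriangle_triPendants : HasLeggedTriangle triPendants :=
  ⟨![0, 1, 2], ![3, 4, 5], by simp [triPendants]; decide, by simp [triPendants]; decide, by decide⟩

end LeggedTriangle

def linkGraph {α : Type} [DecidableEq α] (A : Set (Finset α)) (a : α) : SimpleGraph α where
  Adj x y := x ≠ y ∧ x ≠ a ∧ y ≠ a ∧ {a, x, y} ∈ A
  symm := ⟨fun _ _ ⟨hxy, hx, hy, hA⟩ => ⟨hxy.symm, hy, hx, by rwa [Finset.pair_comm]⟩⟩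
  loopless := ⟨fun _ h => h.1 rfl⟩

section Link

variable {α V : Type} [DecidableEq α] {A : Set (Finset α)} {a : α}

theorem notMem_of_mem_edgeSet_linkGraph {e : Sym2 α} (he : e ∈ (linkGraph A a).edgeSet) :
    a ∉ e := by
  induction e using Sym2.ind with
  | _ x y => exact fun h => (Sym2.mem_iff.1 h).elim he.2.1.symm he.2.2.1.symm

theorem insert_toFinset_mem_of_mem_edgeSet_linkGraph {e : Sym2 α}
    (he : e ∈ (linkGraph A a).edgeSet) : insert a e.toFinset ∈ A := by
  induction e using Sym2.ind with
  | _ x y => rw [Sym2.toFinset_mk_eq]; exact he.2.2.2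

/-- The hyperedge of an edge `e` of `F` is the cone `insert a (τ e)` over a link edge; the common
left inverse `ρ` makes `φ` and `τ` injective. -/
theorem bergeIn_of_linkGraph {F : SimpleGraph V} (φ : V → α) (τ : Sym2 V → Sym2 α) (ρ : α → V)
    (hφ : Function.LeftInverse ρ φ)
    (hτ : ∀ e ∈ F.edgeSet, (τ e).map ρ = e ∧ τ e ∈ (linkGraph A a).edgeSet ∧
      ∀ x ∈ e, φ x = a ∨ φ x ∈ τ e) :
    BergeIn F A := by
  refine ⟨φ, hφ.injective, fun e => insert a (τ e).toFinset, ?_, fun e =>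
    insert_toFinset_mem_of_mem_edgeSet_linkGraph (hτ e e.2).2.1, fun e x hx => ?_⟩
  · rintro ⟨e, he⟩ ⟨e', he'⟩ h
    have hpair : τ e = τ e' := Sym2.ext fun x => by
      have := congrArg (x ∈ ·) h
      simp only [mem_insert, Sym2.mem_toFinset, eq_iff_iff] at this
      constructor <;> intro hx
      · rcases this.1 (Or.inr hx) with rfl | h'
        exacts [absurd hx (notMem_of_mem_edgeSet_linkGraph (hτ e he).2.1), h']
      · rcases this.2 (Or.inr hx) with rfl | h'
        exacts [absurd hx (notMem_of_mem_edgeSet_linkGraph (hτ e' he').2.1), h']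
    exact Subtype.ext ((hτ e he).1.symm.trans (hpair ▸ (hτ e' he').1))
  · rcases (hτ e e.2).2.2 x hx with h | h
    · rw [h]; exact mem_insert_self a _
    · exact mem_insert_of_mem (Sym2.mem_toFinset.2 h)

theorem HasLeggedTriangle.bergeIn_K4 (h : HasLeggedTriangle (linkGraph A a)) : BergeIn K4 A := by
  obtain ⟨u, p, hu, hp, hpu⟩ := h
  have hinj : Function.Injective u := fun i j hij => by_contra fun h => (hu i j h).ne hij
  have hau (i : Fin 3) : a ≠ u i := (hp i).2.1.symm
  have hleg (i : Fin 3) : (linkGraph A a).Adj (p i) (u i) := (hp i).symm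
  -- an edge `{i, 3}` of `K₄` becomes the leg `{a, u i, p i}`
  let φ : Fin 4 → α := ![u 0, u 1, u 2, a]
  let σ : Fin 4 → Fin 4 → α := fun x y => if x = 3 then ![p 0, p 1, p 2, a] y else φ x
  let ρ : α → Fin 4 := fun v =>
    if v = u 0 then 0 else if v = u 1 then 1 else if v = u 2 then 2 else 3
  refine bergeIn_of_linkGraph (a := a) φ
    (Sym2.lift ⟨fun x y => s(σ x y, σ y x), fun _ _ => Sym2.eq_swap⟩) ρ ?_ ?_
  · intro x
    fin_cases x <;> simp [φ, ρ, hinj.eq_iff, hau]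
  · intro e he
    induction e using Sym2.ind with
    | _ x y =>
    fin_cases x <;> fin_cases y <;> simp_all [φ, σ, ρ, K4, hinj.eq_iff]

end Link

def linkColoring {N k : ℕ} (c : Finset (Fin (N + 1)) → Fin k) (z : Sym2 (Fin N)) : Fin k :=
  c (insert (Fin.last N) (z.map Fin.castSucc).toFinset)

theorem MonoCopy.hasLeggedTriangle_linkGraph {W : Type} {F : SimpleGraph W} {N k : ℕ}
    {c : Finset (Fin (N + 1)) → Fin k} {i : Fin k} (h : MonoCopy F (linkColoring c) i)
    (hF : HasLeggedTriangle F) :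
    HasLeggedTriangle (linkGraph {s | #s = 3 ∧ c s = i} (Fin.last N)) := by
  obtain ⟨f, hf, hfc⟩ := h
  refine hF.map (f := Fin.castSucc ∘ f) ((Fin.castSucc_injective N).comp hf) fun x y hxy => ?_
  have hne : (f x).castSucc ≠ (f y).castSucc := (Fin.castSucc_injective N).ne (hf.ne hxy.ne)
  refine ⟨hne, (Fin.castSucc_lt_last _).ne, (Fin.castSucc_lt_last _).ne, ?_, ?_⟩
  · rw [card_insert_of_notMem (by simp [(Fin.castSucc_lt_last _).ne'])]
    exact congrArg (· + 1) (card_pair hne)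
  · simpa [linkColoring, Sym2.toFinset_mk_eq] using hfc x y hxy

theorem bergeRamsey_K4_le_K4star_general (k : ℕ) :
    bergeRamsey K4 3 k ≤ K4starRamsey k + 1 := by
  refine Nat.sInf_le fun c => ?_
  obtain ⟨i, hF⟩ := Nat.sInf_mem (exists_K4starRamseyProp k) (linkColoring c)
  refine ⟨i, HasLeggedTriangle.bergeIn_K4 (a := Fin.last _) ?_⟩
  rcases hF with hF | hF | hF
  exacts [hF.hasLeggedTriangle_linkGraph hasLeggedTriangle_K4,
    hF.hasLeggedTriangle_linkGraph hasLeggedTriangle_K4ePendant,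
    hF.hasLeggedTriangle_linkGraph hasLeggedTriangle_triPendants]

/-- For every `k ≥ 2`, `R₃(𝓑(K₄), k) ≤ R(K₄*, k) + 1`. -/
theorem bergeRamsey_K4_le_K4star (k : ℕ) (hk : 2 ≤ k) :
    bergeRamsey K4 3 k ≤ K4starRamsey k + 1 :=
  bergeRamsey_K4_le_K4star_general k
end
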